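/- arXiv:1612.06912 — 7 statements merged into one kernel-verified Lean document; each statement's English description precedes it below -/
import Mathlib

section
/- Let F_n be a free group of rank n ≥ 1 and let π : F_n → G be a surjective group homomorphism onto an abelian group G. Then the images under π of any two normally generating n-vectors of F_n are AC-equivalent in G. -/
def ACStep {G : Type*} [Group G] {n : ℕ} (v w : Fin n → G) : Prop :=
  ∃ i : Fin n, (∀ j, j ≠ i → w j = v j) ∧
    ((∃ j, j ≠ i ∧ w i = v j * v i) ∨ w i = (v i)⁻¹ ∨ ∃ g : G, w i = g⁻¹ * v i * g)

def ACEquiv {G : Type*} [Group G] {n : ℕ} (v w : Fin n → G) : Prop :=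
  Relation.ReflTransGen ACStep v w

namespace ACAux

variable {G : Type*} [Group G] {n : ℕ}

theorem acstep_update_mul (v : Fin n → G) {i j : Fin n} (hij : j ≠ i) :
    ACStep v (Function.update v i (v j * v i)) :=
  ⟨i, fun k hk => Function.update_of_ne hk _ _,
    Or.inl ⟨j, hij, by simp⟩⟩

theorem acstep_update_inv (v : Fin n → G) (i : Fin n) :
    ACStep v (Function.update v i (v i)⁻¹) :=
  ⟨i, fun k hk => Function.update_of_ne hk _ _, Or.inr (Or.inl (by simp))⟩

theorem acequiv_of_step {v w : Fin n → G} (h : ACStep v w) : ACEquiv v w :=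
  Relation.ReflTransGen.single h

theorem acequiv_trans {u v w : Fin n → G} (h1 : ACEquiv u v) (h2 : ACEquiv v w) :
    ACEquiv u w := Relation.ReflTransGen.trans h1 h2

/-- In any group: multiply component i by the inverse of component j (three elementary steps,
using commutativity only at the end to state the result). -/
theorem acequiv_update_inv_mul {G : Type*} [CommGroup G] {n : ℕ} (v : Fin n → G)
    {i j : Fin n} (hij : j ≠ i) :
    ACEquiv v (Function.update v i ((v j)⁻¹ * v i)) := by
  have s1 : ACEquiv v (Function.update v i (v i)⁻¹) :=
    acequiv_of_step (acstep_update_inv v i)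
  set v1 := Function.update v i (v i)⁻¹ with hv1
  have s2 : ACEquiv v1 (Function.update v1 i (v1 j * v1 i)) :=
    acequiv_of_step (acstep_update_mul v1 hij)
  set v2 := Function.update v1 i (v1 j * v1 i) with hv2
  have s3 : ACEquiv v2 (Function.update v2 i (v2 i)⁻¹) :=
    acequiv_of_step (acstep_update_inv v2 i)
  have : Function.update v2 i (v2 i)⁻¹ = Function.update v i ((v j)⁻¹ * v i) := by
    funext k
    by_cases hk : k = i
    · subst hk
      simp [hv2, hv1, Function.update_of_ne hij, mul_comm, mul_inv_rev]
    · simp [Function.update_of_ne hk, hv2, hv1]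
  rw [this] at s3
  exact acequiv_trans (acequiv_trans s1 s2) s3

/-- Multiply component i by an arbitrary integer power of component j. -/
theorem acequiv_update_zpow_mul {G : Type*} [CommGroup G] {n : ℕ} (v : Fin n → G)
    {i j : Fin n} (hij : j ≠ i) (c : ℤ) :
    ACEquiv v (Function.update v i ((v j) ^ c * v i)) := by
  induction c using Int.induction_on with
  | zero => rw [zpow_zero, one_mul, Function.update_eq_self]; exact Relation.ReflTransGen.refl
  | succ k ih =>
    refine acequiv_trans ih ?_
    set u := Function.update v i ((v j) ^ (k : ℤ) * v i) with hu
    have s : ACEquiv u (Function.update u i (u j * u i)) :=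
      acequiv_of_step (acstep_update_mul u hij)
    have : Function.update u i (u j * u i) =
        Function.update v i ((v j) ^ ((k : ℤ) + 1) * v i) := by
      funext m
      by_cases hm : m = i
      · subst hm; simp [hu, Function.update_of_ne hij, zpow_add, mul_comm, mul_left_comm, mul_assoc]
      · simp [Function.update_of_ne hm, hu]
    rwa [this] at s
  | pred k ih =>
    refine acequiv_trans ih ?_
    set u := Function.update v i ((v j) ^ (-(k : ℤ)) * v i) with hu
    have s : ACEquiv u (Function.update u i ((u j)⁻¹ * u i)) :=
      acequiv_update_inv_mul u hij
    have : Function.update u i ((u j)⁻¹ * u i) =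
        Function.update v i ((v j) ^ (-(k : ℤ) - 1) * v i) := by
      funext m
      by_cases hm : m = i
      · subst hm; simp [hu, Function.update_of_ne hij, zpow_sub, zpow_add,
          mul_comm, mul_left_comm, mul_assoc, zpow_neg]
      · simp [Function.update_of_ne hm, hu]
    rwa [this] at s

theorem acequiv_symm {G : Type*} [CommGroup G] {n : ℕ} {v w : Fin n → G}
    (h : ACEquiv v w) : ACEquiv w v := by
  induction h with
  | refl => exact Relation.ReflTransGen.refl
  | tail _ hstep ih =>
    rename_i b c _
    refine Relation.ReflTransGen.trans ?_ ih
    obtain ⟨i, hoff, hcase⟩ := hstep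
    have hb : b = Function.update c i (b i) := by
      funext k; by_cases hk : k = i
      · subst hk; simp
      · simp [Function.update_of_ne hk, hoff k hk]
    rcases hcase with ⟨j, hij, hj⟩ | hinv | ⟨g, hg⟩
    · have hval : (c j)⁻¹ * c i = b i := by rw [hj, hoff j hij]; group
      have := acequiv_update_inv_mul c hij
      rwa [hb, ← hval]
    · have hval : (c i)⁻¹ = b i := by rw [hinv]; simp
      have := acequiv_of_step (acstep_update_inv c i)
      rwa [hb, ← hval]
    · have step : ACStep c (Function.update c i (g * c i * g⁻¹)) :=
        ⟨i, fun k hk => Function.update_of_ne hk _ _,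
          Or.inr (Or.inr ⟨g⁻¹, by simp [mul_assoc]⟩)⟩
      have hval : g * c i * g⁻¹ = b i := by rw [hg]; group
      rw [hb, ← hval]
      exact acequiv_of_step step

end ACAux

namespace ACAux

/-- Elementary integer row operations on a tuple of elements of an additive commutative
group: add an integer multiple of another component, or negate a component. -/
def RStep {M : Type*} [AddCommGroup M] {m : ℕ} (v w : Fin m → M) : Prop :=
  ∃ i : Fin m, (∀ j, j ≠ i → w j = v j) ∧
    ((∃ j, j ≠ i ∧ ∃ c : ℤ, w i = c • v j + v i) ∨ w i = -v i)

def REquiv {M : Type*} [AddCommGroup M] {m : ℕ} (v w : Fin m → M) : Prop :=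
  Relation.ReflTransGen RStep v w

variable {M : Type*} [AddCommGroup M] {m : ℕ}

theorem requiv_trans {u v w : Fin m → M} (h1 : REquiv u v) (h2 : REquiv v w) :
    REquiv u w := Relation.ReflTransGen.trans h1 h2

theorem requiv_of_step {v w : Fin m → M} (h : RStep v w) : REquiv v w :=
  Relation.ReflTransGen.single h

theorem rstep_add (v : Fin m → M) {i j : Fin m} (hij : j ≠ i) (c : ℤ) :
    RStep v (Function.update v i (c • v j + v i)) :=
  ⟨i, fun k hk => Function.update_of_ne hk _ _, Or.inl ⟨j, hij, c, by simp⟩⟩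

theorem rstep_neg (v : Fin m → M) (i : Fin m) :
    RStep v (Function.update v i (-v i)) :=
  ⟨i, fun k hk => Function.update_of_ne hk _ _, Or.inr (by simp)⟩

/-- Transfer a row-operation path along a "multiplicativization" map into a commutative
group. -/
theorem requiv_to_acequiv {G : Type*} [CommGroup G] {v w : Fin m → M}
    (F : M → G) (hF : ∀ x y : M, F (x + y) = F x * F y)
    (h : REquiv v w) : ACEquiv (fun i => F (v i)) (fun i => F (w i)) := by
  have hF' : ∀ (c : ℤ) (x : M), F (c • x) = F x ^ c := by
    intro c x
    let F' : M →+ Additive G := AddMonoidHom.mk' (fun x => Additive.ofMul (F x)) hF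
    exact map_zsmul F' c x
  have hFneg : ∀ x : M, F (-x) = (F x)⁻¹ := by
    intro x
    have := hF' (-1) x
    simpa using this
  induction h with
  | refl => exact Relation.ReflTransGen.refl
  | tail _ hstep ih =>
    rename_i b c _
    refine acequiv_trans ih ?_
    obtain ⟨i, hoff, hcase⟩ := hstep
    have hfun : (fun k => F (c k)) = Function.update (fun k => F (b k)) i (F (c i)) := by
      funext k
      by_cases hk : k = i
      · subst hk; simp
      · simp [Function.update_of_ne hk, hoff k hk]
    rcases hcase with ⟨j, hij, d, hd⟩ | hneg
    · have := acequiv_update_zpow_mul (fun k => F (b k)) hij d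
      rw [hfun, hd, hF, hF']
      exact this
    · have := acequiv_of_step (acstep_update_inv (fun k => F (b k)) i)
      rw [hfun, hneg, hFneg]
      exact this

/-- Row operations preserve the integer span of the components. -/
theorem rstep_span {v w : Fin m → M} (h : RStep v w) :
    Submodule.span ℤ (Set.range w) = Submodule.span ℤ (Set.range v) := by
  obtain ⟨i, hoff, hcase⟩ := h
  apply le_antisymm
  · rw [Submodule.span_le]
    rintro _ ⟨k, rfl⟩
    by_cases hk : k = i
    · subst hk
      rcases hcase with ⟨j, hij, c, hc⟩ | hneg
      · rw [hc]
        exact Submodule.add_mem _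
          (Submodule.smul_mem _ c (Submodule.subset_span ⟨j, rfl⟩))
          (Submodule.subset_span ⟨k, rfl⟩)
      · rw [hneg]
        exact Submodule.neg_mem _ (Submodule.subset_span ⟨k, rfl⟩)
    · rw [hoff k hk]
      exact Submodule.subset_span ⟨k, rfl⟩
  · rw [Submodule.span_le]
    rintro _ ⟨k, rfl⟩
    by_cases hk : k = i
    · subst hk
      rcases hcase with ⟨j, hij, c, hc⟩ | hneg
      · have : v k = w k - c • w j := by rw [hc, hoff j hij]; abel
        rw [this]
        exact Submodule.sub_mem _ (Submodule.subset_span ⟨k, rfl⟩)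
          (Submodule.smul_mem _ c (Submodule.subset_span ⟨j, rfl⟩))
      · have : v k = -w k := by rw [hneg]; abel
        rw [this]
        exact Submodule.neg_mem _ (Submodule.subset_span ⟨k, rfl⟩)
    · rw [← hoff k hk]
      exact Submodule.subset_span ⟨k, rfl⟩

theorem requiv_span {v w : Fin m → M} (h : REquiv v w) :
    Submodule.span ℤ (Set.range w) = Submodule.span ℤ (Set.range v) := by
  induction h with
  | refl => rfl
  | tail _ hstep ih => rw [rstep_span hstep, ih]

-- NEW PART C:

/-- Signed swap: replace `v i` by `v j` and `v j` by `-v i`. -/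
theorem requiv_swap_neg (v : Fin m → M) {i j : Fin m} (hij : i ≠ j) :
    REquiv v (Function.update (Function.update v i (v j)) j (-v i)) := by
  have hji : j ≠ i := hij.symm
  have s1 := requiv_of_step (rstep_add v hji 1)
  set v1 := Function.update v i ((1 : ℤ) • v j + v i) with hv1
  have s2 := requiv_of_step (rstep_add v1 hij (-1))
  set v2 := Function.update v1 j ((-1 : ℤ) • v1 i + v1 j) with hv2
  have s3 := requiv_of_step (rstep_add v2 hji 1)
  have hfinal : Function.update v2 i ((1 : ℤ) • v2 j + v2 i) =
      Function.update (Function.update v i (v j)) j (-v i) := by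
    funext k
    by_cases hk : k = i
    · subst hk
      simp [hv2, hv1, Function.update_of_ne hij, Function.update_of_ne hji]
      try abel
    · by_cases hk' : k = j
      · subst hk'
        simp [Function.update_of_ne hk, hv2, hv1, Function.update_of_ne hij]
        try abel
      · simp [Function.update_of_ne hk, Function.update_of_ne hk', hv2, hv1]
  rw [hfinal] at s3
  exact requiv_trans (requiv_trans s1 s2) s3

/-- Euclidean reduction: make the `φ`-values of the tuple equal to a delta function. -/
theorem euclid (φ : M →+ ℤ) (y : M) (hy : φ y = 1) :
    ∀ (N : ℕ) (v : Fin m → M), (∑ i, (φ (v i)).natAbs) ≤ N →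
      Submodule.span ℤ (Set.range v) = ⊤ →
      ∃ w : Fin m → M, ∃ k : Fin m,
        REquiv v w ∧ φ (w k) = 1 ∧ ∀ i, i ≠ k → φ (w i) = 0 := by
  intro N
  induction N with
  | zero =>
    intro v hN hspan
    exfalso
    have hc : ∃ c : Fin m → ℤ, ∑ i, c i * φ (v i) = 1 := by
      have hmem : y ∈ Submodule.span ℤ (Set.range v) := by rw [hspan]; trivial
      obtain ⟨c, hcv⟩ := (Submodule.mem_span_range_iff_exists_fun ℤ).mp hmem
      refine ⟨c, ?_⟩
      rw [← hy, ← hcv, map_sum]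
      simp [smul_eq_mul]
    obtain ⟨c, hc1⟩ := hc
    have hall : ∀ i, φ (v i) = 0 := by
      intro i
      have h0 : ∑ i, (φ (v i)).natAbs = 0 := Nat.le_zero.mp hN
      have := (Finset.sum_eq_zero_iff.mp h0) i (Finset.mem_univ i)
      omega
    rw [Finset.sum_eq_zero (fun i _ => by rw [hall i, mul_zero])] at hc1
    exact one_ne_zero hc1.symm
  | succ N ih =>
    intro v hN hspan
    have hc : ∃ c : Fin m → ℤ, ∑ i, c i * φ (v i) = 1 := by
      have hmem : y ∈ Submodule.span ℤ (Set.range v) := by rw [hspan]; trivial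
      obtain ⟨c, hcv⟩ := (Submodule.mem_span_range_iff_exists_fun ℤ).mp hmem
      refine ⟨c, ?_⟩
      rw [← hy, ← hcv, map_sum]
      simp [smul_eq_mul]
    obtain ⟨c, hc1⟩ := hc
    set T : Finset (Fin m) := Finset.univ.filter (fun i => φ (v i) ≠ 0) with hT
    have hTne : T.Nonempty := by
      rw [Finset.filter_nonempty_iff]
      by_contra h
      push_neg at h
      rw [Finset.sum_eq_zero (fun i _ => by rw [h i (Finset.mem_univ i), mul_zero])] at hc1
      exact one_ne_zero hc1.symm
    obtain ⟨k, hkT, hkmin⟩ := Finset.exists_min_image T (fun i => (φ (v i)).natAbs) hTne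
    have hdk : φ (v k) ≠ 0 := (Finset.mem_filter.mp hkT).2
    by_cases hex : ∃ j, j ≠ k ∧ φ (v j) ≠ 0
    · -- Euclidean step
      obtain ⟨j, hjk, hdj⟩ := hex
      have hjT : j ∈ T := Finset.mem_filter.mpr ⟨Finset.mem_univ j, hdj⟩
      set d := φ (v k) with hd
      set q := φ (v j) / d with hq
      have hkj : k ≠ j := hjk.symm
      have hstep := rstep_add v hkj (-q)
      set w1 := Function.update v j ((-q) • v k + v j) with hw1
      have hw1j : φ (w1 j) = φ (v j) % d := by
        have hde : d * q + φ (v j) % d = φ (v j) := Int.mul_ediv_add_emod (φ (v j)) d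
        simp only [hw1, Function.update_self, map_add, map_zsmul, smul_eq_mul]
        linarith [hde, mul_comm d q]
      have hlt : (φ (w1 j)).natAbs < (φ (v j)).natAbs := by
        have h1 : 0 ≤ φ (v j) % d := Int.emod_nonneg _ hdk
        have h2 : φ (v j) % d < |d| := by rw [Int.abs_eq_natAbs]; exact Int.emod_lt _ hdk
        have h3 : d.natAbs ≤ (φ (v j)).natAbs := hkmin j hjT
        rw [hw1j]
        rw [Int.abs_eq_natAbs] at h2
        omega
      have hsum : (∑ i, (φ (w1 i)).natAbs) ≤ N := by
        have e1 : (φ (w1 j)).natAbs + ∑ i ∈ Finset.univ.erase j, (φ (w1 i)).natAbs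
            = ∑ i, (φ (w1 i)).natAbs :=
          Finset.add_sum_erase Finset.univ (fun i => (φ (w1 i)).natAbs) (Finset.mem_univ j)
        have e2 : (φ (v j)).natAbs + ∑ i ∈ Finset.univ.erase j, (φ (v i)).natAbs
            = ∑ i, (φ (v i)).natAbs :=
          Finset.add_sum_erase Finset.univ (fun i => (φ (v i)).natAbs) (Finset.mem_univ j)
        have e3 : ∑ i ∈ Finset.univ.erase j, (φ (w1 i)).natAbs
            = ∑ i ∈ Finset.univ.erase j, (φ (v i)).natAbs := by
          refine Finset.sum_congr rfl (fun i hi => ?_)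
          rw [hw1, Function.update_of_ne (Finset.ne_of_mem_erase hi)]
        omega
      have hspan1 : Submodule.span ℤ (Set.range w1) = ⊤ := by
        rw [rstep_span hstep, hspan]
      obtain ⟨w, k', hre, h1, h0⟩ := ih w1 hsum hspan1
      exact ⟨w, k', requiv_trans (requiv_of_step hstep) hre, h1, h0⟩
    · -- terminal case
      push_neg at hex
      have hzero : ∀ i, i ≠ k → φ (v i) = 0 := hex
      have hck : c k * φ (v k) = 1 := by
        rw [← hc1]
        exact (Finset.sum_eq_single (f := fun i => c i * φ (v i)) k
          (fun b _ hb => by rw [hzero b hb, mul_zero])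
          (fun h => absurd (Finset.mem_univ k) h)).symm
      have hunit : IsUnit (φ (v k)) :=
        IsUnit.of_mul_eq_one (a := φ (v k)) (c k) (by rw [mul_comm]; exact hck)
      rcases Int.isUnit_iff.mp hunit with h1 | h1
      · exact ⟨v, k, Relation.ReflTransGen.refl, h1, hzero⟩
      · refine ⟨Function.update v k (-v k), k, requiv_of_step (rstep_neg v k), ?_, ?_⟩
        · simp [h1]
        · intro i hik
          rw [Function.update_of_ne hik]
          exact hzero i hik

namespace Red

/-- The lifting of a tuple in `ℤ^n` to `ℤ^(n+1)` with a fixed new first row and zero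
first column below it. -/
def lift {n : ℕ} (r0 : Fin (n+1) → ℤ) (u : Fin n → (Fin n → ℤ)) :
    Fin (n+1) → (Fin (n+1) → ℤ) :=
  Fin.cons r0 (fun i => Fin.cons 0 (u i))

theorem cons_zero_add {n : ℕ} (x y : Fin n → ℤ) :
    (Fin.cons 0 x + Fin.cons 0 y : Fin (n+1) → ℤ) = Fin.cons 0 (x + y) := by
  funext j
  refine Fin.cases ?_ (fun t => ?_) j <;> simp

theorem cons_zero_smul {n : ℕ} (c : ℤ) (x : Fin n → ℤ) :
    (c • (Fin.cons 0 x : Fin (n+1) → ℤ)) = Fin.cons 0 (c • x) := by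
  funext j
  refine Fin.cases ?_ (fun t => ?_) j <;> simp

theorem cons_zero_neg {n : ℕ} (x : Fin n → ℤ) :
    (-(Fin.cons 0 x : Fin (n+1) → ℤ)) = Fin.cons 0 (-x) := by
  funext j
  refine Fin.cases ?_ (fun t => ?_) j <;> simp

theorem rstep_lift {n : ℕ} (r0 : Fin (n+1) → ℤ) {u u' : Fin n → (Fin n → ℤ)}
    (h : RStep u u') : RStep (lift r0 u) (lift r0 u') := by
  obtain ⟨i, hoff, hcase⟩ := h
  refine ⟨i.succ, ?_, ?_⟩
  · intro j hj
    rcases Fin.eq_zero_or_eq_succ j with h | ⟨t, rfl⟩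
    · rw [h]; rfl
    · have ht : t ≠ i := fun h => hj (by rw [h])
      simp only [lift, Fin.cons_succ]
      rw [hoff t ht]
  · rcases hcase with ⟨j, hji, c, hc⟩ | hneg
    · refine Or.inl ⟨j.succ, fun h => hji (Fin.succ_injective n h), c, ?_⟩
      simp only [lift, Fin.cons_succ]
      rw [hc, ← cons_zero_add, ← cons_zero_smul]
    · refine Or.inr ?_
      simp only [lift, Fin.cons_succ]
      rw [hneg, ← cons_zero_neg]

theorem requiv_lift {n : ℕ} (r0 : Fin (n+1) → ℤ) {u u' : Fin n → (Fin n → ℤ)}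
    (h : REquiv u u') : REquiv (lift r0 u) (lift r0 u') := by
  induction h with
  | refl => exact Relation.ReflTransGen.refl
  | tail _ hstep ih => exact Relation.ReflTransGen.tail ih (rstep_lift r0 hstep)

theorem cons_zero_single {n : ℕ} (i : Fin n) :
    (Fin.cons 0 (Pi.single i (1:ℤ)) : Fin (n+1) → ℤ) = Pi.single i.succ 1 := by
  funext j
  refine Fin.cases ?_ (fun t => ?_) j
  · simp [Pi.single_apply, (Fin.succ_ne_zero i).symm]
  · simp [Pi.single_apply, Fin.succ_inj]

theorem update_cons_zero {n : ℕ} (r0 b : Fin (n+1) → ℤ)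
    (g : Fin n → (Fin (n+1) → ℤ)) :
    Function.update (Fin.cons r0 g : Fin (n+1) → (Fin (n+1) → ℤ)) 0 b = Fin.cons b g := by
  funext j
  refine Fin.cases ?_ (fun t => ?_) j
  · simp
  · rw [Function.update_of_ne (Fin.succ_ne_zero t)]
    simp

/-- Clearing out the tail of the first row, given that all other rows are standard basis
vectors. -/
theorem clear_row0 {n : ℕ} :
    ∀ (N : ℕ) (r0 : Fin (n+1) → ℤ), r0 0 = 1 → (∑ j : Fin n, (r0 j.succ).natAbs) ≤ N →
    REquiv (lift r0 (fun i => Pi.single i 1)) (fun i => Pi.single i 1) := by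
  have hstd : ∀ (r0 : Fin (n+1) → ℤ),
      lift r0 (fun i => Pi.single i 1) = Fin.cons r0 (fun i => Pi.single i.succ 1) := by
    intro r0
    funext i
    refine Fin.cases rfl (fun t => ?_) i
    simp only [lift, Fin.cons_succ, cons_zero_single]
  intro N
  induction N with
  | zero =>
    intro r0 h0 hN
    have hz : ∀ j : Fin n, r0 j.succ = 0 := by
      intro j
      have h0' : ∑ j : Fin n, (r0 j.succ).natAbs = 0 := Nat.le_zero.mp hN
      have := (Finset.sum_eq_zero_iff.mp h0') j (Finset.mem_univ j)
      omega
    have : r0 = Pi.single 0 1 := by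
      funext j
      refine Fin.cases ?_ (fun t => ?_) j
      · simp [h0]
      · simp [hz t, Pi.single_apply, Fin.succ_ne_zero t]
    rw [hstd, this]
    have : (Fin.cons (Pi.single 0 1) (fun i : Fin n => Pi.single i.succ (1:ℤ)) :
        Fin (n+1) → (Fin (n+1) → ℤ)) = fun i => Pi.single i 1 := by
      funext i
      refine Fin.cases rfl (fun t => ?_) i
      simp only [Fin.cons_succ]
    rw [this]
    exact Relation.ReflTransGen.refl
  | succ N ih =>
    intro r0 h0 hN
    by_cases hz : ∀ j : Fin n, r0 j.succ = 0
    · -- same as base case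
      have : r0 = Pi.single 0 1 := by
        funext j
        refine Fin.cases ?_ (fun t => ?_) j
        · simp [h0]
        · simp [hz t, Pi.single_apply, Fin.succ_ne_zero t]
      rw [hstd, this]
      have : (Fin.cons (Pi.single 0 1) (fun i : Fin n => Pi.single i.succ (1:ℤ)) :
          Fin (n+1) → (Fin (n+1) → ℤ)) = fun i => Pi.single i 1 := by
        funext i
        refine Fin.cases rfl (fun t => ?_) i
        simp only [Fin.cons_succ]
      rw [this]
      exact Relation.ReflTransGen.refl
    · push_neg at hz
      obtain ⟨j, hj⟩ := hz
      set V : Fin (n+1) → (Fin (n+1) → ℤ) := Fin.cons r0 (fun i => Pi.single i.succ 1)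
        with hV
      have hstep := rstep_add V (i := 0) (j := j.succ) (Fin.succ_ne_zero j) (-(r0 j.succ))
      set r0' : Fin (n+1) → ℤ := (-(r0 j.succ)) • Pi.single j.succ 1 + r0 with hr0'
      have hupd : Function.update V 0 ((-(r0 j.succ)) • V j.succ + V 0) =
          Fin.cons r0' (fun i => Pi.single i.succ 1) := by
        rw [hV]
        simp only [Fin.cons_succ, Fin.cons_zero]
        exact update_cons_zero _ _ _
      have hr0'0 : r0' 0 = 1 := by
        simp [hr0', Pi.single_apply, (Fin.succ_ne_zero j).symm, h0]
      have hr0'j : r0' j.succ = 0 := by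
        simp [hr0', Pi.single_apply]
      have hr0'other : ∀ t : Fin n, t ≠ j → r0' t.succ = r0 t.succ := by
        intro t ht
        have : t.succ ≠ j.succ := fun h => ht (Fin.succ_injective n h)
        simp [hr0', Pi.single_apply, this]
      have hsum : (∑ t : Fin n, (r0' t.succ).natAbs) ≤ N := by
        have e1 : (r0' j.succ).natAbs + ∑ t ∈ Finset.univ.erase j, (r0' t.succ).natAbs
            = ∑ t : Fin n, (r0' t.succ).natAbs :=
          Finset.add_sum_erase Finset.univ (fun t => (r0' t.succ).natAbs) (Finset.mem_univ j)
        have e2 : (r0 j.succ).natAbs + ∑ t ∈ Finset.univ.erase j, (r0 t.succ).natAbs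
            = ∑ t : Fin n, (r0 t.succ).natAbs :=
          Finset.add_sum_erase Finset.univ (fun t => (r0 t.succ).natAbs) (Finset.mem_univ j)
        have e3 : ∑ t ∈ Finset.univ.erase j, (r0' t.succ).natAbs
            = ∑ t ∈ Finset.univ.erase j, (r0 t.succ).natAbs := by
          refine Finset.sum_congr rfl (fun t ht => ?_)
          rw [hr0'other t (Finset.ne_of_mem_erase ht)]
        have hjpos : 0 < (r0 j.succ).natAbs := by omega
        rw [hr0'j] at e1
        simp only [Int.natAbs_zero, zero_add] at e1
        omega
      have hrec := ih r0' hr0'0 hsum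
      rw [hstd] at hrec ⊢
      rw [hupd] at hstep
      exact requiv_trans (requiv_of_step hstep) hrec

/-- Main reduction: a spanning `n`-tuple of `ℤ^n` reduces to the standard basis by
elementary row operations. -/
theorem reduce : ∀ (n : ℕ) (v : Fin n → (Fin n → ℤ)),
    Submodule.span ℤ (Set.range v) = ⊤ →
    REquiv v (fun i => Pi.single i 1) := by
  intro n
  induction n with
  | zero =>
    intro v _
    have : v = fun i => Pi.single i 1 := funext (fun i => i.elim0)
    rw [this]
    exact Relation.ReflTransGen.refl
  | succ n ih =>
    intro v hspan
    set φ : (Fin (n+1) → ℤ) →+ ℤ := Pi.evalAddMonoidHom (fun _ => ℤ) (0 : Fin (n+1))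
      with hφ
    have hy : φ (Pi.single 0 1) = 1 := by simp [hφ, Pi.evalAddMonoidHom]
    obtain ⟨w, k, hvw, hk1, hk0⟩ :=
      euclid φ (Pi.single 0 1) hy (∑ i, (φ (v i)).natAbs) v le_rfl hspan
    have hwspan : Submodule.span ℤ (Set.range w) = ⊤ := by rw [requiv_span hvw, hspan]
    -- move row k to position 0 (with sign) if necessary
    obtain ⟨w2, hvw2, h20, h2i⟩ :
        ∃ w2 : Fin (n+1) → (Fin (n+1) → ℤ), REquiv v w2 ∧ φ (w2 0) = 1 ∧
          ∀ i, i ≠ 0 → φ (w2 i) = 0 := by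
      by_cases hk : k = 0
      · exact ⟨w, hvw, by rw [← hk]; exact hk1, fun i hi => hk0 i (by rw [hk]; exact hi)⟩
      · have h0k : (0 : Fin (n+1)) ≠ k := fun h => hk h.symm
        refine ⟨Function.update (Function.update w 0 (w k)) k (-(w 0)),
          requiv_trans hvw (requiv_swap_neg w h0k), ?_, ?_⟩
        · rw [Function.update_of_ne h0k, Function.update_self]
          exact hk1
        · intro i hi
          by_cases hik : i = k
          · subst hik
            rw [Function.update_self, map_neg, hk0 0 h0k, neg_zero]
          · rw [Function.update_of_ne hik, Function.update_of_ne hi]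
            exact hk0 i hik
    have h2span : Submodule.span ℤ (Set.range w2) = ⊤ := by rw [requiv_span hvw2, hspan]
    -- peel off the first coordinate
    set u : Fin n → (Fin n → ℤ) := fun i j => w2 i.succ j.succ with hu
    have hw2eq : w2 = lift (w2 0) u := by
      funext i
      refine Fin.cases rfl (fun t => ?_) i
      simp only [lift, Fin.cons_succ]
      funext j
      refine Fin.cases ?_ (fun s => ?_) j
      · simp only [Fin.cons_zero]
        exact h2i t.succ (Fin.succ_ne_zero t)
      · rfl
    have huspan : Submodule.span ℤ (Set.range u) = ⊤ := by
      rw [Submodule.eq_top_iff']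
      intro x
      rw [Submodule.mem_span_range_iff_exists_fun]
      have hx : (Fin.cons 0 x : Fin (n+1) → ℤ) ∈ Submodule.span ℤ (Set.range w2) := by
        rw [h2span]; trivial
      obtain ⟨c, hc⟩ := (Submodule.mem_span_range_iff_exists_fun ℤ).mp hx
      have hc0 : c 0 = 0 := by
        have h := congrFun hc 0
        rw [Fin.sum_univ_succ] at h
        simp only [Pi.add_apply, Finset.sum_apply, Pi.smul_apply, smul_eq_mul,
          Fin.cons_zero] at h
        have hz : ∑ i : Fin n, c i.succ * w2 i.succ 0 = 0 := by
          refine Finset.sum_eq_zero (fun i _ => ?_)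
          have hzz : w2 i.succ 0 = 0 := h2i i.succ (Fin.succ_ne_zero i)
          rw [hzz, mul_zero]
        have h1 : w2 0 0 = 1 := h20
        rw [hz, h1, mul_one, add_zero] at h
        exact h
      refine ⟨fun i => c i.succ, ?_⟩
      funext s
      have hcs := congrFun hc s.succ
      simp only [Finset.sum_apply, Pi.smul_apply, smul_eq_mul, Fin.cons_succ] at hcs
      rw [Fin.sum_univ_succ] at hcs
      rw [hc0, zero_mul, zero_add] at hcs
      simpa [Finset.sum_apply, hu] using hcs
    have hulift := requiv_lift (w2 0) (ih u huspan)
    have hr00 : w2 0 0 = 1 := h20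
    have hclear := clear_row0 (∑ j : Fin n, ((w2 0) j.succ).natAbs) (w2 0) hr00 le_rfl
    have hfinal : REquiv (lift (w2 0) u) (fun i => Pi.single i 1) :=
      requiv_trans hulift hclear
    rw [← hw2eq] at hfinal
    exact requiv_trans hvw2 hfinal

end Red


def abmap (n : ℕ) : FreeGroup (Fin n) →* Multiplicative (Fin n → ℤ) :=
  FreeGroup.lift (fun i => Multiplicative.ofAdd (Pi.single i 1))

/-- A canonical preimage in the free group of a vector of `ℤ^n`. -/
def pre (x : Fin n → ℤ) : FreeGroup (Fin n) :=
  (((List.finRange n).map (fun j => FreeGroup.of j ^ x j)).prod)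

theorem abmap_pre (x : Fin n → ℤ) :
    Multiplicative.toAdd (abmap n (pre x)) = x := by
  rw [pre, map_list_prod, List.map_map]
  have hmap : ∀ j, Multiplicative.toAdd (abmap n (FreeGroup.of j ^ x j))
      = Pi.single j (x j) := by
    intro j
    rw [map_zpow, toAdd_zpow]
    simp only [abmap, FreeGroup.lift_apply_of, toAdd_ofAdd]
    funext t
    simp [Pi.single_apply]
  rw [toAdd_list_sum, List.map_map]
  have : (Multiplicative.toAdd ∘ ⇑(abmap n) ∘ fun j => FreeGroup.of j ^ x j)
      = fun j : Fin n => (Pi.single j (x j) : Fin n → ℤ) := by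
    funext j
    exact hmap j
  rw [this, ← Fin.sum_univ_def]
  exact Finset.univ_sum_single x

theorem span_of_normalClosure (v : Fin n → FreeGroup (Fin n))
    (hv : Subgroup.normalClosure (Set.range v) = ⊤) :
    Submodule.span ℤ (Set.range (fun i => Multiplicative.toAdd (abmap n (v i)))) = ⊤ := by
  set V := fun i => Multiplicative.toAdd (abmap n (v i)) with hV
  set S := (Submodule.span ℤ (Set.range V)).toAddSubgroup with hS
  set K := AddSubgroup.toSubgroup S with hK
  haveI hKn : K.Normal := ⟨fun a _ g => by
    simpa [mul_comm] using by assumption⟩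
  haveI := hKn.comap (abmap n)
  have hle : Subgroup.normalClosure (Set.range v) ≤ K.comap (abmap n) := by
    apply Subgroup.normalClosure_le_normal
    rintro _ ⟨i, rfl⟩
    show abmap n (v i) ∈ K
    show Multiplicative.toAdd (abmap n (v i)) ∈ Submodule.span ℤ (Set.range V)
    exact Submodule.subset_span ⟨i, rfl⟩
  rw [hv, top_le_iff] at hle
  rw [Submodule.eq_top_iff']
  intro x
  have hmem : pre x ∈ K.comap (abmap n) := by
    rw [hle]; trivial
  have : Multiplicative.toAdd (abmap n (pre x))
      ∈ Submodule.span ℤ (Set.range V) := hmem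
  rwa [abmap_pre] at this


section Glue

variable {n : ℕ} {G : Type*} [CommGroup G]

/-- The product map sending an exponent vector to the corresponding product of the images
of the free generators. -/
def Fmap (π : FreeGroup (Fin n) →* G) : (Fin n → ℤ) → G :=
  fun x => ∏ j, π (FreeGroup.of j) ^ x j

theorem Fmap_add (π : FreeGroup (Fin n) →* G) (x y : Fin n → ℤ) :
    Fmap π (x + y) = Fmap π x * Fmap π y := by
  simp [Fmap, zpow_add, Finset.prod_mul_distrib]

theorem Fmap_single (π : FreeGroup (Fin n) →* G) (i : Fin n) :
    Fmap π (Pi.single i 1) = π (FreeGroup.of i) := by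
  rw [Fmap, Finset.prod_eq_single i
    (fun b _ hb => by rw [Pi.single_eq_of_ne hb, zpow_zero])
    (fun h => absurd (Finset.mem_univ i) h), Pi.single_eq_same, zpow_one]

theorem pi_eq_Fmap_abmap (π : FreeGroup (Fin n) →* G) (g : FreeGroup (Fin n)) :
    π g = Fmap π (Multiplicative.toAdd (abmap n g)) := by
  have hπ : π = (MonoidHom.mk' (fun x : Multiplicative (Fin n → ℤ) =>
      Fmap π (Multiplicative.toAdd x)) (fun a b => Fmap_add π _ _)).comp (abmap n) := by
    apply FreeGroup.ext_hom
    intro a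
    simp only [MonoidHom.comp_apply, abmap, FreeGroup.lift_apply_of, MonoidHom.mk'_apply,
      toAdd_ofAdd]
    rw [Fmap_single]
  conv_lhs => rw [hπ]
  rfl

end Glue
end ACAux

/-- if `π : F_n → G` is a surjection of the free group of rank `n ≥ 1` onto an
abelian group `G`, then the images under `π` of any two normally generating `n`-vectors of
`F_n` are AC-equivalent in `G`. -/
theorem images_of_normally_generating_vectors_ACEquiv_of_abelian
    {n : ℕ} (hn : 1 ≤ n) {G : Type*} [CommGroup G]
    (π : FreeGroup (Fin n) →* G) (hπ : Function.Surjective π)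
    (v w : Fin n → FreeGroup (Fin n))
    (hv : Subgroup.normalClosure (Set.range v) = ⊤)
    (hw : Subgroup.normalClosure (Set.range w) = ⊤) :
    ACEquiv (fun i => π (v i)) (fun i => π (w i)) := by
  classical
  have h1 := ACAux.requiv_to_acequiv (ACAux.Fmap π) (ACAux.Fmap_add π)
    (ACAux.Red.reduce n (fun i => Multiplicative.toAdd (ACAux.abmap n (v i)))
      (ACAux.span_of_normalClosure v hv))
  have h2 := ACAux.requiv_to_acequiv (ACAux.Fmap π) (ACAux.Fmap_add π)
    (ACAux.Red.reduce n (fun i => Multiplicative.toAdd (ACAux.abmap n (w i)))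
      (ACAux.span_of_normalClosure w hw))
  have hv' : (fun i => ACAux.Fmap π (Multiplicative.toAdd (ACAux.abmap n (v i))))
      = fun i => π (v i) := funext fun i => (ACAux.pi_eq_Fmap_abmap π (v i)).symm
  have hw' : (fun i => ACAux.Fmap π (Multiplicative.toAdd (ACAux.abmap n (w i))))
      = fun i => π (w i) := funext fun i => (ACAux.pi_eq_Fmap_abmap π (w i)).symm
  rw [hv'] at h1
  rw [hw'] at h2
  exact ACAux.acequiv_trans h1 (ACAux.acequiv_symm h2)
end

section
/- Let F_n be a free group of rank n ≥ 1 and let π : F_n → G be a surjective group homomorphism onto a solvable group G. Then the images under π of any two normally generating n-vectors of F_n are AC-equivalent in G. -/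
open Pointwise
open scoped commutatorElement

namespace ACWork

variable {n : ℕ}

section Moves
variable {G : Type*} [Group G]

lemma step_to_update (v : Fin n → G) (i : Fin n) (X : G)
    (h : (∃ j, j ≠ i ∧ X = v j * v i) ∨ X = (v i)⁻¹ ∨ ∃ g : G, X = g⁻¹ * v i * g) :
    ACStep v (Function.update v i X) := by
  refine ⟨i, fun j hj => Function.update_of_ne hj _ _, ?_⟩
  simpa [Function.update_self] using h

lemma equiv_trans {u v w : Fin n → G} (h1 : ACEquiv u v) (h2 : ACEquiv v w) :
    ACEquiv u w := Relation.ReflTransGen.trans h1 h2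

/-- slot-level elementary moves, stated between `update` states -/
lemma smul (v : Fin n → G) (i j : Fin n) (h : j ≠ i) (A : G) :
    ACEquiv (Function.update v i A) (Function.update v i (v j * A)) := by
  have := Relation.ReflTransGen.single (step_to_update (Function.update v i A) i
    ((Function.update v i A) j * (Function.update v i A) i) (Or.inl ⟨j, h, rfl⟩))
  rwa [Function.update_idem, Function.update_of_ne h, Function.update_self] at this

lemma sinv (v : Fin n → G) (i : Fin n) (A : G) :
    ACEquiv (Function.update v i A) (Function.update v i A⁻¹) := by
  have := Relation.ReflTransGen.single (step_to_update (Function.update v i A) i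
    ((Function.update v i A) i)⁻¹ (Or.inr (Or.inl rfl)))
  rwa [Function.update_idem, Function.update_self] at this

lemma sconj (v : Fin n → G) (i : Fin n) (A g : G) :
    ACEquiv (Function.update v i A) (Function.update v i (g⁻¹ * A * g)) := by
  have := Relation.ReflTransGen.single (step_to_update (Function.update v i A) i
    (g⁻¹ * (Function.update v i A) i * g) (Or.inr (Or.inr ⟨g, rfl⟩)))
  rwa [Function.update_idem, Function.update_self] at this

lemma sconj' (v : Fin n → G) (i : Fin n) (A g X : G) (hX : X = g⁻¹ * A * g) :
    ACEquiv (Function.update v i A) (Function.update v i X) := by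
  subst hX; exact sconj v i A g

lemma smul' (v : Fin n → G) (i j : Fin n) (h : j ≠ i) (A X : G) (hX : X = v j * A) :
    ACEquiv (Function.update v i A) (Function.update v i X) := by
  subst hX; exact smul v i j h A

lemma sinv' (v : Fin n → G) (i : Fin n) (A X : G) (hX : X = A⁻¹) :
    ACEquiv (Function.update v i A) (Function.update v i X) := by
  subst hX; exact sinv v i A

/-- multiply slot `i` on the left by a conjugate of another slot -/
lemma smul_conj (v : Fin n → G) (i j : Fin n) (h : j ≠ i) (g A : G) :
    ACEquiv (Function.update v i A) (Function.update v i (g * v j * g⁻¹ * A)) := by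
  refine equiv_trans (sconj v i A g) (equiv_trans (smul v i j h _) (sconj' v i _ g⁻¹ _ ?_))
  group

/-- multiply slot `i` on the left by the inverse of another slot -/
lemma smul_inv (v : Fin n → G) (i j : Fin n) (h : j ≠ i) (A : G) :
    ACEquiv (Function.update v i A) (Function.update v i ((v j)⁻¹ * A)) := by
  refine equiv_trans (sinv v i A) (equiv_trans (smul v i j h _)
    (equiv_trans (sinv v i _) (sconj' v i _ (v j) _ ?_)))
  group

lemma step_symm {v w : Fin n → G} (h : ACStep v w) : ACEquiv w v := by
  obtain ⟨i, hrest, hcase⟩ := h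
  have hv : v = Function.update w i (v i) := by
    funext j; by_cases hj : j = i
    · subst hj; simp
    · rw [Function.update_of_ne hj, hrest j hj]
  rcases hcase with ⟨j, hji, hwi⟩ | hwi | ⟨g, hwi⟩
  · have h1 := smul_inv w i j hji (w i)
    have hval : (w j)⁻¹ * w i = v i := by rw [hwi, hrest j hji]; group
    rw [Function.update_eq_self, hval, ← hv] at h1; exact h1
  · have h1 := sinv w i (w i)
    have hval : (w i)⁻¹ = v i := by rw [hwi]; group
    rw [Function.update_eq_self, hval, ← hv] at h1; exact h1
  · have h1 := sconj' w i (w i) g⁻¹ (v i) (by rw [hwi]; group)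
    rw [Function.update_eq_self, ← hv] at h1; exact h1

lemma equiv_symm {v w : Fin n → G} (h : ACEquiv v w) : ACEquiv w v := by
  induction h with
  | refl => exact Relation.ReflTransGen.refl
  | tail _ hbc ih => exact equiv_trans (step_symm hbc) ih

lemma equiv_map {H : Type*} [Group H] (f : G →* H) {v w : Fin n → G} (h : ACEquiv v w) :
    ACEquiv (fun i => f (v i)) (fun i => f (w i)) := by
  induction h with
  | refl => exact Relation.ReflTransGen.refl
  | tail _ hbc ih =>
      refine equiv_trans ih (Relation.ReflTransGen.single ?_)
      obtain ⟨i, hrest, hcase⟩ := hbc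
      refine ⟨i, fun j hj => by simp [hrest j hj], ?_⟩
      rcases hcase with ⟨j, hji, hci⟩ | hci | ⟨g, hci⟩
      · exact Or.inl ⟨j, hji, by simp [hci]⟩
      · exact Or.inr (Or.inl (by simp [hci]))
      · exact Or.inr (Or.inr ⟨f g, by simp [hci]⟩)

lemma step_lift {H : Type*} [Group H] (f : G →* H) (hf : Function.Surjective f)
    (B : Fin n → G) (c : Fin n → H) (h : ACStep (fun i => f (B i)) c) :
    ∃ C : Fin n → G, ACStep B C ∧ (fun i => f (C i)) = c := by
  obtain ⟨i, hrest, hcase⟩ := h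
  have hcomp : ∀ (X : G), c i = f X → (fun l => f (Function.update B i X l)) = c := by
    intro X hX; funext l; by_cases hl : l = i
    · subst hl; simp only [Function.update_self]; exact hX.symm
    · simp only [Function.update_of_ne hl]; exact (hrest l hl).symm
  rcases hcase with ⟨j, hji, hci⟩ | hci | ⟨g, hci⟩
  · exact ⟨_, step_to_update B i (B j * B i) (Or.inl ⟨j, hji, rfl⟩),
      hcomp _ (by simp [hci])⟩
  · exact ⟨_, step_to_update B i (B i)⁻¹ (Or.inr (Or.inl rfl)),
      hcomp _ (by simp [hci])⟩
  · obtain ⟨g₀, hg₀⟩ := hf g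
    exact ⟨_, step_to_update B i (g₀⁻¹ * B i * g₀) (Or.inr (Or.inr ⟨g₀, rfl⟩)),
      hcomp _ (by simp [hci, hg₀])⟩

lemma equiv_lift {H : Type*} [Group H] (f : G →* H) (hf : Function.Surjective f)
    {A : Fin n → G} {c : Fin n → H} (h : ACEquiv (fun i => f (A i)) c) :
    ∃ B : Fin n → G, ACEquiv A B ∧ (fun i => f (B i)) = c := by
  induction h with
  | refl => exact ⟨A, Relation.ReflTransGen.refl, rfl⟩
  | tail _ hbc ih =>
      obtain ⟨B, hAB, hfB⟩ := ih
      rw [← hfB] at hbc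
      obtain ⟨C, hBC, hfC⟩ := step_lift f hf B _ hbc
      exact ⟨C, Relation.ReflTransGen.tail hAB hBC, hfC⟩

lemma absorb (t : Fin n → G) (i : Fin n) {k : G}
    (hk : k ∈ Subgroup.normalClosure (t '' {j | j ≠ i})) (A : G) :
    ACEquiv (Function.update t i A) (Function.update t i (k * A)) := by
  revert A
  have hk' : k ∈ Subgroup.closure (Group.conjugatesOfSet (t '' {j | j ≠ i})) := hk
  refine Subgroup.closure_induction (p := fun k _ => ∀ A : G,
      ACEquiv (Function.update t i A) (Function.update t i (k * A))) ?_ ?_ ?_ ?_ hk'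
  · intro x hx A
    rw [Group.mem_conjugatesOfSet_iff] at hx
    obtain ⟨a, ha, hconj⟩ := hx
    obtain ⟨j, hj, haj⟩ := ha
    obtain ⟨cc, hcc⟩ := isConj_iff.mp hconj
    have h := smul_conj t i j hj cc A
    rw [haj, hcc] at h
    exact h
  · intro A; rw [one_mul]; exact Relation.ReflTransGen.refl
  · intro x y _ _ hx hy A
    have h1 := hy A
    have h2 := hx (y * A)
    rw [mul_assoc]
    exact equiv_trans h1 h2
  · intro x _ hx A
    have := hx (x⁻¹ * A)
    rw [← mul_assoc, mul_inv_cancel, one_mul] at this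
    exact equiv_symm this


lemma reach (t : Fin n → G) (i : Fin n) {k : G} (g : G)
    (hk : k ∈ Subgroup.normalClosure (t '' {j | j ≠ i})) :
    ACEquiv t (Function.update t i (k * (g * t i * g⁻¹))) := by
  have h := sconj' t i (t i) g⁻¹ (g * t i * g⁻¹) (by group)
  rw [Function.update_eq_self] at h
  exact equiv_trans h (absorb t i hk _)

/-- A solvable group that is its own commutator subgroup is trivial. -/
lemma eq_one_of_perfect_solvable {Q : Type*} [Group Q] [Group.IsSolvable Q]
    (h : commutator Q = ⊤) (x : Q) : x = 1 := by
  have hall : ∀ k, derivedSeries Q k = ⊤ := by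
    intro k
    induction k with
    | zero => exact derivedSeries_zero Q
    | succ k ih =>
        rw [derivedSeries_succ, ih]
        rw [commutator_def] at h
        exact h
  obtain ⟨m, hm⟩ := (inferInstance : Group.IsSolvable Q).solvable
  have : x ∈ derivedSeries Q m := by rw [hall m]; trivial
  rw [hm] at this
  exact Subgroup.mem_bot.mp this

/-- the "direct path" single-slot absorption: multipliers in a normal abelian
subgroup `N` that is contained in the second derived subgroup. -/
lemma ss_direct (N : Subgroup G) [hNnorm : N.Normal]
    (hNab : ∀ a ∈ N, ∀ b ∈ N, a * b = b * a)
    (hN2 : N ≤ ⁅(⁅(⊤ : Subgroup G), (⊤ : Subgroup G)⁆), (⁅(⊤ : Subgroup G), (⊤ : Subgroup G)⁆)⁆)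
    (b : Fin n → G)
    (hgen : ∀ g : G, g ∈ Subgroup.closure (Set.range b))
    (m : Fin n → G) (hm : ∀ j, m j ∈ N) (i : Fin n) :
    ACEquiv (fun j => b j * m j) (Function.update (fun j => b j * m j) i (b i)) := by
  set u : Fin n → G := fun j => b j * m j with hu
  set Kt : Subgroup G := Subgroup.normalClosure (u '' {j | j ≠ i}) with hKt
  haveI : Kt.Normal := Subgroup.normalClosure_normal
  set Kh : Subgroup G := Kt ⊔ N with hKh
  haveI : Kh.Normal := Subgroup.sup_normal Kt N
  -- slots other than i lie in Kt
  have huKt : ∀ j, j ≠ i → u j ∈ Kt := fun j hj =>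
    Subgroup.subset_normalClosure ⟨j, hj, rfl⟩
  -- (α) the commutator subgroup is contained in Kh
  have hcomm : ⁅(⊤ : Subgroup G), (⊤ : Subgroup G)⁆ ≤ Kh := by
    rw [Subgroup.commutator_le]
    intro g _ h _
    have hker := QuotientGroup.ker_mk' Kh
    set mk : G →* G ⧸ Kh := QuotientGroup.mk' Kh with hmk
    -- every image is a power of mk (b i)
    have hcyc : ∀ g : G, mk g ∈ Subgroup.closure ({mk (b i)} : Set (G ⧸ Kh)) := by
      intro g
      have h1 : mk g ∈ Subgroup.map mk (Subgroup.closure (Set.range b)) :=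
        ⟨g, hgen g, rfl⟩
      rw [MonoidHom.map_closure] at h1
      have h2 : (⇑mk '' Set.range b) ⊆ ↑(Subgroup.closure ({mk (b i)} : Set (G ⧸ Kh))) := by
        rintro x ⟨y, ⟨j, rfl⟩, rfl⟩
        by_cases hj : j = i
        · subst hj; exact Subgroup.subset_closure rfl
        · have : b j ∈ Kh := by
            have h3 : b j = u j * (m j)⁻¹ := by simp [hu]
            rw [h3]
            exact Subgroup.mul_mem _ (Subgroup.mem_sup_left (huKt j hj))
              (Subgroup.inv_mem _ (Subgroup.mem_sup_right (hm j)))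
          have : mk (b j) = 1 := by
            rw [← MonoidHom.mem_ker, hker]; exact this
          rw [this]; exact Subgroup.one_mem _
      exact (Subgroup.closure_le _).mpr h2 h1
    have hcommute : Commute (mk g) (mk h) := by
      obtain ⟨a, ha⟩ := Subgroup.mem_closure_singleton.mp (hcyc g)
      obtain ⟨c, hc⟩ := Subgroup.mem_closure_singleton.mp (hcyc h)
      rw [← ha, ← hc]
      exact (Commute.refl (mk (b i))).zpow_zpow a c
    have : mk ⁅g, h⁆ = 1 := by
      rw [map_commutatorElement]
      exact commutatorElement_eq_one_iff_commute.mpr hcommute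
    rw [← hker]
    exact this
  -- (γ) ⁅Kh, Kh⁆ ≤ Kt
  have hKhKh : ⁅Kh, Kh⁆ ≤ Kt := by
    rw [Subgroup.commutator_le]
    intro x hx y hy
    have hsetmul : ((Kt ⊔ N : Subgroup G) : Set G) = (Kt : Set G) * (N : Set G) :=
      Subgroup.mul_normal Kt N
    have hx' : x ∈ (Kt : Set G) * (N : Set G) := by rw [← hsetmul]; exact hx
    have hy' : y ∈ (Kt : Set G) * (N : Set G) := by rw [← hsetmul]; exact hy
    obtain ⟨k₁, hk₁, ν₁, hν₁, hxe⟩ := Set.mem_mul.mp hx'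
    obtain ⟨k₂, hk₂, ν₂, hν₂, hye⟩ := Set.mem_mul.mp hy'
    set mk : G →* G ⧸ Kt := QuotientGroup.mk' Kt with hmk
    have hker := QuotientGroup.ker_mk' Kt
    have hmkk : ∀ z ∈ Kt, mk z = 1 := by
      intro z hz; rw [← MonoidHom.mem_ker, hker]; exact hz
    have : mk ⁅x, y⁆ = 1 := by
      rw [map_commutatorElement, ← hxe, ← hye, map_mul, map_mul,
        hmkk k₁ hk₁, hmkk k₂ hk₂, one_mul, one_mul, ← map_commutatorElement]
      have : ⁅ν₁, ν₂⁆ = 1 := commutatorElement_eq_one_iff_commute.mpr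
        (hNab ν₁ hν₁ ν₂ hν₂)
      rw [this, map_one]
    rw [← hker]; exact this
  -- conclude m i ∈ Kt
  have hmi : m i ∈ Kt := hKhKh (Subgroup.commutator_mono hcomm hcomm (hN2 (hm i)))
  -- absorb
  have hKtnorm : Kt.Normal := Subgroup.normalClosure_normal
  have hk : b i * (m i)⁻¹ * (b i)⁻¹ ∈ Kt :=
    hKtnorm.conj_mem _ (Subgroup.inv_mem _ hmi) (b i)
  have habs := absorb u i hk (u i)
  rw [Function.update_eq_self] at habs
  have hval : (b i * (m i)⁻¹ * (b i)⁻¹) * u i = b i := by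
    simp only [hu]; group
  rw [hval] at habs
  exact habs

set_option maxHeartbeats 1600000 in
/-- the "metabelian path" single-slot absorption -/
lemma ss_metab [Group.IsSolvable G] (hmet : derivedSeries G 2 = ⊥)
    (b : Fin n → G) (hgen : ∀ g : G, g ∈ Subgroup.closure (Set.range b))
    (m : Fin n → G) (hm : ∀ j, m j ∈ commutator G) (i : Fin n) :
    ACEquiv (fun j => b j * m j) (Function.update (fun j => b j * m j) i (b i)) := by
  set u : Fin n → G := fun j => b j * m j with hu
  set Kt : Subgroup G := Subgroup.normalClosure (u '' {j | j ≠ i}) with hKt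
  haveI hKtn : Kt.Normal := Subgroup.normalClosure_normal
  set mkk : G →* G ⧸ Kt := QuotientGroup.mk' Kt with hmkk
  have hker := QuotientGroup.ker_mk' Kt
  have hsurj : Function.Surjective mkk := QuotientGroup.mk'_surjective Kt
  set s : G ⧸ Kt := mkk (u i) with hs
  have huKt : ∀ j, j ≠ i → u j ∈ Kt := fun j hj =>
    Subgroup.subset_normalClosure ⟨j, hj, rfl⟩
  have hmkKt : ∀ z ∈ Kt, mkk z = 1 := by
    intro z hz; rw [← MonoidHom.mem_ker, hker]; exact hz
  -- A := commutator of the quotient is abelian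
  have hA_ab : ∀ a ∈ commutator (G ⧸ Kt), ∀ c ∈ commutator (G ⧸ Kt), a * c = c * a := by
    intro a ha c hc
    have h2 : (⁅commutator (G ⧸ Kt), commutator (G ⧸ Kt)⁆ : Subgroup (G ⧸ Kt)) = ⊥ := by
      have hmap := map_derivedSeries_eq hsurj 2
      rw [hmet, Subgroup.map_bot] at hmap
      calc (⁅commutator (G ⧸ Kt), commutator (G ⧸ Kt)⁆ : Subgroup (G ⧸ Kt))
          = ⁅derivedSeries (G ⧸ Kt) 1, derivedSeries (G ⧸ Kt) 1⁆ := by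
            rw [derivedSeries_one]
        _ = derivedSeries (G ⧸ Kt) 2 := (derivedSeries_succ _ 1).symm
        _ = ⊥ := hmap.symm
    have : ⁅a, c⁆ ∈ (⊥ : Subgroup (G ⧸ Kt)) := by
      rw [← h2]; exact Subgroup.commutator_mem_commutator ha hc
    have h3 : ⁅a, c⁆ = 1 := Subgroup.mem_bot.mp this
    have := commutatorElement_eq_one_iff_commute.mp h3
    exact this
  have hconjA : ∀ a ∈ commutator (G ⧸ Kt), ∀ g : G ⧸ Kt,
      g * a * g⁻¹ ∈ commutator (G ⧸ Kt) := by
    intro a ha g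
    rw [commutator_def] at ha ⊢
    exact (Subgroup.commutator_normal ⊤ ⊤).conj_mem a ha g
  have hcommel : ∀ x y : G ⧸ Kt, x * y * x⁻¹ * y⁻¹ ∈ commutator (G ⧸ Kt) := by
    intro x y
    have : (⁅x, y⁆ : G ⧸ Kt) ∈ commutator (G ⧸ Kt) := by
      rw [commutator_def]
      exact Subgroup.commutator_mem_commutator (Subgroup.mem_top _) (Subgroup.mem_top _)
    simpa [commutatorElement_def] using this
  -- (f4) everything is in the normal closure of s
  have hTfull : ∀ q : G ⧸ Kt, q ∈ Subgroup.normalClosure ({s} : Set (G ⧸ Kt)) := by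
    set T : Subgroup G := Subgroup.comap mkk (Subgroup.normalClosure ({s} : Set (G ⧸ Kt)))
      with hT
    haveI hTn : T.Normal := Subgroup.Normal.comap Subgroup.normalClosure_normal mkk
    have hKtT : Kt ≤ T := by
      intro z hz
      rw [hT, Subgroup.mem_comap, hmkKt z hz]
      exact Subgroup.one_mem _
    have huT : ∀ j, u j ∈ T := by
      intro j
      by_cases hj : j = i
      · rw [hj, hT, Subgroup.mem_comap]
        exact Subgroup.subset_normalClosure rfl
      · exact hKtT (huKt j hj)
    -- perfect quotient argument
    set mkT : G →* G ⧸ T := QuotientGroup.mk' T with hmkT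
    have hTker := QuotientGroup.ker_mk' T
    have hsurjT : Function.Surjective mkT := QuotientGroup.mk'_surjective T
    have hmapc : Subgroup.map mkT (commutator G) = commutator (G ⧸ T) := by
      rw [commutator_def, commutator_def, Subgroup.map_commutator,
        Subgroup.map_top_of_surjective _ hsurjT]
    have hQtop : commutator (G ⧸ T) = ⊤ := by
      refine le_antisymm le_top ?_
      intro q _
      obtain ⟨g, rfl⟩ := hsurjT q
      have h1 : mkT g ∈ Subgroup.map mkT (Subgroup.closure (Set.range b)) := ⟨g, hgen g, rfl⟩
      rw [MonoidHom.map_closure] at h1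
      have h2 : (⇑mkT '' Set.range b) ⊆ ↑(commutator (G ⧸ T)) := by
        rintro x ⟨y, ⟨j, rfl⟩, rfl⟩
        have h3 : b j = u j * (m j)⁻¹ := by simp [hu]
        have h4 : mkT (u j) = 1 := by
          rw [← MonoidHom.mem_ker, hTker]; exact huT j
        have h5 : mkT (b j) = (mkT (m j))⁻¹ := by
          rw [h3, map_mul, h4, one_mul, map_inv]
        rw [h5]
        exact Subgroup.inv_mem _ (hmapc ▸ ⟨m j, hm j, rfl⟩)
      exact (Subgroup.closure_le _).mpr h2 h1
    have hQtriv : ∀ g : G, g ∈ T := by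
      intro g
      have h6 : mkT g = 1 := eq_one_of_perfect_solvable hQtop (mkT g)
      rw [← MonoidHom.mem_ker, hTker] at h6
      exact h6
    intro q
    obtain ⟨g, rfl⟩ := hsurj q
    have := hQtriv g
    rw [hT, Subgroup.mem_comap] at this
    exact this
  -- subgroup saturation trick
  have hsubT : ∀ S : Subgroup (G ⧸ Kt), s ∈ S →
      (∀ a ∈ commutator (G ⧸ Kt), a ∈ S) → ∀ x : G ⧸ Kt, x ∈ S := by
    intro S hsS hAS x
    have hncl : Subgroup.normalClosure ({s} : Set (G ⧸ Kt)) ≤ S := by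
      refine (Subgroup.closure_le _).mpr ?_
      intro y hy
      rw [Group.mem_conjugatesOfSet_iff] at hy
      obtain ⟨a, ha, hconj⟩ := hy
      rw [Set.mem_singleton_iff] at ha; subst ha
      obtain ⟨c, hc⟩ := isConj_iff.mp hconj
      have h1 : y = s * (s⁻¹ * y * s * (s⁻¹ * y * s)⁻¹ * (s⁻¹ * y * s) * s⁻¹) := by group
      have h2 : s⁻¹ * y ∈ commutator (G ⧸ Kt) := by
        have h3 : s⁻¹ * y = s⁻¹ * c * s * c⁻¹ := by rw [← hc]; group
        rw [h3]
        have := hcommel s⁻¹ c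
        simpa using this
      have h4 : y = s * (s⁻¹ * y) := by group
      rw [h4]
      exact S.mul_mem hsS (hAS _ h2)
    exact hncl (hTfull x)
  -- B : subgroup of twisted commutators with s
  set A : Subgroup (G ⧸ Kt) := commutator (G ⧸ Kt) with hA
  have hBone : (1 : G ⧸ Kt) ∈ {x | ∃ a ∈ A, x = s⁻¹ * a * s * a⁻¹} :=
    ⟨1, Subgroup.one_mem A, by group⟩
  have hBmul : ∀ x ∈ {x | ∃ a ∈ A, x = s⁻¹ * a * s * a⁻¹},
      ∀ y ∈ {x | ∃ a ∈ A, x = s⁻¹ * a * s * a⁻¹},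
      x * y ∈ {x | ∃ a ∈ A, x = s⁻¹ * a * s * a⁻¹} := by
    rintro x ⟨a, ha, rfl⟩ y ⟨c, hc, rfl⟩
    refine ⟨a * c, Subgroup.mul_mem A ha hc, ?_⟩
    have hd : s⁻¹ * c * s ∈ A := by simpa using hconjA c hc s⁻¹
    have h1 : a⁻¹ * (s⁻¹ * c * s) = (s⁻¹ * c * s) * a⁻¹ :=
      hA_ab _ (Subgroup.inv_mem A ha) _ hd
    have h2 : a⁻¹ * c⁻¹ = c⁻¹ * a⁻¹ :=
      hA_ab _ (Subgroup.inv_mem A ha) _ (Subgroup.inv_mem A hc)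
    calc s⁻¹ * a * s * a⁻¹ * (s⁻¹ * c * s * c⁻¹)
        = s⁻¹ * a * s * (a⁻¹ * (s⁻¹ * c * s)) * c⁻¹ := by group
      _ = s⁻¹ * a * s * ((s⁻¹ * c * s) * a⁻¹) * c⁻¹ := by rw [h1]
      _ = s⁻¹ * (a * c) * s * (a⁻¹ * c⁻¹) := by group
      _ = s⁻¹ * (a * c) * s * (c⁻¹ * a⁻¹) := by rw [h2]
      _ = s⁻¹ * (a * c) * s * (a * c)⁻¹ := by group
  have hBinv : ∀ x ∈ {x | ∃ a ∈ A, x = s⁻¹ * a * s * a⁻¹},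
      x⁻¹ ∈ {x | ∃ a ∈ A, x = s⁻¹ * a * s * a⁻¹} := by
    rintro x ⟨a, ha, rfl⟩
    refine ⟨a⁻¹, Subgroup.inv_mem A ha, ?_⟩
    have hd : s⁻¹ * a⁻¹ * s ∈ A := by simpa using hconjA a⁻¹ (Subgroup.inv_mem A ha) s⁻¹
    have h1 : a * (s⁻¹ * a⁻¹ * s) = (s⁻¹ * a⁻¹ * s) * a := hA_ab _ ha _ hd
    calc (s⁻¹ * a * s * a⁻¹)⁻¹
        = a * (s⁻¹ * a⁻¹ * s) := by group
      _ = (s⁻¹ * a⁻¹ * s) * a := h1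
      _ = s⁻¹ * a⁻¹ * s * (a⁻¹)⁻¹ := by group
  set B : Subgroup (G ⧸ Kt) :=
    { carrier := {x | ∃ a ∈ A, x = s⁻¹ * a * s * a⁻¹}
      one_mem' := hBone
      mul_mem' := fun hx hy => hBmul _ hx _ hy
      inv_mem' := fun hx => hBinv _ hx } with hB
  have hmemB : ∀ x : G ⧸ Kt, x ∈ B ↔ ∃ a ∈ A, x = s⁻¹ * a * s * a⁻¹ := fun x => Iff.rfl
  have hBA : ∀ x ∈ B, x ∈ A := by
    intro x hx
    obtain ⟨a, ha, rfl⟩ := (hmemB x).mp hx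
    have h2 := hcommel s⁻¹ a
    rw [hA]
    simpa using h2
  -- normalizer facts
  have hsB : s ∈ Subgroup.normalizer (B : Set (G ⧸ Kt)) := by
    rw [Subgroup.mem_normalizer_iff]
    intro h
    constructor
    · intro hh
      obtain ⟨a, ha, rfl⟩ := (hmemB h).mp hh
      refine (hmemB _).mpr ⟨s * a * s⁻¹, by simpa using hconjA a ha s, ?_⟩
      group
    · intro hh
      obtain ⟨a, ha, heq⟩ := (hmemB _).mp hh
      refine (hmemB _).mpr ⟨s⁻¹ * a * s, by simpa using hconjA a ha s⁻¹, ?_⟩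
      have h5 : h = s⁻¹ * (s * h * s⁻¹) * s := by group
      rw [h5, heq]; group
  have haB : ∀ a₀ ∈ A, a₀ ∈ Subgroup.normalizer (B : Set (G ⧸ Kt)) := by
    intro a₀ ha₀
    rw [Subgroup.mem_normalizer_iff]
    intro h
    constructor
    · intro hh
      have hhA : h ∈ A := hBA h hh
      have h6 : a₀ * h * a₀⁻¹ = h := by
        have h7 := hA_ab a₀ ha₀ h hhA
        rw [h7]; group
      rw [h6]; exact hh
    · intro hh
      have hzA : a₀ * h * a₀⁻¹ ∈ A := hBA _ hh
      have h2 : a₀⁻¹ * (a₀ * h * a₀⁻¹) = (a₀ * h * a₀⁻¹) * a₀⁻¹ :=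
        hA_ab _ (Subgroup.inv_mem A ha₀) _ hzA
      have h3 : a₀⁻¹ * (a₀ * h * a₀⁻¹) * a₀ = a₀ * h * a₀⁻¹ := by rw [h2]; group
      have h4 : h = a₀ * h * a₀⁻¹ := by rw [← h3]; group
      rw [h4]; exact hh
  have hBnormal : B.Normal := by
    constructor
    intro x hx g
    have hgN : g ∈ Subgroup.normalizer (B : Set (G ⧸ Kt)) := hsubT (Subgroup.normalizer (B : Set (G ⧸ Kt))) hsB haB g
    exact (Subgroup.mem_normalizer_iff.mp hgN x).mp hx
  -- commutators with s lie in B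
  have bmem2 : ∀ a ∈ A, a * s * a⁻¹ * s⁻¹ ∈ B := by
    intro a ha
    refine (hmemB _).mpr ⟨s * a * s⁻¹, by simpa using hconjA a ha s, ?_⟩
    group
  have bmem3 : ∀ a ∈ A, s * a * s⁻¹ * a⁻¹ ∈ B := by
    intro a ha
    have h1 := B.inv_mem (bmem2 a ha)
    have h2 : (a * s * a⁻¹ * s⁻¹)⁻¹ = s * a * s⁻¹ * a⁻¹ := by group
    rwa [h2] at h1
  -- closure helpers
  have hstep_mul : ∀ g h₁ h₂ : G ⧸ Kt,
      g * h₁ * g⁻¹ * h₁⁻¹ ∈ B → g * h₂ * g⁻¹ * h₂⁻¹ ∈ B →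
      g * (h₁ * h₂) * g⁻¹ * (h₁ * h₂)⁻¹ ∈ B := by
    intro g h₁ h₂ hb1 hb2
    have hid : g * (h₁ * h₂) * g⁻¹ * (h₁ * h₂)⁻¹
        = (g * h₁ * g⁻¹ * h₁⁻¹) * (h₁ * (g * h₂ * g⁻¹ * h₂⁻¹) * h₁⁻¹) := by group
    rw [hid]
    exact B.mul_mem hb1 (hBnormal.conj_mem _ hb2 h₁)
  have hstep_inv : ∀ g h : G ⧸ Kt,
      g * h * g⁻¹ * h⁻¹ ∈ B → g * h⁻¹ * g⁻¹ * (h⁻¹)⁻¹ ∈ B := by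
    intro g h hb
    have hid : g * h⁻¹ * g⁻¹ * (h⁻¹)⁻¹ = h⁻¹ * (g * h * g⁻¹ * h⁻¹)⁻¹ * (h⁻¹)⁻¹ := by group
    rw [hid]
    exact hBnormal.conj_mem _ (B.inv_mem hb) h⁻¹
  have hstep_mulL : ∀ h g₁ g₂ : G ⧸ Kt,
      g₁ * h * g₁⁻¹ * h⁻¹ ∈ B → g₂ * h * g₂⁻¹ * h⁻¹ ∈ B →
      (g₁ * g₂) * h * (g₁ * g₂)⁻¹ * h⁻¹ ∈ B := by
    intro h g₁ g₂ hb1 hb2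
    have hid : (g₁ * g₂) * h * (g₁ * g₂)⁻¹ * h⁻¹
        = (g₁ * (g₂ * h * g₂⁻¹ * h⁻¹) * g₁⁻¹) * (g₁ * h * g₁⁻¹ * h⁻¹) := by group
    rw [hid]
    exact B.mul_mem (hBnormal.conj_mem _ hb2 g₁) hb1
  have hstep_invL : ∀ h g : G ⧸ Kt,
      g * h * g⁻¹ * h⁻¹ ∈ B → g⁻¹ * h * (g⁻¹)⁻¹ * h⁻¹ ∈ B := by
    intro h g hb
    have hid : g⁻¹ * h * (g⁻¹)⁻¹ * h⁻¹ = g⁻¹ * (g * h * g⁻¹ * h⁻¹)⁻¹ * (g⁻¹)⁻¹ := by group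
    rw [hid]
    exact hBnormal.conj_mem _ (B.inv_mem hb) g⁻¹
  -- c1
  have c1 : ∀ h : G ⧸ Kt, s * h * s⁻¹ * h⁻¹ ∈ B := by
    set S1 : Subgroup (G ⧸ Kt) :=
      { carrier := {h | s * h * s⁻¹ * h⁻¹ ∈ B}
        one_mem' := by
          show s * 1 * s⁻¹ * 1⁻¹ ∈ B
          have : s * 1 * s⁻¹ * (1 : G ⧸ Kt)⁻¹ = 1 := by group
          rw [this]; exact B.one_mem
        mul_mem' := fun {h₁ h₂} hb1 hb2 => hstep_mul s h₁ h₂ hb1 hb2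
        inv_mem' := fun {h} hb => hstep_inv s h hb } with hS1
    have hsS1 : s ∈ S1 := by
      show s * s * s⁻¹ * s⁻¹ ∈ B
      have : s * s * s⁻¹ * s⁻¹ = 1 := by group
      rw [this]; exact B.one_mem
    have hAS1 : ∀ a ∈ commutator (G ⧸ Kt), a ∈ S1 := fun a ha => bmem3 a ha
    exact fun h => hsubT S1 hsS1 hAS1 h
  -- c2
  have c2 : ∀ a ∈ A, ∀ h : G ⧸ Kt, a * h * a⁻¹ * h⁻¹ ∈ B := by
    intro a ha
    set S2 : Subgroup (G ⧸ Kt) :=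
      { carrier := {h | a * h * a⁻¹ * h⁻¹ ∈ B}
        one_mem' := by
          show a * 1 * a⁻¹ * 1⁻¹ ∈ B
          have : a * 1 * a⁻¹ * (1 : G ⧸ Kt)⁻¹ = 1 := by group
          rw [this]; exact B.one_mem
        mul_mem' := fun {h₁ h₂} hb1 hb2 => hstep_mul a h₁ h₂ hb1 hb2
        inv_mem' := fun {h} hb => hstep_inv a h hb } with hS2
    have hsS2 : s ∈ S2 := bmem2 a ha
    have hAS2 : ∀ c ∈ commutator (G ⧸ Kt), c ∈ S2 := by
      intro c hc
      show a * c * a⁻¹ * c⁻¹ ∈ B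
      have h7 := hA_ab a ha c hc
      have h8 : a * c * a⁻¹ * c⁻¹ = (a * c) * (c * a)⁻¹ := by group
      have h9 : a * c * a⁻¹ * c⁻¹ = 1 := by rw [h8, ← h7]; group
      rw [h9]; exact B.one_mem
    exact fun h => hsubT S2 hsS2 hAS2 h
  -- c3
  have c3 : ∀ g h : G ⧸ Kt, g * h * g⁻¹ * h⁻¹ ∈ B := by
    intro g h
    set S3 : Subgroup (G ⧸ Kt) :=
      { carrier := {g | g * h * g⁻¹ * h⁻¹ ∈ B}
        one_mem' := by
          show 1 * h * (1 : G ⧸ Kt)⁻¹ * h⁻¹ ∈ B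
          have : 1 * h * (1 : G ⧸ Kt)⁻¹ * h⁻¹ = 1 := by group
          rw [this]; exact B.one_mem
        mul_mem' := fun {g₁ g₂} hb1 hb2 => hstep_mulL h g₁ g₂ hb1 hb2
        inv_mem' := fun {g} hb => hstep_invL h g hb } with hS3
    have hsS3 : s ∈ S3 := c1 h
    have hAS3 : ∀ a ∈ commutator (G ⧸ Kt), a ∈ S3 := fun a ha => c2 a ha h
    exact hsubT S3 hsS3 hAS3 g
  -- A ≤ B
  have hAB : ∀ x ∈ A, x ∈ B := by
    intro x hx
    have hle : (⁅(⊤ : Subgroup (G ⧸ Kt)), (⊤ : Subgroup (G ⧸ Kt))⁆) ≤ B := by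
      rw [Subgroup.commutator_le]
      intro g _ h _
      have h10 := c3 g h
      have h11 : (⁅g, h⁆ : G ⧸ Kt) = g * h * g⁻¹ * h⁻¹ := rfl
      rw [h11]; exact h10
    rw [hA, commutator_def] at hx
    exact hle hx
  -- finish
  have hmiA : mkk (m i) ∈ A := by
    have hmapc : Subgroup.map mkk (commutator G) = commutator (G ⧸ Kt) := by
      rw [commutator_def, commutator_def, Subgroup.map_commutator,
        Subgroup.map_top_of_surjective _ hsurj]
    rw [hA, ← hmapc]
    exact ⟨m i, hm i, rfl⟩
  obtain ⟨a, haA, heq⟩ := (hmemB _).mp (hAB _ (A.inv_mem hmiA))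
  obtain ⟨g₀, hg₀⟩ := hsurj a
  have hbi : b i = u i * (m i)⁻¹ := by simp only [hu]; group
  have h1 : mkk (b i) = a * s * a⁻¹ := by
    rw [hbi, map_mul, map_inv, ← hs, heq]
    group
  have hkey : mkk (b i * (g₀ * u i * g₀⁻¹)⁻¹) = 1 := by
    rw [map_mul, map_inv, map_mul, map_mul, map_inv, hg₀, ← hs, h1]
    group
  have hkmem : b i * (g₀ * u i * g₀⁻¹)⁻¹ ∈ Kt := by
    rw [← hker]; exact hkey
  have hre := reach u i g₀ hkmem
  have hval : (b i * (g₀ * u i * g₀⁻¹)⁻¹) * (g₀ * u i * g₀⁻¹) = b i := by group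
  rw [hval] at hre
  exact hre

end Moves

/-- elementary integer row moves mirroring AC moves in the abelianization -/
def ZStep (a b : Fin n → Fin n → ℤ) : Prop :=
  ∃ i : Fin n, ((∃ j, j ≠ i ∧ b = Function.update a i (a j + a i)) ∨
    b = Function.update a i (-a i))

def ZEquiv (a b : Fin n → Fin n → ℤ) : Prop := Relation.ReflTransGen ZStep a b

lemma zrefl (a : Fin n → Fin n → ℤ) : ZEquiv a a := Relation.ReflTransGen.refl

lemma ztrans {a b c : Fin n → Fin n → ℤ} (h1 : ZEquiv a b) (h2 : ZEquiv b c) : ZEquiv a c :=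
  Relation.ReflTransGen.trans h1 h2

lemma zadd (a : Fin n → Fin n → ℤ) (i j : Fin n) (h : j ≠ i) :
    ZEquiv a (Function.update a i (a j + a i)) :=
  Relation.ReflTransGen.single ⟨i, Or.inl ⟨j, h, rfl⟩⟩

lemma zneg (a : Fin n → Fin n → ℤ) (i : Fin n) :
    ZEquiv a (Function.update a i (-a i)) :=
  Relation.ReflTransGen.single ⟨i, Or.inr rfl⟩

/-- slot-level versions between update states -/
lemma zadd' (a : Fin n → Fin n → ℤ) (i j : Fin n) (h : j ≠ i) (A : Fin n → ℤ) :
    ZEquiv (Function.update a i A) (Function.update a i (a j + A)) := by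
  have := zadd (Function.update a i A) i j h
  rwa [Function.update_idem, Function.update_of_ne h, Function.update_self] at this

lemma zneg' (a : Fin n → Fin n → ℤ) (i : Fin n) (A : Fin n → ℤ) :
    ZEquiv (Function.update a i A) (Function.update a i (-A)) := by
  have := zneg (Function.update a i A) i
  rwa [Function.update_idem, Function.update_self] at this

lemma zsub' (a : Fin n → Fin n → ℤ) (i j : Fin n) (h : j ≠ i) (A : Fin n → ℤ) :
    ZEquiv (Function.update a i A) (Function.update a i (A - a j)) := by
  refine ztrans (zneg' a i A) (ztrans (zadd' a i j h _) ?_)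
  have h2 := zneg' a i (a j + -A)
  have h3 : -(a j + -A) = A - a j := by abel
  rwa [h3] at h2

/-- add c • (row j) to row i -/
lemma zsmul' (a : Fin n → Fin n → ℤ) (i j : Fin n) (h : j ≠ i) (c : ℤ) (A : Fin n → ℤ) :
    ZEquiv (Function.update a i A) (Function.update a i (A + c • a j)) := by
  induction c using Int.induction_on with
  | zero => simpa using zrefl (Function.update a i A)
  | succ k ih =>
      refine ztrans ih ?_
      have := zadd' a i j h (A + (k : ℤ) • a j)
      have he : a j + (A + (k : ℤ) • a j) = A + ((k : ℤ) + 1) • a j := by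
        simp [add_smul]; abel
      rwa [he] at this
  | pred k ih =>
      refine ztrans ih ?_
      have := zsub' a i j h (A + (-(k : ℤ)) • a j)
      have he : A + (-(k : ℤ)) • a j - a j = A + (-(k : ℤ) - 1) • a j := by
        simp [sub_smul]; abel
      rwa [he] at this

lemma zstep_span {a b : Fin n → Fin n → ℤ} (h : ZStep a b)
    (htop : Submodule.span ℤ (Set.range a) = ⊤) :
    Submodule.span ℤ (Set.range b) = ⊤ := by
  have hsub : Set.range a ⊆ (Submodule.span ℤ (Set.range b) : Set (Fin n → ℤ)) := by
    obtain ⟨i, hcase⟩ := h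
    rcases hcase with ⟨j, hji, rfl⟩ | rfl
    · rintro x ⟨l, rfl⟩
      by_cases hl : l = i
      · subst hl
        have h1 : Function.update a l (a j + a l) l - Function.update a l (a j + a l) j
            = a l := by
          rw [Function.update_self, Function.update_of_ne hji]; abel
        have m := Submodule.sub_mem (Submodule.span ℤ
            (Set.range (Function.update a l (a j + a l))))
          (Submodule.subset_span ⟨l, rfl⟩) (Submodule.subset_span ⟨j, rfl⟩)
        rwa [h1] at m
      · have m : Function.update a i (a j + a i) l ∈ Submodule.span ℤ
            (Set.range (Function.update a i (a j + a i))) := Submodule.subset_span ⟨l, rfl⟩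
        rwa [Function.update_of_ne hl] at m
    · rintro x ⟨l, rfl⟩
      by_cases hl : l = i
      · subst hl
        have h1 : -(Function.update a l (-a l) l) = a l := by
          rw [Function.update_self]; abel
        have m := Submodule.neg_mem (Submodule.span ℤ
            (Set.range (Function.update a l (-a l))))
          (Submodule.subset_span ⟨l, rfl⟩)
        rwa [h1] at m
      · have m : Function.update a i (-a i) l ∈ Submodule.span ℤ
            (Set.range (Function.update a i (-a i))) := Submodule.subset_span ⟨l, rfl⟩
        rwa [Function.update_of_ne hl] at m
  rw [eq_top_iff, ← htop]
  exact Submodule.span_le.mpr hsub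

lemma zequiv_span {a b : Fin n → Fin n → ℤ} (h : ZEquiv a b)
    (htop : Submodule.span ℤ (Set.range a) = ⊤) :
    Submodule.span ℤ (Set.range b) = ⊤ := by
  induction h with
  | refl => exact htop
  | tail _ hbc ih => exact zstep_span hbc ih


def Inv (k : ℕ) (a : Fin n → Fin n → ℤ) : Prop :=
  ∀ j l : Fin n, l.val < k → a j l = (if j = l then 1 else 0)

lemma zsub_base (a : Fin n → Fin n → ℤ) (i j : Fin n) (h : j ≠ i) :
    ZEquiv a (Function.update a i (a i - a j)) := by
  have := zsub' a i j h (a i)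
  rwa [Function.update_eq_self] at this

lemma zsmul_base (a : Fin n → Fin n → ℤ) (i j : Fin n) (h : j ≠ i) (c : ℤ) :
    ZEquiv a (Function.update a i (a i + c • a j)) := by
  have := zsmul' a i j h c (a i)
  rwa [Function.update_eq_self] at this

/-- clearing the k-th column using the pivot 1 at row κ = ⟨k, hk⟩ -/
lemma clearcol (k : ℕ) (hk : k < n) :
    ∀ T : ℕ, ∀ b : Fin n → Fin n → ℤ,
    (∑ j ∈ Finset.univ.erase (⟨k, hk⟩ : Fin n), (b j ⟨k, hk⟩).natAbs) ≤ T →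
    Submodule.span ℤ (Set.range b) = ⊤ → Inv k b → b ⟨k, hk⟩ ⟨k, hk⟩ = 1 →
    ∃ a', ZEquiv b a' ∧ Submodule.span ℤ (Set.range a') = ⊤ ∧ Inv (k + 1) a' := by
  set κ : Fin n := ⟨k, hk⟩ with hκ
  intro T
  induction T with
  | zero =>
      intro b hT htop hinv hpiv
      refine ⟨b, zrefl b, htop, ?_⟩
      intro j l hl
      rcases Nat.lt_succ_iff_lt_or_eq.mp hl with hl' | hl'
      · exact hinv j l hl'
      · have hlκ : l = κ := Fin.ext hl'
        subst hlκ
        by_cases hjκ : j = κ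
        · subst hjκ; simpa using hpiv
        · have h0 : (b j κ).natAbs = 0 := by
            have := Nat.le_zero.mp hT
            have hmem : j ∈ Finset.univ.erase κ := Finset.mem_erase.mpr ⟨hjκ, Finset.mem_univ j⟩
            exact (Finset.sum_eq_zero_iff.mp this) j hmem
          have : b j κ = 0 := Int.natAbs_eq_zero.mp h0
          simpa [hjκ] using this
  | succ T ih =>
      intro b hT htop hinv hpiv
      by_cases hzero : ∀ j ∈ Finset.univ.erase κ, b j κ = 0
      · -- already clear
        refine ⟨b, zrefl b, htop, ?_⟩
        intro j l hl
        rcases Nat.lt_succ_iff_lt_or_eq.mp hl with hl' | hl'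
        · exact hinv j l hl'
        · have hlκ : l = κ := Fin.ext hl'
          subst hlκ
          by_cases hjκ : j = κ
          · subst hjκ; simpa using hpiv
          · have := hzero j (Finset.mem_erase.mpr ⟨hjκ, Finset.mem_univ j⟩)
            simpa [hjκ] using this
      · push_neg at hzero
        obtain ⟨j₁, hj₁mem, hj₁⟩ := hzero
        have hj₁κ : j₁ ≠ κ := (Finset.mem_erase.mp hj₁mem).1
        set b' := Function.update b j₁ (b j₁ + (-(b j₁ κ)) • b κ) with hb'
        have hstep : ZEquiv b b' := zsmul_base b j₁ κ (Ne.symm hj₁κ) (-(b j₁ κ))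
        have htop' := zequiv_span hstep htop
        have hval : b' j₁ κ = 0 := by
          rw [hb', Function.update_self]
          simp [hpiv]
        have hother : ∀ j, j ≠ j₁ → b' j = b j := by
          intro j hj; rw [hb', Function.update_of_ne hj]
        have hinv' : Inv k b' := by
          intro j l hl
          by_cases hj : j = j₁
          · subst hj
            rw [hb', Function.update_self]
            have h1 : b κ l = 0 := by
              have := hinv κ l hl
              have hκl : κ ≠ l := by
                intro hcon; rw [← hcon] at hl; simp [hκ] at hl
              simpa [hκl] using this
            simp [Pi.add_apply, h1, hinv j l hl]
          · rw [hother j hj]; exact hinv j l hl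
        have hpiv' : b' κ κ = 1 := by
          rw [hother κ (Ne.symm hj₁κ)]; exact hpiv
        have hmeas : (∑ j ∈ Finset.univ.erase κ, (b' j κ).natAbs) ≤ T := by
          have hd1 := Finset.sum_eq_sum_sdiff_singleton_add hj₁mem
            (fun j => (b' j κ).natAbs)
          have hd2 := Finset.sum_eq_sum_sdiff_singleton_add hj₁mem
            (fun j => (b j κ).natAbs)
          have hsame : (∑ j ∈ (Finset.univ.erase κ) \ {j₁}, (b' j κ).natAbs)
              = ∑ j ∈ (Finset.univ.erase κ) \ {j₁}, (b j κ).natAbs := by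
            refine Finset.sum_congr rfl ?_
            intro j hj
            rw [hother j (Finset.notMem_singleton.mp (Finset.mem_sdiff.mp hj).2)]
          have hpos : 1 ≤ (b j₁ κ).natAbs := Int.natAbs_pos.mpr hj₁
          rw [hd2] at hT
          rw [hd1, hsame, hval]
          simp only [Int.natAbs_zero, add_zero]
          omega
        obtain ⟨a', hch, htop'', hinv''⟩ := ih b' hmeas htop' hinv' hpiv'
        exact ⟨a', ztrans hstep hch, htop'', hinv''⟩

lemma exists_rep (a : Fin n → Fin n → ℤ) (htop : Submodule.span ℤ (Set.range a) = ⊤)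
    (x : Fin n → ℤ) : ∃ c : Fin n → ℤ, (∑ j, c j • a j) = x := by
  have hx : x ∈ Submodule.span ℤ (Set.range a) := by rw [htop]; trivial
  rw [Finsupp.mem_span_range_iff_exists_finsupp] at hx
  obtain ⟨c, hc⟩ := hx
  refine ⟨fun j => c j, ?_⟩
  rw [Finsupp.sum_fintype] at hc
  · exact hc
  · intro i; simp

lemma col_analysis (k : ℕ) (hk : k < n) (a : Fin n → Fin n → ℤ)
    (htop : Submodule.span ℤ (Set.range a) = ⊤) (hinv : Inv k a) :
    (∃ x y : Fin n, k ≤ x.val ∧ k ≤ y.val ∧ x ≠ y ∧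
      a x ⟨k, hk⟩ ≠ 0 ∧ a y ⟨k, hk⟩ ≠ 0) ∨
    (∃ j₀ : Fin n, k ≤ j₀.val ∧ (a j₀ ⟨k, hk⟩ = 1 ∨ a j₀ ⟨k, hk⟩ = -1) ∧
      ∀ j, k ≤ j.val → j ≠ j₀ → a j ⟨k, hk⟩ = 0) := by
  set κ : Fin n := ⟨k, hk⟩ with hκ
  obtain ⟨c, hc⟩ := exists_rep a htop ((Pi.single κ 1 : Fin n → ℤ))
  have hcoord : ∀ l : Fin n, (∑ j, c j * a j l) = (Pi.single κ 1 : Fin n → ℤ) l := by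
    intro l
    have h1 := congrFun hc l
    simpa using h1
  have hczero : ∀ l : Fin n, l.val < k → c l = 0 := by
    intro l hl
    have h1 := hcoord l
    have h2 : ∀ j : Fin n, c j * a j l = if j = l then c l else 0 := by
      intro j
      rw [hinv j l hl]
      by_cases hjl : j = l
      · subst hjl; simp
      · simp [hjl]
    rw [Finset.sum_congr rfl (fun j _ => h2 j)] at h1
    rw [Finset.sum_ite_eq' Finset.univ l (fun _ => c l)] at h1
    have hlκ : l ≠ κ := by
      intro hcon
      rw [hcon] at hl
      simp [hκ] at hl
    simpa [hlκ] using h1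
  have hsum1 : (∑ j, c j * a j κ) = 1 := by
    have h1 := hcoord κ
    simpa using h1
  set P : Finset (Fin n) :=
    Finset.univ.filter (fun j : Fin n => k ≤ j.val ∧ a j κ ≠ 0) with hP
  have hsum3 : (∑ j ∈ P, c j * a j κ) = 1 := by
    rw [← hsum1]
    refine Finset.sum_filter_of_ne ?_
    intro x _ hx
    constructor
    · by_contra hxk
      push_neg at hxk
      rw [hczero x hxk] at hx
      simp at hx
    · intro h0
      rw [h0] at hx
      simp at hx
  by_cases hcard : 1 < P.card
  · left
    obtain ⟨x, hx, y, hy, hxy⟩ := Finset.one_lt_card.mp hcard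
    have hx' := Finset.mem_filter.mp hx
    have hy' := Finset.mem_filter.mp hy
    exact ⟨x, y, hx'.2.1, hy'.2.1, hxy, hx'.2.2, hy'.2.2⟩
  · right
    push_neg at hcard
    have hne : P.Nonempty := by
      by_contra hemp
      rw [Finset.not_nonempty_iff_eq_empty] at hemp
      rw [hemp, Finset.sum_empty] at hsum3
      exact one_ne_zero hsum3.symm
    obtain ⟨j₀, hj₀⟩ := hne
    have huniq : ∀ x ∈ P, x = j₀ := by
      intro x hx
      exact Finset.card_le_one.mp hcard x hx j₀ hj₀
    have hPeq : P = {j₀} := by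
      apply Finset.eq_singleton_iff_unique_mem.mpr
      exact ⟨hj₀, huniq⟩
    rw [hPeq, Finset.sum_singleton] at hsum3
    have hj₀' := Finset.mem_filter.mp hj₀
    have hunit : IsUnit (a j₀ κ) := IsUnit.of_mul_eq_one _ (by rw [mul_comm] at hsum3; exact hsum3)
    refine ⟨j₀, hj₀'.2.1, Int.isUnit_iff.mp hunit, ?_⟩
    intro j hjk hjj₀
    by_contra h0
    have : j ∈ P := Finset.mem_filter.mpr ⟨Finset.mem_univ j, hjk, h0⟩
    exact hjj₀ (huniq j this)

lemma colstep (k : ℕ) (hk : k < n) :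
    ∀ S : ℕ, ∀ a : Fin n → Fin n → ℤ,
    (∑ j ∈ Finset.univ.filter (fun j : Fin n => k ≤ j.val), (a j ⟨k, hk⟩).natAbs) ≤ S →
    Submodule.span ℤ (Set.range a) = ⊤ → Inv k a →
    ∃ a', ZEquiv a a' ∧ Submodule.span ℤ (Set.range a') = ⊤ ∧ Inv (k + 1) a' := by
  set κ : Fin n := ⟨k, hk⟩ with hκ
  intro S
  induction S using Nat.strong_induction_on with
  | _ S ih =>
  intro a hS htop hinv
  rcases col_analysis k hk a htop hinv with hA | ⟨j₀, hj₀k, hj₀pm, hrest⟩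
  · -- Euclid step
    have hred : ∀ x y : Fin n, k ≤ x.val → k ≤ y.val → x ≠ y →
        a x κ ≠ 0 → a y κ ≠ 0 → (a y κ).natAbs ≤ (a x κ).natAbs →
        ∃ a', ZEquiv a a' ∧ Submodule.span ℤ (Set.range a') = ⊤ ∧ Inv (k + 1) a' := by
      intro x y hxk hyk hxy hx0 hy0 hle
      have hyx : y ≠ x := Ne.symm (Ne.symm hxy).symm
      -- choose the operation that strictly decreases |entry|
      have hdich : ((a x κ - a y κ).natAbs < (a x κ).natAbs) ∨
          ((a y κ + a x κ).natAbs < (a x κ).natAbs) := by omega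
      obtain ⟨R, hRchain, hRκ, hRl⟩ :
          ∃ R : Fin n → ℤ, ZEquiv a (Function.update a x R) ∧
            (R κ).natAbs < (a x κ).natAbs ∧
            (∀ l : Fin n, l.val < k → R l = a x l + a y l ∨ R l = a x l - a y l) := by
        rcases hdich with hlt | hlt
        · exact ⟨a x - a y, zsub_base a x y hyx, by simpa using hlt,
            fun l _ => Or.inr rfl⟩
        · exact ⟨a y + a x, zadd a x y hyx, by simpa using hlt,
            fun l _ => Or.inl (by simp [add_comm])⟩
      set a1 := Function.update a x R with ha1
      have htop1 := zequiv_span hRchain htop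
      have hinv1 : Inv k a1 := by
        intro j l hl
        by_cases hj : j = x
        · subst hj
          rw [ha1, Function.update_self]
          have hxl : j ≠ l := by
            intro hcon; rw [hcon] at hxk; omega
          have hyl : y ≠ l := by
            intro hcon; rw [hcon] at hyk; omega
          have h1 : a j l = 0 := by simpa [hxl] using hinv j l hl
          have h2 : a y l = 0 := by simpa [hyl] using hinv y l hl
          rcases hRl l hl with h3 | h3 <;> simp [h3, h1, h2, hxl]
        · rw [ha1, Function.update_of_ne hj]
          exact hinv j l hl
      -- measure decreases
      have hxQ : x ∈ Finset.univ.filter (fun j : Fin n => k ≤ j.val) :=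
        Finset.mem_filter.mpr ⟨Finset.mem_univ x, hxk⟩
      have hd1 := Finset.sum_eq_sum_sdiff_singleton_add hxQ
        (fun j => (a1 j κ).natAbs)
      have hd2 := Finset.sum_eq_sum_sdiff_singleton_add hxQ
        (fun j => (a j κ).natAbs)
      have hsame : (∑ j ∈ (Finset.univ.filter (fun j : Fin n => k ≤ j.val)) \ {x},
          (a1 j κ).natAbs) = ∑ j ∈ (Finset.univ.filter (fun j : Fin n => k ≤ j.val)) \ {x},
          (a j κ).natAbs := by
        refine Finset.sum_congr rfl ?_
        intro j hj
        rw [ha1, Function.update_of_ne (Finset.notMem_singleton.mp (Finset.mem_sdiff.mp hj).2)]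
      have ha1x : a1 x κ = R κ := by rw [ha1, Function.update_self]
      have hmeas : (∑ j ∈ Finset.univ.filter (fun j : Fin n => k ≤ j.val),
          (a1 j κ).natAbs) < S := by
        rw [hd2] at hS
        rw [hd1, hsame, ha1x]
        omega
      obtain ⟨a', h1, h2, h3⟩ := ih _ hmeas a1 le_rfl htop1 hinv1
      exact ⟨a', ztrans hRchain h1, h2, h3⟩
    obtain ⟨x, y, hxk, hyk, hxy, hx0, hy0⟩ := hA
    rcases le_total ((a y κ).natAbs) ((a x κ).natAbs) with hle | hle
    · exact hred x y hxk hyk hxy hx0 hy0 hle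
    · exact hred y x hyk hxk (Ne.symm hxy) hy0 hx0 hle
  · -- pivot case
    have hκk : k ≤ κ.val := le_of_eq rfl
    -- step 1 : get a nonzero pivot at row κ
    obtain ⟨a1, hch1, htop1, hinv1, hpm1⟩ :
        ∃ a1, ZEquiv a a1 ∧ Submodule.span ℤ (Set.range a1) = ⊤ ∧ Inv k a1 ∧
          (a1 κ κ = 1 ∨ a1 κ κ = -1) := by
      by_cases hj₀κ : j₀ = κ
      · subst hj₀κ
        exact ⟨a, zrefl a, htop, hinv, hj₀pm⟩
      · have hκj₀ : κ ≠ j₀ := Ne.symm hj₀κ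
        have hzκ : a κ κ = 0 := hrest κ hκk hκj₀
        refine ⟨Function.update a κ (a j₀ + a κ), zadd a κ j₀ hj₀κ,
          zequiv_span (zadd a κ j₀ hj₀κ) htop, ?_, ?_⟩
        · intro j l hl
          by_cases hj : j = κ
          · subst hj
            rw [Function.update_self]
            have hj₀l : j₀ ≠ l := by
              intro hcon; rw [hcon] at hj₀k; omega
            have hjl : κ ≠ l := by
              intro hcon; rw [hcon] at hκk; omega
            have h1 : a j₀ l = 0 := by simpa [hj₀l] using hinv j₀ l hl
            have h2 : a κ l = 0 := by simpa [hjl] using hinv κ l hl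
            simp [h1, h2, hjl]
          · rw [Function.update_of_ne hj]
            exact hinv j l hl
        · rw [Function.update_self]
          simp only [Pi.add_apply, hzκ, add_zero]
          exact hj₀pm
    -- step 2 : make the pivot 1
    obtain ⟨a2, hch2, htop2, hinv2, hpiv2⟩ :
        ∃ a2, ZEquiv a a2 ∧ Submodule.span ℤ (Set.range a2) = ⊤ ∧ Inv k a2 ∧ a2 κ κ = 1 := by
      rcases hpm1 with h1 | h1
      · exact ⟨a1, hch1, htop1, hinv1, h1⟩
      · refine ⟨Function.update a1 κ (-a1 κ), ztrans hch1 (zneg a1 κ),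
          zequiv_span (zneg a1 κ) htop1, ?_, ?_⟩
        · intro j l hl
          by_cases hj : j = κ
          · subst hj
            rw [Function.update_self]
            have hjl : κ ≠ l := by
              intro hcon; rw [hcon] at hκk; omega
            have h2 : a1 κ l = 0 := by simpa [hjl] using hinv1 κ l hl
            simp [h2, hjl]
          · rw [Function.update_of_ne hj]
            exact hinv1 j l hl
        · rw [Function.update_self]
          simp [h1]
    obtain ⟨a', h1, h2, h3⟩ := clearcol k hk _ a2 le_rfl htop2 hinv2 hpiv2
    exact ⟨a', ztrans hch2 h1, h2, h3⟩

lemma zreduce_aux : ∀ (t k : ℕ), n ≤ k + t → ∀ a : Fin n → Fin n → ℤ,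
    Submodule.span ℤ (Set.range a) = ⊤ → Inv k a →
    ZEquiv a (fun i => (Pi.single i 1 : Fin n → ℤ)) := by
  intro t
  induction t with
  | zero =>
      intro k hkt a _ hinv
      have : a = fun i => (Pi.single i 1 : Fin n → ℤ) := by
        funext j l
        have hl : l.val < k := lt_of_lt_of_le l.isLt (by omega)
        rw [hinv j l hl, Pi.single_apply]
        by_cases hjl : j = l <;> simp [hjl, Ne.symm]
      rw [this]; exact zrefl _
  | succ t iht =>
      intro k hkt a htop hinv
      by_cases hk : k < n
      · obtain ⟨a', h1, h2, h3⟩ := colstep k hk _ a le_rfl htop hinv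
        exact ztrans h1 (iht (k + 1) (by omega) a' h2 h3)
      · have : a = fun i => (Pi.single i 1 : Fin n → ℤ) := by
          funext j l
          have hl : l.val < k := lt_of_lt_of_le l.isLt (by omega)
          rw [hinv j l hl, Pi.single_apply]
          by_cases hjl : j = l <;> simp [hjl, Ne.symm]
        rw [this]; exact zrefl _

theorem zreduce (a : Fin n → Fin n → ℤ) (htop : Submodule.span ℤ (Set.range a) = ⊤) :
    ZEquiv a (fun i => (Pi.single i 1 : Fin n → ℤ)) :=
  zreduce_aux n 0 (by omega) a htop (fun _ l hl => absurd hl (Nat.not_lt_zero _))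

section Trans
variable {G : Type*} [Group G]

/-- the abelianization morphism of the free group on `Fin n` -/
def Emap (n : ℕ) : FreeGroup (Fin n) →* Multiplicative (Fin n → ℤ) :=
  FreeGroup.lift (fun i => Multiplicative.ofAdd (Pi.single i 1))

def rows (v : Fin n → FreeGroup (Fin n)) : Fin n → Fin n → ℤ :=
  fun i => Multiplicative.toAdd (Emap n (v i))

lemma zstep_lift {a b : Fin n → Fin n → ℤ} (h : ZStep a b)
    (v : Fin n → FreeGroup (Fin n)) (hva : rows v = a) :
    ∃ v', ACEquiv v v' ∧ rows v' = b := by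
  obtain ⟨i, hcase⟩ := h
  rcases hcase with ⟨j, hji, rfl⟩ | rfl
  · refine ⟨Function.update v i (v j * v i),
      Relation.ReflTransGen.single (step_to_update v i _ (Or.inl ⟨j, hji, rfl⟩)), ?_⟩
    funext l
    by_cases hl : l = i
    · subst hl
      rw [Function.update_self]
      show Multiplicative.toAdd (Emap n (Function.update v l (v j * v l) l)) = _
      rw [Function.update_self, map_mul]
      rw [← hva]
      rfl
    · rw [Function.update_of_ne hl]
      show Multiplicative.toAdd (Emap n (Function.update v i (v j * v i) l)) = a l
      rw [Function.update_of_ne hl, ← hva]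
      rfl
  · refine ⟨Function.update v i (v i)⁻¹,
      Relation.ReflTransGen.single (step_to_update v i _ (Or.inr (Or.inl rfl))), ?_⟩
    funext l
    by_cases hl : l = i
    · subst hl
      rw [Function.update_self]
      show Multiplicative.toAdd (Emap n (Function.update v l (v l)⁻¹ l)) = _
      rw [Function.update_self, map_inv]
      rw [← hva]
      rfl
    · rw [Function.update_of_ne hl]
      show Multiplicative.toAdd (Emap n (Function.update v i (v i)⁻¹ l)) = a l
      rw [Function.update_of_ne hl, ← hva]
      rfl

lemma zequiv_lift {a b : Fin n → Fin n → ℤ} (h : ZEquiv a b) :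
    ∀ v : Fin n → FreeGroup (Fin n), rows v = a → ∃ v', ACEquiv v v' ∧ rows v' = b := by
  induction h with
  | refl => exact fun v hv => ⟨v, Relation.ReflTransGen.refl, hv⟩
  | tail _ hbc ih =>
      intro v hv
      obtain ⟨v₁, h1, h2⟩ := ih v hv
      obtain ⟨v₂, h3, h4⟩ := zstep_lift hbc v₁ h2
      exact ⟨v₂, equiv_trans h1 h3, h4⟩




lemma span_top_of_normalClosure (v : Fin n → FreeGroup (Fin n))
    (hv : Subgroup.normalClosure (Set.range v) = ⊤) :
    Submodule.span ℤ (Set.range (rows v)) = ⊤ := by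
  set S : Submodule ℤ (Fin n → ℤ) := Submodule.span ℤ (Set.range (rows v)) with hS
  set Ssub : Subgroup (Multiplicative (Fin n → ℤ)) :=
    AddSubgroup.toSubgroup S.toAddSubgroup with hSsub
  set T : Subgroup (FreeGroup (Fin n)) := Subgroup.comap (Emap n) Ssub with hT
  haveI hTn : T.Normal := by
    constructor
    intro x hx g
    have hx' : Emap n x ∈ Ssub := hx
    show Emap n (g * x * g⁻¹) ∈ Ssub
    have he : Emap n (g * x * g⁻¹) = Emap n x := by
      rw [map_mul, map_mul, map_inv, mul_comm (Emap n g) (Emap n x)]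
      exact mul_inv_cancel_right _ _
    rw [he]; exact hx'
  have hrange : Set.range v ⊆ (T : Set (FreeGroup (Fin n))) := by
    rintro x ⟨i, rfl⟩
    show Emap n (v i) ∈ Ssub
    show Multiplicative.toAdd (Emap n (v i)) ∈ S.toAddSubgroup
    rw [Submodule.mem_toAddSubgroup]
    exact Submodule.subset_span ⟨i, rfl⟩
  have hTtop : ∀ w : FreeGroup (Fin n), w ∈ T := by
    intro w
    have h1 : Subgroup.normalClosure (Set.range v) ≤ T :=
      Subgroup.normalClosure_le_normal hrange
    rw [hv] at h1
    exact h1 trivial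
  have hsingle : ∀ k : Fin n, (Pi.single k 1 : Fin n → ℤ) ∈ S := by
    intro k
    have h1 := hTtop (FreeGroup.of k)
    have h2 : Emap n (FreeGroup.of k) = Multiplicative.ofAdd (Pi.single k 1) := by
      simp [Emap]
    have h3 : Emap n (FreeGroup.of k) ∈ Ssub := h1
    rw [h2] at h3
    have h4 : Multiplicative.toAdd (Multiplicative.ofAdd (Pi.single k 1 : Fin n → ℤ))
        ∈ S.toAddSubgroup := h3
    rw [Submodule.mem_toAddSubgroup] at h4
    simpa using h4
  rw [eq_top_iff]
  intro f _
  have hf := pi_eq_sum_univ f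
  rw [hf]
  refine Submodule.sum_mem _ ?_
  intro k _
  refine Submodule.smul_mem _ _ ?_
  have : (fun j => if k = j then (1 : ℤ) else 0) = (Pi.single k 1 : Fin n → ℤ) := by
    funext j
    rw [Pi.single_apply]
    by_cases h : k = j
    · simp [h]
    · simp [h, Ne.symm h]
  rw [this]
  exact hsingle k

lemma abelian_case (π : FreeGroup (Fin n) →* G)
    (hcomm : ∀ x y : G, x * y = y * x)
    (v : Fin n → FreeGroup (Fin n))
    (hv : Subgroup.normalClosure (Set.range v) = ⊤) :
    ACEquiv (fun i => π (v i)) (fun i => π (FreeGroup.of i)) := by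
  have htop := span_top_of_normalClosure v hv
  obtain ⟨v', hvv', hrows⟩ := zequiv_lift (zreduce (rows v) htop) v rfl
  refine equiv_trans (equiv_map π hvv') ?_
  have hval : ∀ i, π (v' i) = π (FreeGroup.of i) := by
    -- both factor through the abelianization
    letI : CommGroup G := { (inferInstance : Group G) with mul_comm := hcomm }
    set ghat : Multiplicative (Fin n → ℤ) →* G :=
      { toFun := fun f => ∏ k, π (FreeGroup.of k) ^ (Multiplicative.toAdd f k)
        map_one' := by simp
        map_mul' := by
          intro f g
          have : ∀ k, π (FreeGroup.of k) ^ (Multiplicative.toAdd (f * g) k)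
              = π (FreeGroup.of k) ^ (Multiplicative.toAdd f k) *
                π (FreeGroup.of k) ^ (Multiplicative.toAdd g k) := by
            intro k
            rw [← zpow_add]
            rfl
          show (∏ k, π (FreeGroup.of k) ^ (Multiplicative.toAdd (f * g) k))
              = (∏ k, π (FreeGroup.of k) ^ (Multiplicative.toAdd f k)) *
                ∏ k, π (FreeGroup.of k) ^ (Multiplicative.toAdd g k)
          rw [Finset.prod_congr rfl (fun k _ => this k), Finset.prod_mul_distrib] }
      with hghat
    have hgen : ∀ k : Fin n, ghat (Multiplicative.ofAdd (Pi.single k 1)) = π (FreeGroup.of k) := by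
      intro k
      show (∏ l, π (FreeGroup.of l) ^ (Multiplicative.toAdd (Multiplicative.ofAdd
        ((Pi.single k 1 : Fin n → ℤ))) l)) = π (FreeGroup.of k)
      rw [Finset.prod_eq_single k]
      · simp
      · intro l _ hlk
        have : (Pi.single k 1 : Fin n → ℤ) l = 0 := Pi.single_eq_of_ne hlk 1
        simp [this]
      · intro h; exact absurd (Finset.mem_univ k) h
    have hfact : π = MonoidHom.comp ghat (Emap n) := by
      refine (FreeGroup.ext_hom _ _ ?_).symm
      intro a
      show ghat (Emap n (FreeGroup.of a)) = π (FreeGroup.of a)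
      have h2 : Emap n (FreeGroup.of a) = Multiplicative.ofAdd (Pi.single a 1) := by
        simp [Emap]
      rw [h2]
      exact hgen a
    intro i
    have h5 : Emap n (v' i) = Multiplicative.ofAdd (Pi.single i 1) := by
      have := congrFun hrows i
      have h6 : Multiplicative.toAdd (Emap n (v' i)) = (Pi.single i 1 : Fin n → ℤ) := this
      have := congrArg Multiplicative.ofAdd h6
      simpa using this
    rw [hfact]
    show ghat (Emap n (v' i)) = ghat (Emap n (FreeGroup.of i))
    have h7 : Emap n (FreeGroup.of i) = Multiplicative.ofAdd (Pi.single i 1) := by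
      simp [Emap]
    rw [h5, h7]
  have : (fun i => π (v' i)) = (fun i => π (FreeGroup.of i)) := funext hval
  rw [this]
  exact Relation.ReflTransGen.refl

end Trans

/-- iterate single-slot absorption over all slots -/
lemma absorb_all {G : Type*} [Group G] (b : Fin n → G) (N : Subgroup G)
    (SS : ∀ (m : Fin n → G), (∀ j, m j ∈ N) → ∀ i : Fin n,
      ACEquiv (fun j => b j * m j) (Function.update (fun j => b j * m j) i (b i)))
    (m : Fin n → G) (hm : ∀ j, m j ∈ N) :
    ACEquiv (fun j => b j * m j) b := by
  suffices h : ∀ t : ℕ, ∀ m : Fin n → G, (∀ j, m j ∈ N) →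
      (∀ j : Fin n, t ≤ j.val → m j = 1) → ACEquiv (fun j => b j * m j) b by
    exact h n m hm (fun j hj => absurd j.isLt (not_lt.mpr hj))
  intro t
  induction t with
  | zero =>
      intro m hm hclean
      have : (fun j => b j * m j) = b := by
        funext j
        rw [hclean j (Nat.zero_le _), mul_one]
      rw [this]
      exact Relation.ReflTransGen.refl
  | succ t iht =>
      intro m hm hclean
      by_cases ht : t < n
      · set i : Fin n := ⟨t, ht⟩ with hi
        have hstep := SS m hm i
        have hupd : Function.update (fun j => b j * m j) i (b i)
            = fun j => b j * (Function.update m i 1) j := by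
          funext j
          by_cases hj : j = i
          · subst hj
            rw [Function.update_self, Function.update_self, mul_one]
          · rw [Function.update_of_ne hj, Function.update_of_ne hj]
        rw [hupd] at hstep
        refine equiv_trans hstep (iht _ ?_ ?_)
        · intro j
          by_cases hj : j = i
          · subst hj; rw [Function.update_self]; exact N.one_mem
          · rw [Function.update_of_ne hj]; exact hm j
        · intro j hj
          by_cases hj' : j = i
          · subst hj'; rw [Function.update_self]
          · rw [Function.update_of_ne hj']
            refine hclean j ?_
            have : j.val ≠ t := by
              intro hcon
              exact hj' (Fin.ext (by rw [hcon]))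
            omega
      · exact iht m hm (fun j hj => hclean j (by omega))

lemma derived_le_of_le {G : Type*} [Group G] : ∀ {k m : ℕ}, k ≤ m →
    derivedSeries G m ≤ derivedSeries G k := by
  have hstep : ∀ m : ℕ, derivedSeries G (m + 1) ≤ derivedSeries G m := by
    intro m
    rw [derivedSeries_succ]
    refine Subgroup.commutator_le.mpr ?_
    intro g hg h hh
    show g * h * g⁻¹ * h⁻¹ ∈ _
    exact Subgroup.mul_mem _ (Subgroup.mul_mem _ (Subgroup.mul_mem _ hg hh)
      (Subgroup.inv_mem _ hg)) (Subgroup.inv_mem _ hh)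
  intro k m hkm
  induction m with
  | zero => have : k = 0 := Nat.le_zero.mp hkm; subst this; exact le_rfl
  | succ m ih =>
      rcases Nat.lt_succ_iff_lt_or_eq.mp (Nat.lt_succ_of_le hkm) with h | h
      · exact le_trans (hstep m) (ih (by omega))
      · subst h; exact le_rfl

theorem main_aux : ∀ (d : ℕ) {G : Type*} [Group G] [Group.IsSolvable G]
    (π : FreeGroup (Fin n) →* G), Function.Surjective π →
    derivedSeries G d = ⊥ →
    ∀ (v : Fin n → FreeGroup (Fin n)), Subgroup.normalClosure (Set.range v) = ⊤ →
    ACEquiv (fun i => π (v i)) (fun i => π (FreeGroup.of i)) := by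
  intro d
  induction d with
  | zero =>
      intro G _ _ π hπ hd v hv
      have hall : ∀ x : G, x = 1 := by
        intro x
        have h1 : x ∈ derivedSeries G 0 := by rw [derivedSeries_zero]; trivial
        rw [hd] at h1
        exact Subgroup.mem_bot.mp h1
      have : (fun i => π (v i)) = (fun i => π (FreeGroup.of i)) := by
        funext i; rw [hall (π (v i)), hall (π (FreeGroup.of i))]
      rw [this]; exact Relation.ReflTransGen.refl
  | succ d ihd =>
      intro G _ _ π hπ hd v hv
      cases d with
      | zero =>
          -- abelian
          have hcomm : ∀ x y : G, x * y = y * x := by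
            intro x y
            have h1 : ⁅x, y⁆ ∈ derivedSeries G 1 := by
              rw [derivedSeries_one]
              exact Subgroup.commutator_mem_commutator (Subgroup.mem_top _) (Subgroup.mem_top _)
            rw [hd] at h1
            have h2 : ⁅x, y⁆ = 1 := Subgroup.mem_bot.mp h1
            exact commutatorElement_eq_one_iff_commute.mp h2
          exact abelian_case π hcomm v hv
      | succ d' =>
          -- inductive step with N the last nontrivial derived subgroup
          set N : Subgroup G := derivedSeries G (d' + 1) with hN
          haveI hNnorm : N.Normal := derivedSeries_normal G (d' + 1)
          set mkn : G →* G ⧸ N := QuotientGroup.mk' N with hmkn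
          have hkern := QuotientGroup.ker_mk' N
          have hsurjn : Function.Surjective mkn := QuotientGroup.mk'_surjective N
          have hQd : derivedSeries (G ⧸ N) (d' + 1) = ⊥ := by
            have h1 := map_derivedSeries_eq hsurjn (d' + 1)
            rw [← h1, ← hN]
            rw [Subgroup.map_eq_bot_iff, hkern]
          have hcomp : Function.Surjective (mkn.comp π) := hsurjn.comp hπ
          have hIH := ihd (mkn.comp π) hcomp hQd v hv
          have hIH' : ACEquiv (fun i => mkn (π (v i))) (fun i => (mkn.comp π) (FreeGroup.of i)) := hIH
          obtain ⟨u, hu1, hu2⟩ := equiv_lift mkn hsurjn (A := fun i => π (v i)) hIH'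
          set b : Fin n → G := fun i => π (FreeGroup.of i) with hb
          set m : Fin n → G := fun i => (b i)⁻¹ * u i with hm
          have hmN : ∀ i, m i ∈ N := by
            intro i
            rw [← hkern]
            show mkn ((b i)⁻¹ * u i) = 1
            rw [map_mul, map_inv]
            have h3 : mkn (u i) = mkn.comp π (FreeGroup.of i) := congrFun hu2 i
            rw [h3]
            show (mkn (π (FreeGroup.of i)))⁻¹ * (mkn (π (FreeGroup.of i))) = 1
            group
          have hu3 : u = fun j => b j * m j := by
            funext j
            show u j = b j * ((b j)⁻¹ * u j)
            group
          have hgen : ∀ g : G, g ∈ Subgroup.closure (Set.range b) := by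
            intro g
            obtain ⟨w, rfl⟩ := hπ g
            have h4 : w ∈ Subgroup.closure (Set.range (FreeGroup.of : Fin n → FreeGroup (Fin n))) := by
              rw [FreeGroup.closure_range_of]; trivial
            have h5 : π w ∈ Subgroup.map π (Subgroup.closure (Set.range FreeGroup.of)) :=
              ⟨w, h4, rfl⟩
            rw [MonoidHom.map_closure] at h5
            have h6 : (⇑π '' Set.range FreeGroup.of) = Set.range b := by
              rw [← Set.range_comp]; rfl
            rwa [h6] at h5
          have habs : ACEquiv (fun j => b j * m j) b := by
            cases d' with
            | zero =>
                refine absorb_all b (commutator G) ?_ m ?_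
                · intro m' hm' i
                  exact ss_metab hd b hgen m' hm' i
                · intro j
                  have := hmN j
                  rwa [hN, derivedSeries_one] at this
            | succ d'' =>
                refine absorb_all b N ?_ m hmN
                intro m' hm' i
                refine ss_direct N ?_ ?_ b hgen m' hm' i
                · intro a ha c hc
                  have h7 : ⁅a, c⁆ ∈ derivedSeries G (d'' + 1 + 1 + 1) := by
                    rw [derivedSeries_succ]
                    exact Subgroup.commutator_mem_commutator (by rwa [hN] at ha) (by rwa [hN] at hc)
                  rw [hd] at h7
                  have h8 : ⁅a, c⁆ = 1 := Subgroup.mem_bot.mp h7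
                  exact commutatorElement_eq_one_iff_commute.mp h8
                · have h9 : (⁅(⁅(⊤ : Subgroup G), (⊤ : Subgroup G)⁆),
                      (⁅(⊤ : Subgroup G), (⊤ : Subgroup G)⁆)⁆) = derivedSeries G 2 := by
                    rw [derivedSeries_succ, derivedSeries_one, commutator_def]
                  rw [h9, hN]
                  exact derived_le_of_le (by omega)
          rw [← hu3] at habs
          exact equiv_trans hu1 habs

end ACWork

/-- if `π : F_n → G` is a surjection of the free group of rank `n ≥ 1` onto an
solvable group `G`, then the images under `π` of any two normally generating `n`-vectors of
`F_n` are AC-equivalent in `G`. -/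
theorem images_of_normally_generating_vectors_ACEquiv_of_solvable
    {n : ℕ} (hn : 1 ≤ n) {G : Type*} [Group G] [Group.IsSolvable G]
    (π : FreeGroup (Fin n) →* G) (hπ : Function.Surjective π)
    (v w : Fin n → FreeGroup (Fin n))
    (hv : Subgroup.normalClosure (Set.range v) = ⊤)
    (hw : Subgroup.normalClosure (Set.range w) = ⊤) :
    ACEquiv (fun i => π (v i)) (fun i => π (w i)) := by
  obtain ⟨d, hd⟩ := (inferInstance : Group.IsSolvable G).solvable
  exact ACWork.equiv_trans (ACWork.main_aux d π hπ hd v hv)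
    (ACWork.equiv_symm (ACWork.main_aux d π hπ hd w hw))
end

section
/- Let G be a finitely generated group and let W(G) be its N-Frattini subgroup. Suppose that for every n > w(G/W(G)), any two normally generating n-vectors of G/W(G) are AC-equivalent. Then for every n > w(G), any two normally generating n-vectors of G are AC-equivalent. -/
/-- A vector normally generates `G` if the normal closure of its components is `G`. -/
def NormallyGenerates {G : Type*} [Group G] {n : ℕ} (v : Fin n → G) : Prop :=
  Subgroup.normalClosure (Set.range v) = ⊤

/-- The weight `w(G)`: the minimal number of elements normally generating `G`. -/
noncomputable def weight (G : Type*) [Group G] : ℕ :=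
  sInf {n : ℕ | ∃ v : Fin n → G, NormallyGenerates v}

/-- A maximal normal subgroup. -/
def IsMaximalNormal {G : Type*} [Group G] (N : Subgroup G) : Prop :=
  N.Normal ∧ N ≠ ⊤ ∧ ∀ M : Subgroup G, M.Normal → N < M → M = ⊤

/-- The N-Frattini subgroup `W(G)`. -/
def NFrattini (G : Type*) [Group G] : Subgroup G :=
  sInf {N : Subgroup G | IsMaximalNormal N}

instance NFrattini.normal (G : Type*) [Group G] : (NFrattini G).Normal := by
  constructor
  intro x hx g
  rw [NFrattini, Subgroup.mem_sInf] at hx ⊢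
  intro N hN
  exact hN.1.conj_mem x (hx N hN) g


section Lemmas
variable {G : Type*} [Group G] {n : ℕ}

lemma acequiv_of_eq {v w : Fin n → G} (h : v = w) : ACEquiv v w := h ▸ Relation.ReflTransGen.refl

lemma step_inv' (v : Fin n → G) (i : Fin n) (a : G) :
    ACStep (Function.update v i a) (Function.update v i a⁻¹) :=
  ⟨i, fun j hj => by simp [Function.update_of_ne hj], Or.inr (Or.inl (by simp))⟩

lemma step_conj' (v : Fin n → G) (i : Fin n) (a g : G) :
    ACStep (Function.update v i a) (Function.update v i (g⁻¹ * a * g)) :=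
  ⟨i, fun j hj => by simp [Function.update_of_ne hj], Or.inr (Or.inr ⟨g, by simp⟩)⟩

lemma step_mul' (v : Fin n → G) {i j : Fin n} (hj : j ≠ i) (a : G) :
    ACStep (Function.update v i a) (Function.update v i (v j * a)) :=
  ⟨i, fun k hk => by simp [Function.update_of_ne hk],
    Or.inl ⟨j, hj, by simp [Function.update_of_ne hj]⟩⟩

lemma acstep_symm {v w : Fin n → G} (h : ACStep v w) : ACEquiv w v := by
  obtain ⟨i, hoff, hc⟩ := h
  have hv : v = Function.update w i (v i) := by
    funext j
    by_cases hj : j = i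
    · subst hj; simp
    · simp [Function.update_of_ne hj, hoff j hj]
  have hw : w = Function.update w i (w i) := by simp
  rcases hc with ⟨j, hji, hE⟩ | hE | ⟨g, hE⟩
  · have e1 := step_inv' w i (w i)
    have e2 := step_mul' (v := w) hji ((w i)⁻¹)
    have e3 := step_inv' w i (w j * (w i)⁻¹)
    have e4 := step_conj' w i ((w j * (w i)⁻¹)⁻¹) (w j)
    have hval : (w j)⁻¹ * (w j * (w i)⁻¹)⁻¹ * (w j) = v i := by
      rw [hoff j hji, hE]; group
    refine (acequiv_of_eq hw).trans
      ((Relation.ReflTransGen.head e1 (Relation.ReflTransGen.head e2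
        (Relation.ReflTransGen.head e3 (Relation.ReflTransGen.single e4)))).trans
        (acequiv_of_eq ?_))
    rw [hv]; exact congrArg (Function.update w i) hval
  · have e1 := step_inv' w i (w i)
    have hval : (w i)⁻¹ = v i := by rw [hE, inv_inv]
    refine (acequiv_of_eq hw).trans ((Relation.ReflTransGen.single e1).trans (acequiv_of_eq ?_))
    rw [hv]; exact congrArg (Function.update w i) hval
  · have e1 := step_conj' w i (w i) g⁻¹
    have hval : (g⁻¹)⁻¹ * (w i) * g⁻¹ = v i := by rw [hE]; group
    refine (acequiv_of_eq hw).trans ((Relation.ReflTransGen.single e1).trans (acequiv_of_eq ?_))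
    rw [hv]; exact congrArg (Function.update w i) hval

lemma ACEquiv.symm {v w : Fin n → G} (h : ACEquiv v w) : ACEquiv w v := by
  induction h with
  | refl => exact Relation.ReflTransGen.refl
  | tail _ hbc ih => exact (acstep_symm hbc).trans ih

end Lemmas

section Mult
variable {G : Type*} [Group G] {n : ℕ}

lemma acequiv_update_left (v : Fin n → G) (i : Fin n) {c : G}
    (hc : c ∈ Subgroup.normalClosure (v '' {j | j ≠ i})) (a : G) :
    ACEquiv (Function.update v i a) (Function.update v i (c * a)) := by
  unfold Subgroup.normalClosure at hc
  induction hc using Subgroup.closure_induction generalizing a with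
  | mem x hx =>
    obtain ⟨b, hb, hconj⟩ := Group.mem_conjugatesOfSet_iff.mp hx
    obtain ⟨j, hj, rfl⟩ := hb
    obtain ⟨u, rfl⟩ := isConj_iff.mp hconj
    have e1 := step_conj' v i a u
    have e2 := step_mul' (v := v) (j := j) hj (u⁻¹ * a * u)
    have e3 := step_conj' v i (v j * (u⁻¹ * a * u)) u⁻¹
    refine (Relation.ReflTransGen.head e1 (Relation.ReflTransGen.head e2
      (Relation.ReflTransGen.single e3))).trans (acequiv_of_eq ?_)
    refine congrArg (Function.update v i) ?_
    group
  | one => exact acequiv_of_eq (by rw [one_mul])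
  | mul x y _ _ ihx ihy =>
    exact (ihy a).trans ((ihx (y * a)).trans (acequiv_of_eq (by rw [mul_assoc])))
  | inv x _ ihx =>
    have := (ihx (x⁻¹ * a)).symm
    rw [mul_inv_cancel_left] at this
    exact this

lemma acequiv_update_right (v : Fin n → G) (i : Fin n) {c : G}
    (hc : c ∈ Subgroup.normalClosure (v '' {j | j ≠ i})) (a : G) :
    ACEquiv (Function.update v i a) (Function.update v i (a * c)) := by
  have e1 := Relation.ReflTransGen.single (step_inv' v i a)
  have e2 := acequiv_update_left v i (inv_mem hc) a⁻¹
  have e3 := Relation.ReflTransGen.single (step_inv' v i (c⁻¹ * a⁻¹))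
  exact (e1.trans (e2.trans e3)).trans (acequiv_of_eq (congrArg (Function.update v i) (by group)))

lemma acequiv_update_any (v : Fin n → G) (i : Fin n)
    (hgen : Subgroup.normalClosure (v '' {j | j ≠ i}) = ⊤) (g : G) :
    ACEquiv v (Function.update v i g) := by
  have hc : (v i)⁻¹ * g ∈ Subgroup.normalClosure (v '' {j | j ≠ i}) := by
    rw [hgen]; exact Subgroup.mem_top _
  have := acequiv_update_right v i hc (v i)
  rw [mul_inv_cancel_left, Function.update_eq_self] at this
  exact this

end Mult

section Aux
variable {G : Type*} [Group G] {n : ℕ}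

lemma ng_map {H : Type*} [Group H] (f : G →* H) (hf : Function.Surjective f)
    {m : ℕ} {v : Fin m → G} (hv : NormallyGenerates v) :
    NormallyGenerates (fun i => f (v i)) := by
  unfold NormallyGenerates at hv ⊢
  have hr : Set.range (fun i => f (v i)) = f '' Set.range v := Set.range_comp f v
  rw [hr, ← Subgroup.map_normalClosure _ f hf, hv]
  exact Subgroup.map_top_of_surjective f hf

lemma exists_ng (G : Type*) [Group G] [Group.FG G] :
    ∃ (m : ℕ) (v : Fin m → G), NormallyGenerates v := by
  obtain ⟨S, hScl, hSfin⟩ := Group.fg_iff.mp ‹Group.FG G›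
  refine ⟨hSfin.toFinset.card, fun i => (hSfin.toFinset.equivFin.symm i : G), ?_⟩
  have hr : Set.range (fun i => (hSfin.toFinset.equivFin.symm i : G)) = S := by
    ext g
    constructor
    · rintro ⟨i, rfl⟩
      have := (hSfin.toFinset.equivFin.symm i).2
      exact hSfin.mem_toFinset.mp this
    · intro hg
      exact ⟨hSfin.toFinset.equivFin ⟨g, by simpa using hg⟩, by simp⟩
  unfold NormallyGenerates
  rw [hr]
  refine le_antisymm le_top ?_
  rw [← hScl]
  exact (Subgroup.closure_le _).mpr Subgroup.subset_normalClosure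

lemma weight_mem (G : Type*) [Group G] [Group.FG G] :
    ∃ v : Fin (weight G) → G, NormallyGenerates v := by
  have hne : {n : ℕ | ∃ v : Fin n → G, NormallyGenerates v}.Nonempty := by
    obtain ⟨m, v, hv⟩ := exists_ng G
    exact ⟨m, v, hv⟩
  exact Nat.sInf_mem hne

end Aux

section WProp
variable {G : Type*} [Group G] [Group.FG G]

/-- Every proper normal subgroup of a f.g. group is contained in a maximal normal subgroup. -/
lemma exists_maximal_normal {N : Subgroup G} (hNn : N.Normal) (hN : N ≠ ⊤) :
    ∃ M : Subgroup G, IsMaximalNormal M ∧ N ≤ M := by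
  obtain ⟨S, hScl, hSfin⟩ := Group.fg_iff.mp ‹Group.FG G›
  set 𝒮 : Set (Subgroup G) := {M | M.Normal ∧ M ≠ ⊤} with h𝒮
  have hzorn : ∀ c ⊆ 𝒮, IsChain (· ≤ ·) c → ∀ y ∈ c, ∃ ub ∈ 𝒮, ∀ z ∈ c, z ≤ ub := by
    intro c hc hchain y hy
    refine ⟨sSup c, ⟨?_, ?_⟩, fun z hz => le_sSup hz⟩
    · constructor
      intro x hx g
      rw [Subgroup.mem_sSup_of_directedOn ⟨y, hy⟩ hchain.directedOn] at hx ⊢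
      obtain ⟨K, hKc, hxK⟩ := hx
      exact ⟨K, hKc, (hc hKc).1.conj_mem x hxK g⟩
    · intro htop
      have hmem : ∀ s ∈ S, ∃ K ∈ c, s ∈ K := by
        intro s _
        rw [← Subgroup.mem_sSup_of_directedOn ⟨y, hy⟩ hchain.directedOn, htop]
        exact Subgroup.mem_top s
      have key : ∀ T : Set G, T.Finite → (∀ s ∈ T, ∃ K ∈ c, s ∈ K) → ∃ K ∈ c, T ⊆ K := by
        intro T hT
        induction T, hT using Set.Finite.induction_on with
        | empty => exact fun _ => ⟨y, hy, by simp⟩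
        | @insert a s ha hsfin ih =>
          intro hmem'
          obtain ⟨K, hKc, hKs⟩ := ih (fun t ht => hmem' t (Set.mem_insert_of_mem a ht))
          obtain ⟨K', hK'c, haK'⟩ := hmem' a (Set.mem_insert a s)
          rcases hchain.total hKc hK'c with hle | hle
          · exact ⟨K', hK'c, Set.insert_subset haK' (fun t ht => hle (hKs ht))⟩
          · exact ⟨K, hKc, Set.insert_subset (hle haK') hKs⟩
      obtain ⟨K, hKc, hSK⟩ := key S hSfin hmem
      have : K = ⊤ := by
        rw [eq_top_iff, ← hScl]
        exact (Subgroup.closure_le K).mpr (fun t ht => hSK ht)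
      exact (hc hKc).2 this
  obtain ⟨m, hNm, hm⟩ := zorn_le_nonempty₀ 𝒮 hzorn N ⟨hNn, hN⟩
  refine ⟨m, ⟨hm.prop.1, hm.prop.2, fun M' hM'n hlt => ?_⟩, hNm⟩
  by_contra hM'
  exact absurd (hm.le_of_ge ⟨hM'n, hM'⟩ hlt.le) (not_le_of_gt hlt)

lemma eq_top_of_sup_nfrattini {N : Subgroup G} [hNn : N.Normal]
    (h : N ⊔ NFrattini G = ⊤) : N = ⊤ := by
  by_contra hN
  obtain ⟨M, hM, hNM⟩ := exists_maximal_normal hNn hN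
  have hW : NFrattini G ≤ M := sInf_le hM
  have : (⊤ : Subgroup G) ≤ M := h ▸ sup_le hNM hW
  exact hM.2.1 (top_le_iff.mp this)

end WProp

section Lift
variable {G : Type*} [Group G] {n : ℕ}

local notation "π" => QuotientGroup.mk' (NFrattini G)

lemma lift_step {x : Fin n → G} {c : Fin n → G ⧸ NFrattini G}
    (hs : ACStep (fun j => π (x j)) c) :
    ∃ y : Fin n → G, ACStep x y ∧ (fun j => π (y j)) = c := by
  obtain ⟨i, hoff, hc⟩ := hs
  rcases hc with ⟨j, hji, hE⟩ | hE | ⟨q, hE⟩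
  · refine ⟨Function.update x i (x j * x i),
      ⟨i, fun k hk => Function.update_of_ne hk _ _, Or.inl ⟨j, hji, by simp⟩⟩,
      funext fun k => ?_⟩
    by_cases hk : k = i
    · subst hk
      simp only [Function.update_self, map_mul]
      exact hE.symm
    · rw [Function.update_of_ne hk]
      exact (hoff k hk).symm
  · refine ⟨Function.update x i (x i)⁻¹,
      ⟨i, fun k hk => Function.update_of_ne hk _ _, Or.inr (Or.inl (by simp))⟩,
      funext fun k => ?_⟩
    by_cases hk : k = i
    · subst hk
      simp only [Function.update_self, map_inv]
      exact hE.symm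
    · rw [Function.update_of_ne hk]
      exact (hoff k hk).symm
  · obtain ⟨g, rfl⟩ := QuotientGroup.mk'_surjective (NFrattini G) q
    refine ⟨Function.update x i (g⁻¹ * x i * g),
      ⟨i, fun k hk => Function.update_of_ne hk _ _, Or.inr (Or.inr ⟨g, by simp⟩)⟩,
      funext fun k => ?_⟩
    by_cases hk : k = i
    · subst hk
      simp only [Function.update_self, map_mul, map_inv]
      exact hE.symm
    · rw [Function.update_of_ne hk]
      exact (hoff k hk).symm

lemma lift_equiv {x : Fin n → G} {c : Fin n → G ⧸ NFrattini G}
    (he : ACEquiv (fun j => π (x j)) c) :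
    ∃ y : Fin n → G, ACEquiv x y ∧ (fun j => π (y j)) = c := by
  induction he with
  | refl => exact ⟨x, Relation.ReflTransGen.refl, rfl⟩
  | tail _ hbc ih =>
    obtain ⟨y, hxy, hy⟩ := ih
    rw [← hy] at hbc
    obtain ⟨y', hs, h'⟩ := lift_step hbc
    exact ⟨y', hxy.tail hs, h'⟩

end Lift

section Fix
variable {G : Type*} [Group G] [Group.FG G]

local notation "π" => QuotientGroup.mk' (NFrattini G)

lemma nc_image_top {n : ℕ} {x y : Fin n → G} {s : Set (Fin n)}
    (hcong : ∀ j ∈ s, π (x j) = π (y j))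
    (hy : Subgroup.normalClosure (y '' s) = ⊤) :
    Subgroup.normalClosure (x '' s) = ⊤ := by
  have hsurj := QuotientGroup.mk'_surjective (NFrattini G)
  have himg : (π : G →* G ⧸ NFrattini G) '' (x '' s) = (π : G →* G ⧸ NFrattini G) '' (y '' s) := by
    rw [← Set.image_comp, ← Set.image_comp]
    exact Set.image_congr hcong
  have hmap : Subgroup.map π (Subgroup.normalClosure (x '' s))
      = Subgroup.map π (Subgroup.normalClosure (y '' s)) := by
    rw [Subgroup.map_normalClosure _ _ hsurj, Subgroup.map_normalClosure _ _ hsurj, himg]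
  have h2 : Subgroup.normalClosure (x '' s) ⊔ NFrattini G = ⊤ := by
    have hcm := congrArg (Subgroup.comap (π : G →* G ⧸ NFrattini G)) hmap
    rw [Subgroup.comap_map_eq, Subgroup.comap_map_eq, QuotientGroup.ker_mk'] at hcm
    rw [hcm, hy, top_sup_eq]
  exact eq_top_of_sup_nfrattini h2

lemma fix_congruent {m : ℕ} (y : Fin (m+1) → G)
    (hy : Subgroup.normalClosure (y '' {j | j ≠ Fin.last m}) = ⊤)
    (d : ℕ) (x : Fin (m+1) → G)
    (hcong : ∀ j, j ≠ Fin.last m → π (x j) = π (y j))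
    (hfix : ∀ j : Fin (m+1), d ≤ (j : ℕ) → j ≠ Fin.last m → x j = y j) :
    ACEquiv x y := by
  induction d generalizing x with
  | zero =>
    have himg : x '' {j | j ≠ Fin.last m} = y '' {j | j ≠ Fin.last m} :=
      Set.image_congr (fun j hj => hfix j (Nat.zero_le _) hj)
    have hxtop : Subgroup.normalClosure (x '' {j | j ≠ Fin.last m}) = ⊤ := himg ▸ hy
    refine (acequiv_update_any x (Fin.last m) hxtop (y (Fin.last m))).trans (acequiv_of_eq ?_)
    funext j
    by_cases hj : j = Fin.last m
    · subst hj; simp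
    · rw [Function.update_of_ne hj]
      exact hfix j (Nat.zero_le _) hj
  | succ d ih =>
    by_cases hdm : d < m
    · have hxtop : Subgroup.normalClosure (x '' {j | j ≠ Fin.last m}) = ⊤ :=
        nc_image_top (fun j hj => hcong j hj) hy
      set i : Fin (m+1) := ⟨d, by omega⟩ with hi
      have hine : i ≠ Fin.last m := by
        simp only [Fin.ne_iff_vne, hi, Fin.last]
        simpa using Nat.ne_of_lt hdm
      set c := (x i)⁻¹ * y i with hcdef
      have e1 : ACEquiv x (Function.update x (Fin.last m) c) :=
        acequiv_update_any _ _ hxtop c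
      set x1 := Function.update x (Fin.last m) c with hx1
      have hcmem : c ∈ Subgroup.normalClosure (x1 '' {j | j ≠ i}) :=
        Subgroup.subset_normalClosure ⟨Fin.last m, Ne.symm hine, by simp [hx1]⟩
      have hx1i : x1 i = x i := Function.update_of_ne hine _ _
      have e2 : ACEquiv x1 (Function.update x1 i (y i)) := by
        have h2 := acequiv_update_right x1 i hcmem (x1 i)
        rw [Function.update_eq_self, hx1i, hcdef, mul_inv_cancel_left] at h2
        exact h2
      set x2 := Function.update x1 i (y i) with hx2
      refine e1.trans (e2.trans (ih x2 ?_ ?_))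
      · intro j hj
        by_cases hji : j = i
        · subst hji; simp [hx2]
        · rw [show x2 j = x j by
            rw [hx2, Function.update_of_ne hji, hx1, Function.update_of_ne hj]]
          exact hcong j hj
      · intro j hdj hj
        by_cases hji : j = i
        · subst hji; simp [hx2]
        · have hjd : (j : ℕ) ≠ d := by
            intro hval
            exact hji (Fin.ext (by simp [hi, hval]))
          rw [show x2 j = x j by
            rw [hx2, Function.update_of_ne hji, hx1, Function.update_of_ne hj]]
          exact hfix j (by omega) hj
    · refine ih x hcong (fun j hdj hj => ?_)
      have := Fin.val_lt_last hj
      omega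

end Fix

/-- if any two normally generating `n`-vectors of `G / W(G)` are AC-equivalent
for every `n > w(G/W(G))`, then any two normally generating `n`-vectors of `G` are
AC-equivalent for every `n > w(G)`. -/
theorem ACEquiv_of_quotient_NFrattini
    {G : Type*} [Group G] [Group.FG G]
    (h : ∀ n : ℕ, weight (G ⧸ NFrattini G) < n →
      ∀ v w : Fin n → G ⧸ NFrattini G,
        NormallyGenerates v → NormallyGenerates w → ACEquiv v w)
    {n : ℕ} (hn : weight G < n)
    (v w : Fin n → G) (hv : NormallyGenerates v) (hw : NormallyGenerates w) :
    ACEquiv v w := by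
  cases n with
  | zero => exact absurd hn (Nat.not_lt_zero _)
  | succ m =>
    have hπ := QuotientGroup.mk'_surjective (NFrattini G)
    obtain ⟨t, ht⟩ := weight_mem G
    have hwm : weight G ≤ m := by omega
    set u : Fin (m+1) → G := fun i => if h : (i : ℕ) < weight G then t ⟨i, h⟩ else 1 with hudef
    have hu_off : Subgroup.normalClosure (u '' {j | j ≠ Fin.last m}) = ⊤ := by
      refine le_antisymm le_top ?_
      rw [show (⊤ : Subgroup G) = Subgroup.normalClosure (Set.range t) from ht.symm]
      refine Subgroup.normalClosure_mono ?_
      rintro _ ⟨k, rfl⟩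
      have hk : (k : ℕ) < weight G := k.2
      refine ⟨⟨k, by omega⟩, ?_, ?_⟩
      · show _ ≠ Fin.last m
        apply Fin.ne_of_val_ne
        simp only [Fin.last]
        omega
      · show u _ = t k
        have : u ⟨(k : ℕ), by omega⟩ = t k := by
          simp [hudef, hk]
        exact this
    have hu : NormallyGenerates u := by
      unfold NormallyGenerates
      refine le_antisymm le_top ?_
      rw [← hu_off]
      exact Subgroup.normalClosure_mono (by rintro _ ⟨j, _, rfl⟩; exact ⟨j, rfl⟩)
    have hwQ : weight (G ⧸ NFrattini G) ≤ weight G :=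
      Nat.sInf_le ⟨fun i => QuotientGroup.mk' (NFrattini G) (t i),
        ng_map (QuotientGroup.mk' (NFrattini G)) hπ ht⟩
    have hQlt : weight (G ⧸ NFrattini G) < m + 1 := lt_of_le_of_lt hwQ hn
    have hvq := ng_map (QuotientGroup.mk' (NFrattini G)) hπ hv
    have huq := ng_map (QuotientGroup.mk' (NFrattini G)) hπ hu
    have hwq := ng_map (QuotientGroup.mk' (NFrattini G)) hπ hw
    have hev := h (m+1) hQlt _ _ hvq huq
    have hew := h (m+1) hQlt _ _ hwq huq
    obtain ⟨v', hvv', hv'⟩ := lift_equiv hev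
    obtain ⟨w', hww', hw'⟩ := lift_equiv hew
    have hv'u : ACEquiv v' u :=
      fix_congruent u hu_off (m+1) v' (fun j _ => congrFun hv' j)
        (fun j hdj _ => absurd hdj (by have := j.2; omega))
    have hw'u : ACEquiv w' u :=
      fix_congruent u hu_off (m+1) w' (fun j _ => congrFun hw' j)
        (fun j hdj _ => absurd hdj (by have := j.2; omega))
    exact hvv'.trans (hv'u.trans (ACEquiv.symm (hww'.trans hw'u)))
end

section
/- A finitely generated solvable group G is normally generated by a single element (i.e., there exists g ∈ G whose normal closure is G) if and only if the abelianization G/[G,G] is a cyclic group. -/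
open Subgroup

lemma abelianization_of_surjective (G : Type*) [Group G] :
    Function.Surjective (Abelianization.of : G →* Abelianization G) :=
  QuotientGroup.mk_surjective

/-- A solvable group whose commutator subgroup is everything is trivial. -/
lemma solvable_perfect_subsingleton (H : Type*) [Group H] [Group.IsSolvable H]
    (h : commutator H = ⊤) : Subsingleton H := by
  obtain ⟨n, hn⟩ := Group.IsSolvable.solvable (G := H)
  have key : ∀ m, derivedSeries H m = ⊤ := by
    intro m
    induction m with
    | zero => rfl
    | succ k ih => rw [derivedSeries_succ, ih, ← commutator_def, h]
  rw [key n] at hn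
  have : (⊤ : Subgroup H) = ⊥ := hn
  rw [← Subgroup.subsingleton_iff]
  exact subsingleton_of_bot_eq_top this.symm

/-- a finitely generated solvable group is normally generated by a single
element iff its abelianization is cyclic. -/
theorem normally_generated_by_one_iff_abelianization_cyclic
    (G : Type*) [Group G] [Group.FG G] [Group.IsSolvable G] :
    (∃ g : G, Subgroup.normalClosure {g} = ⊤) ↔ IsCyclic (Abelianization G) := by
  constructor
  · rintro ⟨g, hg⟩
    refine ⟨⟨Abelianization.of g, fun x => ?_⟩⟩
    have hmap : Subgroup.map (Abelianization.of (G := G)) (normalClosure {g}) = ⊤ := by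
      rw [hg, ← MonoidHom.range_eq_map, MonoidHom.range_eq_top]
      exact abelianization_of_surjective G
    rw [Subgroup.map_normalClosure _ _ (abelianization_of_surjective G),
      Set.image_singleton] at hmap
    have : normalClosure {Abelianization.of g} ≤ Subgroup.zpowers (Abelianization.of g) :=
      normalClosure_le_normal (by simp [Subgroup.mem_zpowers])
    rw [hmap] at this
    exact this (Subgroup.mem_top x)
  · rintro ⟨⟨x, hx⟩⟩
    obtain ⟨g, rfl⟩ := abelianization_of_surjective G x
    refine ⟨g, ?_⟩
    set N := Subgroup.normalClosure ({g} : Set G) with hN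
    haveI : N.Normal := normalClosure_normal
    set π := QuotientGroup.mk' N with hπ
    have hπs : Function.Surjective π := QuotientGroup.mk'_surjective N
    have hQ : commutator (G ⧸ N) = ⊤ := by
      rw [eq_top_iff]
      rintro q -
      obtain ⟨y, rfl⟩ := hπs q
      obtain ⟨n, hn⟩ := hx (Abelianization.of y)
      have hn' : Abelianization.of g ^ n = Abelianization.of y := hn
      -- of (g^n) = of y, so y * (g^n)⁻¹ ∈ commutator G
      have hker : y * (g ^ n)⁻¹ ∈ commutator G := by
        have : Abelianization.of (y * (g ^ n)⁻¹) = 1 := by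
          rw [map_mul, map_inv, map_zpow, hn', mul_inv_cancel]
        rwa [← QuotientGroup.eq_one_iff (y * (g ^ n)⁻¹)]
      have hgN : π g = 1 := by
        rw [hπ, QuotientGroup.mk'_apply, QuotientGroup.eq_one_iff]
        exact subset_normalClosure rfl
      have : π y = π (y * (g ^ n)⁻¹) := by
        rw [map_mul, map_inv, map_zpow, hgN, one_zpow, inv_one, mul_one]
      rw [this]
      have hle : (commutator G).map π ≤ commutator (G ⧸ N) := by
        rw [_root_.commutator_def, _root_.commutator_def, Subgroup.map_commutator]
        exact Subgroup.commutator_mono le_top le_top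
      exact hle ⟨_, hker, rfl⟩
    haveI : Subsingleton (G ⧸ N) := solvable_perfect_subsingleton _ hQ
    rw [eq_top_iff]
    intro z _
    have : π z = π 1 := Subsingleton.elim _ _
    rw [map_one, hπ, QuotientGroup.mk'_apply, QuotientGroup.eq_one_iff] at this
    exact this
end

section
/- Let C_1, …, C_k be finite cyclic groups of pairwise coprime orders and let G = C_1 ≀ ⋯ ≀ C_k be the iterated regular wreath product (G_1 = C_1 and G_i = G_{i-1} ≀ C_i for 1 < i ≤ k, with G = G_k). Then G is normally generated by a single element, and any two weight elements of G having the same image in the abelianization G/[G,G] are conjugate in G; in particular, any two weight elements of G whose images under abelianization are AC-equivalent are themselves AC-equivalent. -/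
/-- The permutation action of `B` on `B → A` (by left translation of coordinates),
as a homomorphism `B →* MulAut (B → A)`. -/
def wreathAction (A B : Type*) [Group A] [Group B] : B →* MulAut (B → A) where
  toFun b :=
    { toFun := fun f x => f (b⁻¹ * x)
      invFun := fun f x => f (b * x)
      left_inv := fun f => funext fun x => by simp
      right_inv := fun f => funext fun x => by simp
      map_mul' := fun f g => rfl }
  map_one' := by
    ext f x
    simp
  map_mul' := fun b c => by
    ext f x
    simp [mul_assoc]

/-- The regular wreath product `A ≀ B`: the semidirect product of `B → A` by `B` acting by
permutation of coordinates. -/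
abbrev WreathProduct (A B : Type*) [Group A] [Group B] : Type _ :=
  SemidirectProduct (B → A) B (wreathAction A B)

/-- Auxiliary construction of the iterated regular wreath product together with its
group structure. -/
def IterWreathAux (m : ℕ → ℕ) : ℕ → Σ (T : Type), Group T
  | 0 => ⟨Multiplicative (ZMod (m 0)), inferInstance⟩
  | (i + 1) =>
      let p := IterWreathAux m i
      letI := p.2
      ⟨WreathProduct p.1 (Multiplicative (ZMod (m (i + 1)))), inferInstanceAs (Group _)⟩

/-- The iterated regular wreath product `C_0 ≀ C_1 ≀ ⋯ ≀ C_i` of the cyclic groups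
`C_j = ℤ/m j ℤ` (bracketed as `(⋯(C_0 ≀ C_1) ≀ ⋯) ≀ C_i`). -/
def IterWreath (m : ℕ → ℕ) (i : ℕ) : Type := (IterWreathAux m i).1

instance (m : ℕ → ℕ) (i : ℕ) : Group (IterWreath m i) := (IterWreathAux m i).2

/-- An elementary AC-transformation on single elements: inversion or conjugation. -/
def ACStep1 {G : Type*} [Group G] (x y : G) : Prop :=
  y = x⁻¹ ∨ ∃ h : G, y = h⁻¹ * x * h

/-- AC-equivalence of single elements. -/
def ACEquiv1 {G : Type*} [Group G] (x y : G) : Prop :=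
  Relation.ReflTransGen ACStep1 x y


section Generic
variable {G : Type*} [Group G]

theorem myNormalClosure_comm {M : Type*} [CommGroup M] (s : Set M) :
    Subgroup.normalClosure s = Subgroup.closure s := by
  haveI : (Subgroup.closure s).Normal := ⟨fun x hx g => by simpa [mul_comm] using hx⟩
  exact le_antisymm (Subgroup.normalClosure_le_normal Subgroup.subset_closure)
    Subgroup.closure_le_normalClosure

theorem myOfSurjective : Function.Surjective (Abelianization.of (G := G)) :=
  fun y => Quotient.inductionOn' y fun g => ⟨g, rfl⟩

theorem myKerOf : (Abelianization.of (G := G)).ker = commutator G := by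
  ext x
  exact QuotientGroup.eq_one_iff x

/-- weight iff image generates abelianization, for solvable groups -/
theorem weight_iff_ab [Group.IsSolvable G] (g : G) :
    Subgroup.normalClosure {g} = ⊤ ↔ Subgroup.closure {Abelianization.of g} = ⊤ := by
  constructor
  · intro h
    have h2 := Subgroup.map_normalClosure {g} (Abelianization.of (G := G)) myOfSurjective
    rw [h, Subgroup.map_top_of_surjective _ myOfSurjective, Set.image_singleton] at h2
    rw [← myNormalClosure_comm, ← h2]
  · intro h
    have hsup : Subgroup.closure {g} ⊔ commutator G = ⊤ := by
      have h1 : Subgroup.comap Abelianization.of (Subgroup.closure {Abelianization.of g}) = ⊤ := by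
        rw [h, Subgroup.comap_top]
      rw [← Set.image_singleton, ← MonoidHom.map_closure, Subgroup.comap_map_eq, myKerOf] at h1
      exact h1
    set N := Subgroup.normalClosure {g} with hN
    have hNsup : N ⊔ commutator G = ⊤ := by
      rw [eq_top_iff, ← hsup]
      exact sup_le_sup_right Subgroup.closure_le_normalClosure _
    haveI hNn : N.Normal := Subgroup.normalClosure_normal
    let mk := QuotientGroup.mk' N
    have hmk : Function.Surjective mk := QuotientGroup.mk'_surjective N
    have hperf : commutator (G ⧸ N) = ⊤ := by
      have hbot : Subgroup.map mk N = ⊥ := by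
        rw [eq_bot_iff]
        rintro x ⟨y, hy, rfl⟩
        simpa [mk, Subgroup.mem_bot, QuotientGroup.eq_one_iff] using hy
      calc commutator (G ⧸ N) = ⁅(⊤ : Subgroup (G ⧸ N)), ⊤⁆ := rfl
        _ = ⁅Subgroup.map mk ⊤, Subgroup.map mk ⊤⁆ := by
              rw [Subgroup.map_top_of_surjective _ hmk]
        _ = Subgroup.map mk (commutator G) := (Subgroup.map_commutator _ _ _).symm
        _ = Subgroup.map mk N ⊔ Subgroup.map mk (commutator G) := by rw [hbot, bot_sup_eq]
        _ = Subgroup.map mk (N ⊔ commutator G) := by rw [Subgroup.map_sup]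
        _ = ⊤ := by rw [hNsup, Subgroup.map_top_of_surjective _ hmk]
    have hds : ∀ n : ℕ, derivedSeries (G ⧸ N) n = ⊤ := by
      intro n
      induction n with
      | zero => exact derivedSeries_zero _
      | succ n ih =>
          rw [derivedSeries_succ, ih]
          exact hperf
    obtain ⟨n, hn⟩ := (inferInstance : Group.IsSolvable (G ⧸ N)).solvable
    rw [hds n] at hn
    ext x
    simp only [Subgroup.mem_top, iff_true]
    have hx : mk x ∈ (⊤ : Subgroup (G ⧸ N)) := trivial
    rw [hn, Subgroup.mem_bot] at hx
    exact (QuotientGroup.eq_one_iff x).mp hx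

theorem ncl_conj {g g' : G} (h : IsConj g g') :
    Subgroup.normalClosure {g} = Subgroup.normalClosure {g'} := by
  obtain ⟨c, hc⟩ := isConj_iff.mp h
  refine le_antisymm (Subgroup.normalClosure_le_normal ?_)
    (Subgroup.normalClosure_le_normal ?_)
  · rw [Set.singleton_subset_iff]
    have h2 := (Subgroup.normalClosure_normal (s := ({g'} : Set G))).conj_mem g'
      (Subgroup.subset_normalClosure rfl) c⁻¹
    have h3 : c⁻¹ * g' * c⁻¹⁻¹ = g := by rw [← hc]; group
    rwa [h3] at h2
  · rw [Set.singleton_subset_iff]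
    have h2 := (Subgroup.normalClosure_normal (s := ({g} : Set G))).conj_mem g
      (Subgroup.subset_normalClosure rfl) c
    rwa [hc] at h2

theorem ncl_inv {g : G} (h : Subgroup.normalClosure {g} = ⊤) :
    Subgroup.normalClosure {g⁻¹} = ⊤ := by
  rw [eq_top_iff, ← h]
  refine Subgroup.normalClosure_le_normal ?_
  rw [Set.singleton_subset_iff]
  have h2 : g⁻¹ ∈ Subgroup.normalClosure {g⁻¹} := Subgroup.subset_normalClosure rfl
  simpa using inv_mem h2

theorem isSolvable_pi {ι : Type*} {A : Type*} [Group A] [Group.IsSolvable A] :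
    Group.IsSolvable (ι → A) := by
  obtain ⟨n, hn⟩ := (inferInstance : Group.IsSolvable A).solvable
  refine ⟨⟨n, ?_⟩⟩
  have key : ∀ j : ℕ, derivedSeries (ι → A) j ≤
      Subgroup.pi Set.univ (fun _ : ι => derivedSeries A j) := by
    intro j
    induction j with
    | zero => intro x _; simp [Subgroup.mem_pi]
    | succ j ih =>
        rw [derivedSeries_succ]
        calc ⁅derivedSeries (ι → A) j, derivedSeries (ι → A) j⁆
            ≤ ⁅Subgroup.pi Set.univ (fun _ : ι => derivedSeries A j),
               Subgroup.pi Set.univ (fun _ : ι => derivedSeries A j)⁆ :=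
              Subgroup.commutator_mono ih ih
          _ ≤ Subgroup.pi Set.univ (fun _ : ι => derivedSeries A (j + 1)) :=
              Subgroup.commutator_pi_pi_le _ _
  rw [eq_bot_iff]
  refine (key n).trans ?_
  intro x hx
  rw [Subgroup.mem_pi] at hx
  have hx1 : x = 1 := funext fun i => by
    have h2 := hx i (Set.mem_univ i); rwa [hn, Subgroup.mem_bot] at h2
  simp [hx1]

end Generic

section SDP

variable {N G : Type*} [Group N] [Group G] (φ : G →* MulAut N)

/-- A semidirect product is equivalent (as a type) to the product. -/
def sdpEquiv : N ⋊[φ] G ≃ N × G where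
  toFun x := (x.left, x.right)
  invFun p := ⟨p.1, p.2⟩
  left_inv x := rfl
  right_inv p := rfl

theorem sdpFinite [Finite N] [Finite G] : Finite (N ⋊[φ] G) :=
  Finite.of_equiv _ (sdpEquiv φ).symm

theorem sdpCard : Nat.card (N ⋊[φ] G) = Nat.card N * Nat.card G := by
  rw [Nat.card_congr (sdpEquiv φ), Nat.card_prod]

theorem sdpSolvable [Group.IsSolvable N] [Group.IsSolvable G] : Group.IsSolvable (N ⋊[φ] G) :=
  solvable_of_ker_le_range SemidirectProduct.inl SemidirectProduct.rightHom
    (le_of_eq SemidirectProduct.range_inl_eq_ker_rightHom.symm)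

end SDP

theorem hom_comm_conj {G M : Type*} [Group G] [CommGroup M] (f : G →* M) (x y : G) :
    f (y * x * y⁻¹) = f x := by
  rw [map_mul, map_mul, map_inv, mul_comm (f y) (f x), mul_assoc, mul_inv_cancel, mul_one]

theorem hom_factor {G M : Type*} [Group G] [CommGroup M] (f : G →* M) {x y : G}
    (h : Abelianization.of x = Abelianization.of y) : f x = f y := by
  have h2 : (Abelianization.lift f) (Abelianization.of x)
      = (Abelianization.lift f) (Abelianization.of y) := by rw [h]
  rwa [Abelianization.lift_apply_of, Abelianization.lift_apply_of] at h2

theorem mem_closure_mul_of_orders {M : Type*} [CommGroup M] {x u v : M} (hx : x = u * v)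
    {N n : ℕ} (hu : u ^ N = 1) (hv : v ^ n = 1) (hcop : Nat.Coprime N n) :
    u ∈ Subgroup.closure {x} ∧ v ∈ Subgroup.closure {x} := by
  have hx1 : x ∈ Subgroup.closure {x} := Subgroup.subset_closure rfl
  have hb := Nat.gcd_eq_gcd_ab N n
  rw [hcop.gcd_eq_one] at hb; push_cast at hb
  set s := Nat.gcdA N n with hs
  set t := Nat.gcdB N n with ht
  have huz : ∀ z : ℤ, u ^ ((N : ℤ) * z) = 1 := fun z => by
    rw [zpow_mul, zpow_natCast, hu, one_zpow]
  have hvz : ∀ z : ℤ, v ^ ((n : ℤ) * z) = 1 := fun z => by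
    rw [zpow_mul, zpow_natCast, hv, one_zpow]
  constructor
  · have : u = x ^ ((n : ℤ) * t) := by
      rw [hx, mul_zpow, hvz, mul_one]
      have h1 : (n : ℤ) * t = 1 - (N : ℤ) * s := by omega
      rw [h1, zpow_sub, zpow_one, huz, inv_one, mul_one]
    rw [this]
    exact Subgroup.zpow_mem _ hx1 _
  · have : v = x ^ ((N : ℤ) * s) := by
      rw [hx, mul_zpow, huz, one_mul]
      have h1 : (N : ℤ) * s = 1 - (n : ℤ) * t := by omega
      rw [h1, zpow_sub, zpow_one, hvz, inv_one, mul_one]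
    rw [this]
    exact Subgroup.zpow_mem _ hx1 _


section Wreath

variable {A : Type*} [Group A] {n : ℕ} [NeZero n]

local notation "Bn" => Multiplicative (ZMod n)
local notation "Wr" => WreathProduct A (Multiplicative (ZMod n))

theorem wreathAction_apply (b : Bn) (f : Bn → A) (x : Bn) :
    (wreathAction A Bn b) f x = f (b⁻¹ * x) := rfl

/-- The "total product" homomorphism from the wreath product to the abelianization of the
base group. -/
def theta1 : Wr →* Abelianization A where
  toFun x := ∏ b : Bn, Abelianization.of (x.left b)
  map_one' := by
    simp [SemidirectProduct.one_left]
  map_mul' x y := by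
    show (∏ b : Bn, Abelianization.of ((x.left * wreathAction A Bn x.right y.left) b)) = _
    simp only [Pi.mul_apply, map_mul]
    rw [Finset.prod_mul_distrib]
    congr 1
    exact Fintype.prod_equiv (Equiv.mulLeft x.right⁻¹)
      (fun b => Abelianization.of ((wreathAction A Bn x.right y.left) b))
      (fun b => Abelianization.of (y.left b)) (fun b => rfl)

theorem theta1_single (w : A) (b : Bn) :
    theta1 (⟨Pi.mulSingle 1 w, b⟩ : Wr) = Abelianization.of w := by
  show (∏ x : Bn, Abelianization.of (Pi.mulSingle 1 w x)) = Abelianization.of w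
  rw [Finset.prod_eq_single 1]
  · simp
  · intro c _ hc
    simp [Pi.mulSingle_apply, hc]
  · simp

theorem theta1_surjective : Function.Surjective (theta1 (A := A) (n := n)) := by
  intro y
  obtain ⟨a, rfl⟩ := myOfSurjective y
  exact ⟨⟨Pi.mulSingle 1 a, 1⟩, theta1_single a 1⟩

/-- Gathering: any element of the wreath product whose `B`-component generates `B` is
conjugate to one supported at a single coordinate. -/
theorem conj_single (f : Bn → A) (b : Bn) (hb : Subgroup.closure {b} = ⊤) :
    ∃ w : A, IsConj (⟨f, b⟩ : Wr) ⟨Pi.mulSingle 1 w, b⟩ := by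
  have hn1 : 1 ≤ n := Nat.pos_of_ne_zero (NeZero.ne n)
  obtain ⟨j₀, hj₀⟩ : ∃ j : ℤ, b ^ j = Multiplicative.ofAdd (1 : ZMod n) :=
    Subgroup.mem_closure_singleton.mp (by rw [hb]; trivial)
  set β : ZMod n := Multiplicative.toAdd b with hβ
  set u : ZMod n := (j₀ : ZMod n) with hu
  have hβu : β * u = 1 := by
    have h2 := congrArg Multiplicative.toAdd hj₀
    rw [toAdd_zpow] at h2
    simp only [toAdd_ofAdd] at h2
    rw [zsmul_eq_mul] at h2
    rw [mul_comm]
    exact h2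
  -- the partial-product function
  set Hh : ℕ → A := fun j => Nat.rec 1 (fun j' ih => ih * (f (b ^ (j' + 1)))⁻¹) j with hHh
  have hHh0 : Hh 0 = 1 := rfl
  have hHhS : ∀ j : ℕ, Hh (j + 1) = Hh j * (f (b ^ (j + 1)))⁻¹ := fun j => rfl
  set hfun : Bn → A := fun x => Hh (Multiplicative.toAdd x * u).val with hhfun
  set w : A := f 1 * (Hh (n - 1))⁻¹ with hw
  -- key: recover x from its discrete logarithm
  have hbj : ∀ x : Bn, b ^ (Multiplicative.toAdd x * u).val = x := by
    intro x
    apply Multiplicative.toAdd.injective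
    rw [toAdd_pow, nsmul_eq_mul, ZMod.natCast_val, ZMod.cast_id]
    calc Multiplicative.toAdd x * u * β = Multiplicative.toAdd x * (β * u) := by ring
      _ = Multiplicative.toAdd x := by rw [hβu, mul_one]
  refine ⟨w, isConj_iff.mpr ⟨⟨hfun, 1⟩, ?_⟩⟩
  have hleft : hfun * f * (wreathAction A Bn b) hfun⁻¹ = Pi.mulSingle 1 w := by
    funext x
    show hfun x * f x * (hfun (b⁻¹ * x))⁻¹ = (Pi.mulSingle (1 : Bn) w : Bn → A) x
    by_cases hx : x = (1 : Bn)
    · subst hx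
      have h1 : hfun 1 = 1 := by
        show Hh ((Multiplicative.toAdd (1 : Bn) * u).val) = 1
        rw [toAdd_one, zero_mul, ZMod.val_zero, hHh0]
      have h3 : hfun (b⁻¹ * 1) = Hh (n - 1) := by
        show Hh ((Multiplicative.toAdd ((b⁻¹ * 1 : Bn)) * u).val) = Hh (n - 1)
        rw [mul_one, toAdd_inv, neg_mul, hβu]
        have h4 : (-1 : ZMod n) = ((n - 1 : ℕ) : ZMod n) := by
          rw [Nat.cast_sub hn1, ZMod.natCast_self, Nat.cast_one, zero_sub]
        rw [h4, ZMod.val_cast_of_lt (by omega)]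
      rw [h1, h3, one_mul, Pi.mulSingle_apply, if_pos rfl, hw]
    · -- off the support
      have ht0 : Multiplicative.toAdd x * u ≠ 0 := by
        intro h0
        apply hx
        have h5 := hbj x
        rw [h0] at h5
        simpa using h5.symm
      set j : ℕ := (Multiplicative.toAdd x * u).val with hj
      have hj1 : 1 ≤ j := by
        rcases Nat.eq_zero_or_pos j with h | h
        · rw [hj] at h
          exact absurd ((ZMod.val_eq_zero _).mp h) ht0
        · exact h
      have hjlt : j < n := ZMod.val_lt _
      have hsucc : j = (j - 1) + 1 := by omega
      have hprev : (Multiplicative.toAdd (b⁻¹ * x) * u).val = j - 1 := by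
        rw [toAdd_mul, toAdd_inv, add_mul, neg_mul, hβu]
        have hcast : Multiplicative.toAdd x * u = ((j : ℕ) : ZMod n) := by
          rw [hj, ZMod.natCast_val, ZMod.cast_id]
        rw [hcast]
        have h6 : -(1 : ZMod n) + ((j : ℕ) : ZMod n) = ((j - 1 : ℕ) : ZMod n) := by
          rw [Nat.cast_sub hj1, Nat.cast_one]
          ring
        rw [h6, ZMod.val_cast_of_lt (by omega)]
      have hstep : Hh j = Hh (j - 1) * (f (b ^ ((j - 1) + 1)))⁻¹ := by
        conv_lhs => rw [hsucc]
      have hfx : f (b ^ ((j - 1) + 1)) = f x := by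
        rw [← hsucc, hj, hbj]
      have hHx : hfun x = Hh (j - 1) * (f x)⁻¹ := by
        show Hh ((Multiplicative.toAdd x * u).val) = Hh (j - 1) * (f x)⁻¹
        rw [← hj, hstep, hfx]
      have hHprev : hfun (b⁻¹ * x) = Hh (j - 1) := by
        show Hh ((Multiplicative.toAdd (b⁻¹ * x) * u).val) = Hh (j - 1)
        rw [hprev]
      rw [hHx, hHprev, Pi.mulSingle_apply, if_neg hx]
      group
  -- now assemble the semidirect-product computation
  refine SemidirectProduct.ext ?_ ?_
  · show hfun * (wreathAction A Bn) 1 f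
        * (wreathAction A Bn) (1 * b) (((wreathAction A Bn) ((1 : Bn))⁻¹) hfun⁻¹)
      = Pi.mulSingle 1 w
    rw [one_mul, inv_one, map_one, MulAut.one_apply, MulAut.one_apply]
    exact hleft
  · show 1 * b * 1⁻¹ = b
    simp

theorem bn_pow_n (b : Bn) : b ^ n = 1 := by
  apply Multiplicative.toAdd.injective
  rw [toAdd_pow, toAdd_one, nsmul_eq_mul]
  simp [ZMod.natCast_self]

theorem closure_ofAdd_one : Subgroup.closure {(Multiplicative.ofAdd (1 : ZMod n))} = ⊤ := by
  rw [eq_top_iff]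
  intro x _
  rw [Subgroup.mem_closure_singleton]
  refine ⟨((Multiplicative.toAdd x).val : ℤ), ?_⟩
  apply Multiplicative.toAdd.injective
  rw [toAdd_zpow, toAdd_ofAdd, zsmul_eq_mul, mul_one, Int.cast_natCast,
    ZMod.natCast_val, ZMod.cast_id]

theorem wr_finite [Finite A] : Finite Wr := sdpFinite _

theorem wr_solvable [Group.IsSolvable A] : Group.IsSolvable Wr := by
  haveI : Group.IsSolvable (Bn → A) := isSolvable_pi
  exact sdpSolvable _

theorem wr_card [Finite A] : Nat.card Wr = Nat.card A ^ n * n := by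
  have hBn : Nat.card Bn = n := by
    rw [Nat.card_congr (MulEquiv.toEquiv (MulEquiv.refl _)).symm]
    · exact Nat.card_zmod n
  rw [sdpCard, Nat.card_fun, hBn]

/-- The canonical copy of `A` inside the abelianization of the wreath product, via the
coordinate at `1`. -/
def deltaW : A →* Abelianization Wr :=
  (Abelianization.of).comp ((SemidirectProduct.inl).comp
    (MonoidHom.mulSingle (fun _ : Bn => A) 1))

theorem deltaW_conj (a' c : A) :
    deltaW (A := A) (n := n) (a' * c * a'⁻¹) = deltaW (A := A) (n := n) c := by
  set d := deltaW (A := A) (n := n) with hd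
  have h2 : d (a' * c * a'⁻¹) = d a' * d c * (d a')⁻¹ := by
    rw [map_mul, map_mul, map_inv]
  rw [h2, mul_comm (d a') (d c), mul_assoc, mul_inv_cancel, mul_one]

theorem deltaW_single (y : Bn) (c : A) :
    Abelianization.of (SemidirectProduct.inl (Pi.mulSingle y c) : Wr)
      = deltaW (A := A) (n := n) c := by
  have hact : (wreathAction A Bn y) (Pi.mulSingle 1 c) = Pi.mulSingle y c := by
    funext x
    show (Pi.mulSingle (1 : Bn) c : Bn → A) (y⁻¹ * x) = (Pi.mulSingle y c : Bn → A) x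
    by_cases h : x = y
    · subst h; rw [inv_mul_cancel]; simp
    · rw [Pi.mulSingle_apply, Pi.mulSingle_apply, if_neg h, if_neg]
      intro h2
      exact h (by rwa [inv_mul_eq_one, eq_comm] at h2)
  rw [← hact, SemidirectProduct.inl_aut, map_inv]
  exact hom_comm_conj Abelianization.of _ _

theorem wr_exists [Finite A] [Group.IsSolvable A]
    (hcard : (Nat.card A).Coprime n)
    (hA : ∃ a : A, Subgroup.normalClosure {a} = ⊤) :
    ∃ g : Wr, Subgroup.normalClosure {g} = ⊤ := by
  obtain ⟨a, ha⟩ := hA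
  haveI : Group.IsSolvable Wr := wr_solvable
  set b₀ : Bn := Multiplicative.ofAdd 1 with hb₀def
  set g₀ : Wr := ⟨Pi.mulSingle 1 a, b₀⟩ with hg₀
  refine ⟨g₀, (weight_iff_ab g₀).mpr ?_⟩
  set K := Subgroup.closure {Abelianization.of g₀} with hK
  have hxval : Abelianization.of g₀
      = deltaW (A := A) (n := n) a * Abelianization.of (SemidirectProduct.inr b₀ : Wr) := by
    rw [hg₀, SemidirectProduct.mk_eq_inl_mul_inr, map_mul, deltaW_single]
  have hord1 : (deltaW (A := A) (n := n) a) ^ (Nat.card A) = 1 := by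
    rw [← map_pow, pow_card_eq_one', map_one]
  have hord2 : (Abelianization.of (SemidirectProduct.inr b₀ : Wr)) ^ n = 1 := by
    rw [← map_pow, ← map_pow, bn_pow_n, map_one, map_one]
  obtain ⟨hda, hdb⟩ := mem_closure_mul_of_orders hxval hord1 hord2 hcard
  -- all deltaW values lie in K
  have hdall : ∀ c : A, deltaW (A := A) (n := n) c ∈ K := by
    haveI hKn : (Subgroup.comap (deltaW (A := A) (n := n)) K).Normal := by
      refine ⟨fun c hc a' => ?_⟩
      rw [Subgroup.mem_comap] at hc ⊢
      rw [deltaW_conj]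
      exact hc
    have hle : Subgroup.normalClosure {a} ≤ Subgroup.comap (deltaW (A := A) (n := n)) K :=
      Subgroup.normalClosure_le_normal
        (by rw [Set.singleton_subset_iff]; exact Subgroup.mem_comap.mpr hda)
    rw [ha] at hle
    intro c
    have : c ∈ Subgroup.comap (deltaW (A := A) (n := n)) K := hle trivial
    rwa [Subgroup.mem_comap] at this
  rw [eq_top_iff]
  intro y _
  obtain ⟨z, rfl⟩ := myOfSurjective y
  have hz : z = SemidirectProduct.inl z.left * SemidirectProduct.inr z.right := by
    rw [← SemidirectProduct.mk_eq_inl_mul_inr]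
  rw [hz, map_mul]
  refine Subgroup.mul_mem _ ?_ ?_
  · -- base part
    set S : Subgroup (Bn → A) :=
      Subgroup.comap ((Abelianization.of).comp (SemidirectProduct.inl
        (φ := wreathAction A Bn))) K with hS
    have hmem : z.left ∈ S := by
      refine Subgroup.pi_mem_of_mulSingle_mem z.left fun y => ?_
      have : Abelianization.of (SemidirectProduct.inl (Pi.mulSingle y (z.left y)) : Wr) ∈ K := by
        rw [deltaW_single]
        exact hdall _
      exact Subgroup.mem_comap.mpr this
    exact Subgroup.mem_comap.mp hmem
  · -- top part
    obtain ⟨j, hj⟩ : ∃ j : ℤ, b₀ ^ j = z.right := by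
      rw [← Subgroup.mem_closure_singleton, closure_ofAdd_one]; trivial
    rw [← hj, map_zpow, map_zpow]
    exact Subgroup.zpow_mem _ hdb _

theorem wr_weight_conj [Group.IsSolvable A]
    (hconjA : ∀ a b : A, Subgroup.normalClosure {a} = ⊤ → Subgroup.normalClosure {b} = ⊤ →
      Abelianization.of a = Abelianization.of b → IsConj a b)
    (g h : Wr) (hg : Subgroup.normalClosure {g} = ⊤) (hh : Subgroup.normalClosure {h} = ⊤)
    (hab : Abelianization.of g = Abelianization.of h) : IsConj g h := by
  haveI : Group.IsSolvable Wr := wr_solvable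
  have hr : g.right = h.right := hom_factor SemidirectProduct.rightHom hab
  have hbgen : Subgroup.closure {g.right} = ⊤ := by
    have h2 := Subgroup.map_normalClosure {g} (SemidirectProduct.rightHom (φ := wreathAction A Bn))
      SemidirectProduct.rightHom_surjective
    rw [hg, Subgroup.map_top_of_surjective _ SemidirectProduct.rightHom_surjective,
      Set.image_singleton] at h2
    rw [← myNormalClosure_comm]
    exact h2.symm
  obtain ⟨w1, hw1⟩ := conj_single g.left g.right hbgen
  obtain ⟨w2, hw2⟩ := conj_single h.left h.right (hr ▸ hbgen)
  have hth1 : theta1 g = Abelianization.of w1 := by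
    obtain ⟨c, hc⟩ := isConj_iff.mp hw1
    rw [show g = (⟨g.left, g.right⟩ : Wr) from rfl, ← hom_comm_conj theta1 _ c, hc, theta1_single]
  have hth2 : theta1 h = Abelianization.of w2 := by
    obtain ⟨c, hc⟩ := isConj_iff.mp hw2
    rw [show h = (⟨h.left, h.right⟩ : Wr) from rfl, ← hom_comm_conj theta1 _ c, hc, theta1_single]
  have hth : Abelianization.of w1 = Abelianization.of w2 := by
    rw [← hth1, ← hth2]
    exact hom_factor theta1 hab
  have hWeight : ∀ (w : A) (z : Wr), IsConj z (⟨Pi.mulSingle 1 w, z.right⟩ : Wr) →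
      Subgroup.normalClosure {z} = ⊤ → Subgroup.normalClosure {w} = ⊤ := by
    intro w z hcz hz
    rw [weight_iff_ab]
    have hclz : Subgroup.normalClosure {(⟨Pi.mulSingle 1 w, z.right⟩ : Wr)} = ⊤ := by
      rw [← ncl_conj hcz]; exact hz
    have h2 := Subgroup.map_normalClosure {(⟨Pi.mulSingle 1 w, z.right⟩ : Wr)} theta1
      theta1_surjective
    rw [hclz, Subgroup.map_top_of_surjective _ theta1_surjective, Set.image_singleton,
      theta1_single] at h2
    rw [← myNormalClosure_comm, ← h2]
  have hW1 : Subgroup.normalClosure {w1} = ⊤ := hWeight w1 g hw1 hg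
  have hW2 : Subgroup.normalClosure {w2} = ⊤ := hWeight w2 h hw2 hh
  obtain ⟨c, hc⟩ := isConj_iff.mp (hconjA w1 w2 hW1 hW2 hth)
  have hlift : IsConj (⟨Pi.mulSingle 1 w1, g.right⟩ : Wr) ⟨Pi.mulSingle 1 w2, g.right⟩ := by
    refine isConj_iff.mpr ⟨⟨(fun _ => c), 1⟩, ?_⟩
    refine SemidirectProduct.ext ?_ ?_
    · show (fun _ => c) * (wreathAction A Bn) 1 (Pi.mulSingle 1 w1)
          * (wreathAction A Bn) (1 * g.right)
            (((wreathAction A Bn) ((1 : Bn))⁻¹) ((fun _ => c) : Bn → A)⁻¹)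
        = Pi.mulSingle 1 w2
      rw [one_mul, inv_one, map_one, MulAut.one_apply, MulAut.one_apply]
      funext x
      show c * (Pi.mulSingle (1 : Bn) w1 : Bn → A) x * (((fun _ => c) : Bn → A)⁻¹ (g.right⁻¹ * x))
        = (Pi.mulSingle (1 : Bn) w2 : Bn → A) x
      by_cases hx : x = (1 : Bn)
      · subst hx
        simp only [Pi.mulSingle_apply, if_pos rfl, Pi.inv_apply]
        exact hc
      · simp only [Pi.mulSingle_apply, if_neg hx, Pi.inv_apply, mul_one]
        exact mul_inv_cancel c
    · show 1 * g.right * 1⁻¹ = g.right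
      simp
  refine hw1.trans (hlift.trans ?_)
  rw [hr]
  exact hw2.symm

end Wreath


section Base

theorem base_exists (n : ℕ) [NeZero n] :
    ∃ g : Multiplicative (ZMod n), Subgroup.normalClosure {g} = ⊤ :=
  ⟨Multiplicative.ofAdd 1, by rw [myNormalClosure_comm]; exact closure_ofAdd_one⟩

theorem base_conj (n : ℕ) [NeZero n] (g h : Multiplicative (ZMod n))
    (hg : Subgroup.normalClosure {g} = ⊤) (hh : Subgroup.normalClosure {h} = ⊤)
    (hab : Abelianization.of g = Abelianization.of h) : IsConj g h := by
  have : g = h := (Abelianization.equivOfComm (H := Multiplicative (ZMod n))).injective hab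
  rw [this]

theorem base_card (n : ℕ) [NeZero n] : Nat.card (Multiplicative (ZMod n)) = n := by
  rw [Nat.card_congr (MulEquiv.toEquiv (MulEquiv.refl _)).symm]
  exact Nat.card_zmod n

end Base

theorem iter_good (m : ℕ → ℕ) (k : ℕ) (hpos : ∀ i ≤ k, 0 < m i)
    (hcop : ∀ i ≤ k, ∀ j ≤ k, i ≠ j → Nat.Coprime (m i) (m j)) :
    ∀ i, i ≤ k → (Finite (IterWreath m i) ∧ Group.IsSolvable (IterWreath m i) ∧
      (∀ j, i < j → j ≤ k → (Nat.card (IterWreath m i)).Coprime (m j)) ∧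
      (∃ g : IterWreath m i, Subgroup.normalClosure {g} = ⊤) ∧
      (∀ g h : IterWreath m i, Subgroup.normalClosure {g} = ⊤ →
        Subgroup.normalClosure {h} = ⊤ →
        Abelianization.of g = Abelianization.of h → IsConj g h)) := by
  intro i
  induction i with
  | zero =>
      intro _
      haveI : NeZero (m 0) := ⟨(hpos 0 (Nat.zero_le k)).ne'⟩
      refine ⟨?_, ?_, ?_, ?_, ?_⟩
      · exact inferInstanceAs (Finite (Multiplicative (ZMod (m 0))))
      · exact inferInstanceAs (Group.IsSolvable (Multiplicative (ZMod (m 0))))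
      · intro j h0j hjk
        have hc : Nat.card (IterWreath m 0) = m 0 := base_card (m 0)
        rw [hc]
        exact hcop 0 (Nat.zero_le k) j hjk (by omega)
      · exact base_exists (m 0)
      · exact base_conj (m 0)
  | succ i ih =>
      intro hik
      have hi : i ≤ k := le_of_lt (lt_of_lt_of_le (Nat.lt_succ_self i) hik)
      obtain ⟨hFin, hSolv, hCop, hEx, hConj⟩ := ih hi
      haveI := hFin
      haveI := hSolv
      haveI : NeZero (m (i + 1)) := ⟨(hpos (i + 1) hik).ne'⟩
      have hcard : (Nat.card (IterWreath m i)).Coprime (m (i + 1)) :=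
        hCop (i + 1) (Nat.lt_succ_self i) hik
      refine ⟨?_, ?_, ?_, ?_, ?_⟩
      · exact wr_finite (A := IterWreath m i) (n := m (i + 1))
      · exact wr_solvable (A := IterWreath m i) (n := m (i + 1))
      · intro j hij hjk
        have hc : Nat.card (IterWreath m (i + 1))
            = Nat.card (IterWreath m i) ^ (m (i + 1)) * (m (i + 1)) :=
          wr_card (A := IterWreath m i) (n := m (i + 1))
        rw [hc]
        refine Nat.Coprime.mul ?_ ?_
        · exact Nat.Coprime.pow_left _ (hCop j (by omega) hjk)
        · exact hcop (i + 1) hik j hjk (by omega)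
      · exact wr_exists (A := IterWreath m i) (n := m (i + 1)) hcard hEx
      · exact wr_weight_conj (A := IterWreath m i) (n := m (i + 1)) hConj

theorem isConj_acequiv {G : Type*} [Group G] {a b : G} (h : IsConj a b) : ACEquiv1 a b := by
  obtain ⟨c, hc⟩ := isConj_iff.mp h
  exact Relation.ReflTransGen.single (Or.inr ⟨c⁻¹, by rw [inv_inv]; exact hc.symm⟩)

theorem acequiv_abelian {M : Type*} [CommGroup M] {x y : M} (h : ACEquiv1 x y) :
    y = x ∨ y = x⁻¹ := by
  induction h with
  | refl => exact Or.inl rfl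
  | tail hxb hstep ih =>
      rename_i b c
      have hbc : c = b ∨ c = b⁻¹ := by
        rcases hstep with h1 | ⟨u, h2⟩
        · exact Or.inr h1
        · left
          rw [h2, mul_comm u⁻¹ b, mul_assoc, inv_mul_cancel, mul_one]
      rcases ih with h3 | h3 <;> rcases hbc with h4 | h4 <;> subst h3 <;> subst h4 <;> simp

/-- the iterated regular wreath product `G` of finitely many finite cyclic
groups of pairwise coprime orders is normally generated by a single element; any two weight
elements of `G` with the same image in the abelianization are conjugate; in particular, any
two weight elements of `G` whose abelianized images are AC-equivalent are AC-equivalent. -/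
theorem iterated_wreath_coprime_cyclic_weight_elements
    (k : ℕ) (m : ℕ → ℕ) (hpos : ∀ i ≤ k, 0 < m i)
    (hcop : ∀ i ≤ k, ∀ j ≤ k, i ≠ j → Nat.Coprime (m i) (m j)) :
    (∃ g : IterWreath m k, Subgroup.normalClosure {g} = ⊤) ∧
    (∀ g h : IterWreath m k,
      Subgroup.normalClosure {g} = ⊤ → Subgroup.normalClosure {h} = ⊤ →
      Abelianization.of g = Abelianization.of h → IsConj g h) ∧
    (∀ g h : IterWreath m k,
      Subgroup.normalClosure {g} = ⊤ → Subgroup.normalClosure {h} = ⊤ →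
      ACEquiv1 (Abelianization.of g) (Abelianization.of h) → ACEquiv1 g h) := by
  obtain ⟨hFin, hSolv, hCop, hEx, hConj⟩ := iter_good m k hpos hcop k le_rfl
  refine ⟨hEx, hConj, ?_⟩
  intro g h hg hh hac
  rcases acequiv_abelian hac with h1 | h1
  · exact isConj_acequiv (hConj g h hg hh h1.symm)
  · have h2 : Abelianization.of g⁻¹ = Abelianization.of h := by rw [map_inv, ← h1]
    have hconj := hConj g⁻¹ h (ncl_inv hg) hh h2
    exact Relation.ReflTransGen.head (Or.inl rfl) (isConj_acequiv hconj)
end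

section
/- Let n > 0, let ζ_n be a primitive n-th root of unity, let R = ℤ[ζ_n] be the ring of integers of the n-th cyclotomic field, and let R_C = R/(1−ζ_n)R. Then the natural quotient map R → R_C induces a surjection of unit groups R^× → R_C^×. -/
theorem aux_units_surj {A : Type*} [CommRing A] (n : ℕ) (hn : 0 < n) (z : A)
    (hgen : Algebra.adjoin ℤ ({z} : Set A) = ⊤)
    (h1 : n = 1 → 1 - z = 0)
    (hw : 1 < n → ∃ w : A, (n : A) = w * (z - 1))
    (hu : ∀ c : ℕ, 1 < n → 0 < c → c.Coprime n →
      IsUnit (∑ i ∈ Finset.range c, z ^ i)) :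
    Function.Surjective (Units.map (Ideal.Quotient.mk (Ideal.span {1 - z})).toMonoidHom) := by
  set I : Ideal A := Ideal.span {1 - z} with hIdef
  set π := Ideal.Quotient.mk I with hπ
  have hz1 : π z = 1 := by
    have h0 : π (1 - z) = 0 := Ideal.Quotient.eq_zero_iff_mem.2
      (Ideal.subset_span (Set.mem_singleton _))
    rw [map_sub, map_one, sub_eq_zero] at h0
    exact h0.symm
  set f : ℤ →+* (A ⧸ I) := π.comp (algebraMap ℤ A) with hf
  have hfsurj : Function.Surjective f := by
    intro q
    obtain ⟨x, rfl⟩ := Ideal.Quotient.mk_surjective q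
    have hx : x ∈ Algebra.adjoin ℤ ({z} : Set A) := hgen ▸ Algebra.mem_top
    induction hx using Algebra.adjoin_induction with
    | mem y hy =>
      rw [Set.mem_singleton_iff] at hy
      subst hy
      exact ⟨1, by simpa using hz1.symm⟩
    | algebraMap r => exact ⟨r, rfl⟩
    | add x y _ _ hx hy =>
      obtain ⟨a, ha⟩ := hx; obtain ⟨b, hb⟩ := hy
      exact ⟨a + b, by rw [map_add, ha, hb, map_add]⟩
    | mul x y _ _ hx hy =>
      obtain ⟨a, ha⟩ := hx; obtain ⟨b, hb⟩ := hy
      exact ⟨a * b, by rw [map_mul, ha, hb, map_mul]⟩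
  intro u
  rcases eq_or_lt_of_le (show 1 ≤ n from hn) with hone | h2
  · -- n = 1 : ideal is ⊥, π is injective
    have hz : 1 - z = 0 := h1 hone.symm
    have hπinj : Function.Injective π := by
      intro x y hxy
      have := Ideal.Quotient.eq.mp hxy
      rw [hIdef, hz, Ideal.span_singleton_eq_bot.mpr rfl] at this
      simpa [sub_eq_zero] using this
    obtain ⟨x, hx⟩ := Ideal.Quotient.mk_surjective (u : A ⧸ I)
    obtain ⟨y, hy⟩ := Ideal.Quotient.mk_surjective ((u⁻¹ : (A ⧸ I)ˣ) : A ⧸ I)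
    have hxy : x * y = 1 := hπinj (by rw [map_mul, hx, hy, map_one]; exact u.mul_inv)
    refine ⟨(IsUnit.of_mul_eq_one (a := x) y hxy).unit, ?_⟩
    ext
    simpa using hx
  · -- 1 < n
    haveI : NeZero n := ⟨by omega⟩
    obtain ⟨a, ha⟩ := hfsurj (u : A ⧸ I)
    obtain ⟨b, hb⟩ := hfsurj ((u⁻¹ : (A ⧸ I)ˣ) : A ⧸ I)
    have hab : f (a * b) = 1 := by rw [map_mul, ha, hb]; exact u.mul_inv
    have hfab1 : f (a * b - 1) = 0 := by rw [map_sub, hab, map_one, sub_self]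
    have hfn : f (n : ℤ) = 0 := by
      obtain ⟨w, hwe⟩ := hw h2
      have h' : f (n : ℤ) = π ((n : ℤ) : A) := by
        simp [hf, RingHom.comp_apply]
      rw [h', Int.cast_natCast, hwe, map_mul, map_sub, hz1, map_one, sub_self, mul_zero]
    set g : ℕ := Int.gcd (a * b - 1) n with hg
    have hfg : f (g : ℤ) = 0 := by
      rw [hg, Int.gcd_eq_gcd_ab, map_add, map_mul, map_mul, hfab1, hfn,
        zero_mul, zero_mul, add_zero]
    have hgdvdn : g ∣ n := Int.natCast_dvd_natCast.mp (Int.gcd_dvd_right _ _)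
    have hag : IsUnit ((a : ZMod g)) := by
      have h0 : ((a * b - 1 : ℤ) : ZMod g) = 0 :=
        (ZMod.intCast_zmod_eq_zero_iff_dvd _ _).2 (Int.gcd_dvd_left _ _)
      push_cast at h0
      exact IsUnit.of_mul_eq_one (b : ZMod g) (by linear_combination h0)
    obtain ⟨v, hv⟩ := ZMod.unitsMap_surjective hgdvdn hag.unit
    set c : ℕ := ((v : ZMod n)).val with hc
    have hccop : c.Coprime n := ZMod.val_coe_unit_coprime v
    have hc1 : 0 < c := by
      rcases Nat.eq_zero_or_pos c with h0 | h0
      · exfalso; rw [h0] at hccop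
        rw [Nat.coprime_zero_left] at hccop; omega
      · exact h0
    have hcg : ((c : ℤ) : ZMod g) = ((a : ℤ) : ZMod g) := by
      have h' := congrArg (fun (w : (ZMod g)ˣ) => (w : ZMod g)) hv
      simp only [ZMod.unitsMap_def, Units.coe_map, MonoidHom.coe_coe,
        IsUnit.unit_spec, ZMod.castHom_apply] at h'
      rw [← h']
      push_cast
      rw [hc, ZMod.natCast_val]
    have hdvd_ca : (g : ℤ) ∣ ((c : ℤ) - a) := by
      rw [← ZMod.intCast_zmod_eq_zero_iff_dvd]
      push_cast
      rw [sub_eq_zero]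
      exact_mod_cast hcg
    have hfc : f (c : ℤ) = (u : A ⧸ I) := by
      obtain ⟨t, ht⟩ := hdvd_ca
      have h' : f ((c : ℤ) - a) = 0 := by rw [ht, map_mul, hfg, zero_mul]
      rw [map_sub, sub_eq_zero] at h'
      rw [h', ha]
    have hunit := hu c h2 hc1 hccop
    refine ⟨hunit.unit, ?_⟩
    ext
    have hπs : π (∑ i ∈ Finset.range c, z ^ i) = (u : A ⧸ I) := by
      have hh1 : π (∑ i ∈ Finset.range c, z ^ i) = (c : A ⧸ I) := by
        rw [map_sum]
        simp [hz1]
      have hh2 : f (c : ℤ) = (c : A ⧸ I) := map_natCast f c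
      rw [hh1, ← hh2, hfc]
    simpa using hπs

/-- for `n > 0`, a primitive `n`-th root of unity `ζ`, and
`R = ℤ[ζ]` the ring of cyclotomic integers, the quotient map `R → R_C = R/(1-ζ)R`
induces a surjection of unit groups `Rˣ → R_Cˣ`. -/
theorem units_surjective_cyclotomic (n : ℕ) (hn : 0 < n)
    (ζ : ℂ) (hζ : IsPrimitiveRoot ζ n) :
    Function.Surjective (Units.map (Ideal.Quotient.mk
      (Ideal.span {1 - (⟨ζ, Algebra.self_mem_adjoin_singleton ℤ ζ⟩ :
        Algebra.adjoin ℤ ({ζ} : Set ℂ))})).toMonoidHom) := by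
  set z : Algebra.adjoin ℤ ({ζ} : Set ℂ) :=
    ⟨ζ, Algebra.self_mem_adjoin_singleton ℤ ζ⟩ with hzdef
  apply aux_units_surj n hn z
  · -- generation
    have hpre : ((↑) : Algebra.adjoin ℤ ({ζ} : Set ℂ) → ℂ) ⁻¹' {ζ} = {z} := by
      ext x
      simp only [Set.mem_preimage, Set.mem_singleton_iff]
      constructor
      · intro hx; exact Subtype.ext hx
      · intro hx; rw [hx]
    rw [← hpre]
    exact Algebra.adjoin_adjoin_coe_preimage
  · -- n = 1 → 1 - z = 0
    intro h1
    have hζ1 : ζ = 1 := by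
      have := hζ.pow_eq_one; rwa [h1, pow_one] at this
    apply Subtype.ext
    push_cast [hzdef]
    rw [hζ1]; ring
  · -- n = w * (z - 1)
    intro h2
    obtain ⟨w, hwmem, hwe⟩ := hζ.self_sub_one_pow_dvd_order (k := 1) h2
    refine ⟨⟨w, hwmem⟩, ?_⟩
    apply Subtype.ext
    push_cast [hzdef]
    simpa using hwe
  · -- geometric sums are units
    intro c h2 hc1 hccop
    haveI : NeZero n := ⟨by omega⟩
    set vu : (ZMod n)ˣ := ZMod.unitOfCoprime c hccop with hvu
    set d : ℕ := (((vu⁻¹ : (ZMod n)ˣ) : ZMod n)).val with hd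
    have hcd : ζ ^ (c * d) = ζ := by
      have hmod : (c * d) % n = 1 % n := by
        have hcast : ((c * d : ℕ) : ZMod n) = ((1 : ℕ) : ZMod n) := by
          push_cast
          rw [hd, ZMod.natCast_val, ZMod.cast_id]
          have hcu : ((c : ZMod n)) = (vu : ZMod n) := (ZMod.coe_unitOfCoprime c hccop).symm
          rw [hcu]
          simp [Units.mul_inv]
        exact (ZMod.natCast_eq_natCast_iff _ _ _).mp hcast
      have hpos : 0 < c * d := by
        rcases Nat.eq_zero_or_pos (c * d) with h0 | h0
        · exfalso
          rw [h0, Nat.zero_mod, Nat.one_mod_eq_one.mpr (by omega)] at hmod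
          omega
        · exact h0
      obtain ⟨k, hk⟩ := (Nat.modEq_iff_dvd' hpos).mp hmod.symm
      have hk' : c * d = 1 + n * k := by omega
      rw [hk', pow_add, pow_one, pow_mul, hζ.pow_eq_one, one_pow, mul_one]
    set t : Algebra.adjoin ℤ ({ζ} : Set ℂ) := ∑ i ∈ Finset.range d, (z ^ c) ^ i with htdef
    apply IsUnit.of_mul_eq_one t
    apply Subtype.ext
    have hs' : (((∑ i ∈ Finset.range c, z ^ i : Algebra.adjoin ℤ ({ζ} : Set ℂ)) : ℂ)) =
        ∑ i ∈ Finset.range c, ζ ^ i := by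
      push_cast [hzdef]; rfl
    have ht' : ((t : ℂ)) = ∑ i ∈ Finset.range d, (ζ ^ c) ^ i := by
      rw [htdef]; push_cast [hzdef]; rfl
    have hne : ζ - 1 ≠ 0 := sub_ne_zero.2 (hζ.ne_one h2)
    have key : (∑ i ∈ Finset.range c, ζ ^ i) * (∑ i ∈ Finset.range d, (ζ ^ c) ^ i) = 1 := by
      apply mul_right_cancel₀ hne
      have e1 : (∑ i ∈ Finset.range c, ζ ^ i) * (ζ - 1) = ζ ^ c - 1 := geom_sum_mul ζ c
      have e2 : (∑ i ∈ Finset.range d, (ζ ^ c) ^ i) * (ζ ^ c - 1) = (ζ ^ c) ^ d - 1 :=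
        geom_sum_mul _ d
      have e3 : (ζ ^ c) ^ d = ζ := by rw [← pow_mul]; exact hcd
      calc (∑ i ∈ Finset.range c, ζ ^ i) * (∑ i ∈ Finset.range d, (ζ ^ c) ^ i) * (ζ - 1)
          = (∑ i ∈ Finset.range d, (ζ ^ c) ^ i) * ((∑ i ∈ Finset.range c, ζ ^ i) * (ζ - 1)) := by
            ring
        _ = (∑ i ∈ Finset.range d, (ζ ^ c) ^ i) * (ζ ^ c - 1) := by rw [e1]
        _ = (ζ ^ c) ^ d - 1 := e2
        _ = ζ - 1 := by rw [e3]
        _ = 1 * (ζ - 1) := by ring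
    push_cast
    rw [ht']
    exact key
end

section
/- The abelianization homomorphism of the Baumslag–Solitar group BS(1,11) = ⟨a, b | a·b·a^{-1} = b^{11}⟩ is not coessential: there exists a generating pair of the abelianization BS(1,11)/[BS(1,11),BS(1,11)] (which is isomorphic to ℤ/10ℤ × ℤ) that does not lift to a generating pair of BS(1,11). Equivalently, since BS(1,11) ≅ ℤ[1/11] ⋊ ℤ with the generator of ℤ acting by multiplication by 11, the natural map ℤ[1/11]^× → (ℤ[1/11]/10·ℤ[1/11])^× ≅ (ℤ/10ℤ)^× on unit groups is not surjective. -/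
/-- The defining relation of the Baumslag–Solitar group `BS(1,11) = ⟨a, b | a b a⁻¹ = b¹¹⟩`,
with `a = FreeGroup.of 0` and `b = FreeGroup.of 1`. -/
def bsRels : Set (FreeGroup (Fin 2)) :=
  {FreeGroup.of 0 * FreeGroup.of 1 * (FreeGroup.of 0)⁻¹ * (FreeGroup.of 1 ^ (11 : ℕ))⁻¹}

/-- The Baumslag–Solitar group `BS(1,11)`. -/
abbrev BS₁₁ : Type := PresentedGroup bsRels

noncomputable section BSAux

abbrev Raux : Type := Localization.Away (11 : ℤ)

instance : IsDomain Raux :=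
  IsLocalization.isDomain_localization
    (powers_le_nonZeroDivisors_of_noZeroDivisors (by norm_num : (11:ℤ) ≠ 0))

def uaux : Rauxˣ :=
  (IsLocalization.map_units Raux (⟨11, 1, pow_one 11⟩ : Submonoid.powers (11:ℤ))).unit

lemma uaux_val : (uaux : Raux) = algebraMap ℤ Raux 11 := rfl

def ψaux : Raux →+* ZMod 10 :=
  IsLocalization.Away.lift 11 (g := Int.castRingHom (ZMod 10))
    (IsUnit.of_mul_eq_one 1 (by decide))

lemma ψaux_alg (m : ℤ) : ψaux (algebraMap ℤ Raux m) = (m : ZMod 10) :=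
  IsLocalization.Away.lift_eq _ _ _

lemma ψaux_u_zpow (n : ℤ) : ψaux ((uaux ^ n : Rauxˣ) : Raux) = 1 := by
  have h : Units.map ψaux.toMonoidHom uaux = 1 := by
    ext
    rw [Units.val_one, Units.coe_map]
    show ψaux (uaux : Raux) = 1
    rw [uaux_val, ψaux_alg]
    decide
  calc ψaux ((uaux ^ n : Rauxˣ) : Raux)
      = ((Units.map ψaux.toMonoidHom (uaux ^ n) : (ZMod 10)ˣ) : ZMod 10) := rfl
    _ = 1 := by rw [map_zpow, h, one_zpow, Units.val_one]

lemma psi_of_isUnit (w : Raux) (hw : IsUnit w) : ψaux w = 1 ∨ ψaux w = 9 := by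
  obtain ⟨v, rfl⟩ := hw
  obtain ⟨⟨m, s⟩, hs⟩ := IsLocalization.surj (Submonoid.powers (11:ℤ)) (v : Raux)
  obtain ⟨⟨n, t⟩, ht⟩ := IsLocalization.surj (Submonoid.powers (11:ℤ)) ((v⁻¹ : Rauxˣ) : Raux)
  obtain ⟨a, ha⟩ := s.2
  obtain ⟨b, hb⟩ := t.2
  have hinj : Function.Injective (algebraMap ℤ Raux) :=
    IsLocalization.injective Raux
      (powers_le_nonZeroDivisors_of_noZeroDivisors (by norm_num : (11:ℤ) ≠ 0))
  have hst : ((s : ℤ)) * t = 11 ^ (a + b) := by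
    rw [← ha, ← hb, pow_add]
  have key : m * n = 11 ^ (a + b) := by
    apply hinj
    rw [map_mul, ← hs, ← ht, mul_mul_mul_comm]
    have hv : (v : Raux) * ((v⁻¹ : Rauxˣ) : Raux) = 1 := by
      rw [← Units.val_mul, mul_inv_cancel, Units.val_one]
    rw [hv, one_mul, ← map_mul, hst]
  have hdvd : (m.natAbs : ℕ) ∣ 11 ^ (a + b) := by
    have : m ∣ (11:ℤ) ^ (a+b) := Dvd.intro n key
    have := Int.natAbs_dvd_natAbs.mpr this
    simpa [Int.natAbs_pow] using this
  obtain ⟨c, -, hc⟩ := (Nat.dvd_prime_pow (by norm_num : Nat.Prime 11)).mp hdvd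
  have hψv : ψaux (v : Raux) = (m : ZMod 10) := by
    have h1 : ψaux ((v : Raux) * algebraMap ℤ Raux s) = ψaux (algebraMap ℤ Raux m) := by
      rw [hs]
    rw [map_mul, ψaux_alg, ψaux_alg, ← ha] at h1
    have h2 : (((11:ℤ) ^ a : ℤ) : ZMod 10) = 1 := by
      push_cast
      rw [show (11 : ZMod 10) = 1 by decide, one_pow]
    rwa [h2, mul_one] at h1
  have hm10 : (m : ZMod 10) = 1 ∨ (m : ZMod 10) = 9 := by
    have h11c : ((11 ^ c : ℕ) : ZMod 10) = 1 := by
      push_cast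
      rw [show (11 : ZMod 10) = 1 by decide, one_pow]
    rcases Int.natAbs_eq m with h | h
    · left; rw [h, hc]; exact_mod_cast h11c
    · right; rw [h, hc]
      push_cast
      rw [show (11 : ZMod 10) = 1 by decide, one_pow]
      decide
  rw [hψv]; exact hm10


def eaux (n : ℤ) : Raux := ((uaux ^ n : Rauxˣ) : Raux)

lemma eaux_add (n m : ℤ) : eaux (n + m) = eaux n * eaux m := by
  rw [eaux, eaux, eaux, zpow_add, Units.val_mul]

lemma eaux_zero : eaux 0 = 1 := by rw [eaux, zpow_zero, Units.val_one]

lemma eaux_neg_mul (n : ℤ) : eaux (-n) * eaux n = 1 := by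
  rw [← eaux_add, neg_add_cancel, eaux_zero]

/-- The group `ℤ[1/11] ⋊ ℤ`. -/
structure GBS where
  fst : Raux
  snd : ℤ

instance : Group GBS where
  mul p q := ⟨p.fst + eaux p.snd * q.fst, p.snd + q.snd⟩
  one := ⟨0, 0⟩
  inv p := ⟨-(eaux (-p.snd) * p.fst), -p.snd⟩
  mul_assoc p q r := by
    show GBS.mk _ _ = GBS.mk _ _
    congr 1
    · show p.fst + eaux p.snd * q.fst + eaux (p.snd + q.snd) * r.fst
        = p.fst + eaux p.snd * (q.fst + eaux q.snd * r.fst)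
      rw [eaux_add]; ring
    · show p.snd + q.snd + r.snd = p.snd + (q.snd + r.snd); ring
  one_mul p := by
    show GBS.mk (0 + eaux 0 * p.fst) (0 + p.snd) = p
    rw [eaux_zero]; cases p; simp
  mul_one p := by
    show GBS.mk (p.fst + eaux p.snd * 0) (p.snd + 0) = p
    cases p; simp
  inv_mul_cancel p := by
    show GBS.mk (-(eaux (-p.snd) * p.fst) + eaux (-p.snd) * p.fst) (-p.snd + p.snd)
      = GBS.mk 0 0
    simp

lemma GBS.mul_def (p q : GBS) :
    p * q = ⟨p.fst + eaux p.snd * q.fst, p.snd + q.snd⟩ := rfl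

lemma GBS.one_def : (1 : GBS) = ⟨0, 0⟩ := rfl

lemma GBS.inv_def (p : GBS) : p⁻¹ = ⟨-(eaux (-p.snd) * p.fst), -p.snd⟩ := rfl

def Abs : GBS := ⟨0, 1⟩
def Bbs : GBS := ⟨1, 0⟩

lemma Bbs_pow (k : ℕ) : Bbs ^ k = ⟨(k : Raux), 0⟩ := by
  induction k with
  | zero => simp [GBS.one_def]
  | succ k ih =>
      rw [pow_succ, ih, GBS.mul_def]
      show GBS.mk ((k : Raux) + eaux 0 * Bbs.fst) (0 + Bbs.snd) = _
      rw [eaux_zero, show Bbs.fst = 1 from rfl, show Bbs.snd = 0 from rfl]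
      congr 1 <;> push_cast <;> ring


def πbs : GBS →* Multiplicative ℤ where
  toFun p := Multiplicative.ofAdd p.snd
  map_one' := rfl
  map_mul' p q := rfl

def Ψbs : GBS →* Multiplicative (ZMod 10) where
  toFun p := Multiplicative.ofAdd (ψaux p.fst)
  map_one' := by
    show Multiplicative.ofAdd (ψaux (0:Raux)) = 1
    rw [map_zero]; rfl
  map_mul' p q := by
    show Multiplicative.ofAdd (ψaux (p.fst + eaux p.snd * q.fst)) = _
    rw [map_add, map_mul,
      show eaux p.snd = ((uaux ^ p.snd : Rauxˣ) : Raux) from rfl, ψaux_u_zpow, one_mul]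
    rfl

def fbs : Fin 2 → GBS := ![Abs, Bbs]

lemma rel_holds : Abs * Bbs * Abs⁻¹ * (Bbs ^ (11:ℕ))⁻¹ = 1 := by
  rw [Bbs_pow]
  rw [show Abs * Bbs = GBS.mk (0 + eaux 1 * 1) (1 + 0) from rfl]
  rw [show Abs⁻¹ = GBS.mk (-(eaux (-1) * 0)) (-1) from rfl]
  rw [GBS.mul_def]
  rw [GBS.inv_def]
  rw [GBS.mul_def, GBS.one_def]
  have e1 : eaux 1 = algebraMap ℤ Raux 11 := by
    rw [eaux, zpow_one]; rfl
  congr 1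
  · show 0 + eaux 1 * 1 + eaux (1+0) * -(eaux (-(1+0)) * 0)
        + eaux (1 + 0 + -(1+0)) * -(eaux (-(0:ℤ)) * ((11:ℕ) : Raux)) = 0
    rw [e1]
    norm_num [eaux_zero]

def φbs : BS₁₁ →* GBS :=
  PresentedGroup.toGroup (f := fbs) (by
    intro r hr
    rw [Set.mem_singleton_iff.mp hr]
    simp only [map_mul, map_inv, map_pow, FreeGroup.lift_apply_of]
    show fbs 0 * fbs 1 * (fbs 0)⁻¹ * (fbs 1 ^ (11:ℕ))⁻¹ = 1
    rw [show fbs 0 = Abs from rfl, show fbs 1 = Bbs from rfl]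
    exact rel_holds)

lemma φbs_a : φbs (PresentedGroup.of 0) = Abs := PresentedGroup.toGroup.of _
lemma φbs_b : φbs (PresentedGroup.of 1) = Bbs := PresentedGroup.toGroup.of _


lemma bs_rel : (PresentedGroup.of 0 : BS₁₁) * PresentedGroup.of 1 * (PresentedGroup.of 0)⁻¹
    * (((PresentedGroup.of 1 : BS₁₁)) ^ (11:ℕ))⁻¹ = 1 := by
  have h : (PresentedGroup.mk bsRels) (FreeGroup.of 0 * FreeGroup.of 1 * (FreeGroup.of 0)⁻¹
      * (FreeGroup.of 1 ^ (11:ℕ))⁻¹) = 1 := by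
    apply (QuotientGroup.eq_one_iff _).mpr
    exact Subgroup.subset_normalClosure (Set.mem_singleton _)
  simp only [map_mul, map_inv, map_pow] at h
  exact h

abbrev abar : Abelianization BS₁₁ := Abelianization.of (PresentedGroup.of 0)
abbrev bbar : Abelianization BS₁₁ := Abelianization.of (PresentedGroup.of 1)

lemma bbar_pow_ten : bbar ^ (10:ℕ) = 1 := by
  have h := congrArg Abelianization.of bs_rel
  simp only [map_mul, map_inv, map_pow, map_one] at h
  have h2 : abar * bbar * abar⁻¹ = bbar ^ (11:ℕ) := mul_inv_eq_one.mp h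
  rw [mul_comm abar bbar, mul_assoc, mul_inv_cancel, mul_one] at h2
  have h3 : bbar ^ (10:ℕ) = bbar ^ (11:ℕ) * bbar⁻¹ := by group
  rw [h3, ← h2, mul_inv_cancel]

def qbs : Fin 2 → Abelianization BS₁₁ :=
  ![abar, Abelianization.of ((PresentedGroup.of 1 : BS₁₁) ^ (3:ℕ))]

lemma qbs_zero : qbs 0 = abar := rfl

lemma qbs_one : qbs 1 = bbar ^ (3:ℕ) := by
  show Abelianization.of _ = _
  rw [map_pow]

lemma ab_of_surj : Function.Surjective (Abelianization.of (G := BS₁₁)) :=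
  fun x => QuotientGroup.induction_on x fun z => ⟨z, rfl⟩

lemma closure_qbs : Subgroup.closure (Set.range qbs) = ⊤ := by
  have hmap : Subgroup.closure
      (Set.range (fun i : Fin 2 => Abelianization.of (PresentedGroup.of i : BS₁₁))) = ⊤ := by
    have h1 : (fun i : Fin 2 => Abelianization.of (PresentedGroup.of i : BS₁₁))
        = (Abelianization.of : BS₁₁ →* Abelianization BS₁₁) ∘ PresentedGroup.of := rfl
    rw [h1, Set.range_comp, ← MonoidHom.map_closure, PresentedGroup.closure_range_of,
      ← MonoidHom.range_eq_map]
    exact MonoidHom.range_eq_top.mpr ab_of_surj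
  rw [eq_top_iff, ← hmap]
  refine (Subgroup.closure_le _).mpr ?_
  rintro x ⟨i, rfl⟩
  fin_cases i
  · exact Subgroup.subset_closure ⟨0, rfl⟩
  · have hb : bbar = (qbs 1) ^ (7:ℕ) := by
      rw [qbs_one, ← pow_mul]
      have h21 : bbar ^ (3*7:ℕ) = (bbar ^ (10:ℕ)) ^ (2:ℕ) * bbar := by group
      rw [h21, bbar_pow_ten, one_pow, one_mul]
    show bbar ∈ (Subgroup.closure (Set.range qbs) : Set (Abelianization BS₁₁))
    rw [hb]
    have hq : qbs 1 ∈ Subgroup.closure (Set.range qbs) :=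
      Subgroup.subset_closure ⟨1, rfl⟩
    exact pow_mem hq 7

def Lsub (x y : Raux) : Subgroup GBS where
  carrier := {p | (10:Raux) * p.fst - (eaux p.snd - 1) * y ∈ Ideal.span {(10:Raux) * x}}
  one_mem' := by
    show (10:Raux) * (0:Raux) - (eaux 0 - 1) * y ∈ Ideal.span {(10:Raux) * x}
    rw [eaux_zero]
    simp
  mul_mem' := by
    intro p q hp hq
    show (10:Raux) * (p.fst + eaux p.snd * q.fst) - (eaux (p.snd + q.snd) - 1) * y
        ∈ Ideal.span {(10:Raux) * x}
    have heq : (10:Raux) * (p.fst + eaux p.snd * q.fst) - (eaux (p.snd + q.snd) - 1) * y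
        = ((10:Raux) * p.fst - (eaux p.snd - 1) * y)
          + eaux p.snd * ((10:Raux) * q.fst - (eaux q.snd - 1) * y) := by
      rw [eaux_add]; ring
    rw [heq]
    exact add_mem hp (Ideal.mul_mem_left _ _ hq)
  inv_mem' := by
    intro p hp
    show (10:Raux) * (-(eaux (-p.snd) * p.fst)) - (eaux (-p.snd) - 1) * y
        ∈ Ideal.span {(10:Raux) * x}
    have h1 := eaux_neg_mul p.snd
    have heq : (10:Raux) * (-(eaux (-p.snd) * p.fst)) - (eaux (-p.snd) - 1) * y
        = -eaux (-p.snd) * ((10:Raux) * p.fst - (eaux p.snd - 1) * y) := by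
      linear_combination (-y) * h1
    rw [heq]
    exact Ideal.mul_mem_left _ _ hp

lemma key_constraint {C : Type} [CommGroup C] (f : BS₁₁ →* C) (g : Fin 2 → BS₁₁)
    (hg : ∀ i, Abelianization.of (g i) = qbs i) (i : Fin 2) (z : BS₁₁)
    (hz : Abelianization.of z = qbs i) : f (g i) = f z := by
  have h1 := congrArg (Abelianization.lift f) ((hg i).trans hz.symm)
  simpa only [Abelianization.lift_apply_of] using h1

lemma alg_ten : algebraMap ℤ Raux 10 = (10:Raux) := by
  rw [map_ofNat]

lemma ten_ne_zero : (10:Raux) ≠ 0 := by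
  intro h
  have hinj : Function.Injective (algebraMap ℤ Raux) :=
    IsLocalization.injective Raux
      (powers_le_nonZeroDivisors_of_noZeroDivisors (by norm_num : (11:ℤ) ≠ 0))
  have : (10:ℤ) = 0 := hinj (by rw [alg_ten, h, map_zero])
  norm_num at this

lemma eaux_one_sub : eaux 1 - 1 = (10:Raux) := by
  rw [eaux, zpow_one]
  rw [show ((uaux : Rauxˣ) : Raux) = algebraMap ℤ Raux 11 from rfl, map_ofNat]
  norm_num

end BSAux

/-- the abelianization homomorphism of `BS(1,11)` is not coessential: some
generating pair of the abelianization does not lift to a generating pair of `BS(1,11)`.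
Equivalently, the map `ℤ[1/11]ˣ → (ℤ[1/11]/10·ℤ[1/11])ˣ` on unit groups is not
surjective. -/
theorem bs_one_eleven_abelianization_not_coessential :
    (∃ q : Fin 2 → Abelianization BS₁₁, Subgroup.closure (Set.range q) = ⊤ ∧
      ∀ g : Fin 2 → BS₁₁, (∀ i, Abelianization.of (g i) = q i) →
        Subgroup.closure (Set.range g) ≠ ⊤) ∧
    ¬ Function.Surjective (Units.map (Ideal.Quotient.mk
      (Ideal.span {(10 : Localization.Away (11 : ℤ))})).toMonoidHom) := by
  constructor
  · refine ⟨qbs, closure_qbs, ?_⟩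
    intro g hg htop
    have hq0 : Abelianization.of (PresentedGroup.of 0 : BS₁₁) = qbs 0 := rfl
    have hq1 : Abelianization.of ((PresentedGroup.of 1 : BS₁₁) ^ (3:ℕ)) = qbs 1 := rfl
    -- second coordinates
    have hY2 : (φbs (g 0)).snd = 1 := by
      have h := key_constraint (πbs.comp φbs) g hg 0 _ hq0
      simp only [MonoidHom.comp_apply, φbs_a] at h
      exact congrArg Multiplicative.toAdd h
    have hX2 : (φbs (g 1)).snd = 0 := by
      have h := key_constraint (πbs.comp φbs) g hg 1 _ hq1
      simp only [MonoidHom.comp_apply] at h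
      rw [map_pow, φbs_b, Bbs_pow] at h
      exact congrArg Multiplicative.toAdd h
    have hXψ : ψaux (φbs (g 1)).fst = 3 := by
      have h := key_constraint (Ψbs.comp φbs) g hg 1 _ hq1
      simp only [MonoidHom.comp_apply] at h
      rw [map_pow, φbs_b, Bbs_pow] at h
      have h2 := congrArg Multiplicative.toAdd h
      simpa [Ψbs, Nat.cast_ofNat, map_ofNat] using h2
    set X := (φbs (g 1)).fst with hXdef
    set Y := (φbs (g 0)).fst with hYdef
    have hmem : ∀ i, g i ∈ (Lsub X Y).comap φbs := by
      intro i
      fin_cases i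
      · rw [Subgroup.mem_comap]
        show (10:Raux) * Y - (eaux (φbs (g 0)).snd - 1) * Y ∈ Ideal.span {(10:Raux) * X}
        rw [hY2, eaux_one_sub, sub_self]
        exact zero_mem _
      · rw [Subgroup.mem_comap]
        show (10:Raux) * X - (eaux (φbs (g 1)).snd - 1) * Y ∈ Ideal.span {(10:Raux) * X}
        rw [hX2, eaux_zero, sub_self, zero_mul, sub_zero]
        exact Ideal.subset_span rfl
    have hs : Subgroup.closure (Set.range g) ≤ (Lsub X Y).comap φbs :=
      (Subgroup.closure_le _).mpr (by rintro x ⟨i, rfl⟩; exact hmem i)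
    rw [htop] at hs
    have hB : Bbs ∈ Lsub X Y := by
      have h := hs (Subgroup.mem_top (PresentedGroup.of 1))
      rwa [Subgroup.mem_comap, φbs_b] at h
    have hB' : (10:Raux) * (1:Raux) - (eaux 0 - 1) * Y ∈ Ideal.span {(10:Raux) * X} := hB
    rw [eaux_zero, show (10:Raux) * (1:Raux) - ((1:Raux) - 1) * Y = 10 by ring] at hB'
    obtain ⟨r, hr⟩ := Ideal.mem_span_singleton'.mp hB'
    have hx : X * r = 1 := by
      apply mul_left_cancel₀ ten_ne_zero
      rw [mul_one]
      linear_combination hr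
    have hor := psi_of_isUnit X (IsUnit.of_mul_eq_one r hx)
    rw [hXψ] at hor
    rcases hor with h | h
    · exact absurd h (by decide)
    · exact absurd h (by decide)
  · intro hsurj
    have h37 : (Ideal.Quotient.mk (Ideal.span {(10:Raux)})) 3
        * (Ideal.Quotient.mk (Ideal.span {(10:Raux)})) 7 = 1 := by
      rw [← map_mul, ← map_one (Ideal.Quotient.mk (Ideal.span {(10:Raux)}))]
      apply Ideal.Quotient.eq.mpr
      rw [show (3:Raux) * 7 - 1 = 10 * 2 by ring]
      exact Ideal.mul_mem_right _ _ (Ideal.subset_span rfl)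
    set v : (Raux ⧸ Ideal.span {(10:Raux)})ˣ :=
      ⟨Ideal.Quotient.mk _ 3, Ideal.Quotient.mk _ 7, h37, by rw [← map_mul, mul_comm, map_mul]; exact h37⟩ with hv
    obtain ⟨w, hw⟩ := hsurj v
    have hweq : Ideal.Quotient.mk (Ideal.span {(10:Raux)}) (w : Raux)
        = Ideal.Quotient.mk (Ideal.span {(10:Raux)}) 3 := congrArg Units.val hw
    have hker : ∀ a ∈ Ideal.span {(10:Raux)}, ψaux a = 0 := by
      intro a ha
      obtain ⟨c, rfl⟩ := Ideal.mem_span_singleton'.mp ha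
      rw [map_mul, map_ofNat]
      rw [show ((10:ZMod 10)) = 0 by decide, mul_zero]
    have hψw := congrArg (Ideal.Quotient.lift _ ψaux hker) hweq
    rw [Ideal.Quotient.lift_mk, Ideal.Quotient.lift_mk, map_ofNat] at hψw
    have hor := psi_of_isUnit (w : Raux) w.isUnit
    rw [hψw] at hor
    rcases hor with h | h
    · exact absurd h (by decide)
    · exact absurd h (by decide)
end
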